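/- arXiv:2312.02768 — 8 statements merged into one kernel-verified Lean document; each statement's English description precedes it below -/
import Mathlib

section
/- Let L be an even lattice of signature (n,2) with n > 2, let U ⊆ L ⊗ ℚ be a 2-dimensional isotropic subspace, and set L^H = (L' ∩ U) + L. Then there exist a basis (e₁, e₂) of L^H ∩ U and isotropic vectors e₁', e₂' ∈ L^H with (e_i, e_j') = δ_{ij} and (e₁', e₂') = 0, such that ⟨e₁, e₁'⟩ and ⟨e₂, e₂'⟩ are mutually orthogonal unimodular hyperbolic planes and L^H = M ⊕ ⟨e₁, e₁'⟩ ⊕ ⟨e₂, e₂'⟩ is an orthogonal direct sum for a positive-definite even lattice M; moreover M is isometric to the quotient lattice K = (L^H ∩ U^⊥)/(L^H ∩ U). -/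
/-!
Statement 2: Let `L` be an even lattice of signature `(n,2)`, `n > 2`, `U ⊆ L ⊗ ℚ`
a 2-dimensional isotropic subspace and `L^H = (L' ∩ U) + L`.  Then there exist a basis
`(e₁, e₂)` of `L^H ∩ U` and isotropic vectors `e₁', e₂' ∈ L^H` with `(eᵢ, eⱼ') = δᵢⱼ`
and `(e₁', e₂') = 0` such that `⟨e₁,e₁'⟩` and `⟨e₂,e₂'⟩` are mutually orthogonal
unimodular hyperbolic planes and `L^H = M ⊕ ⟨e₁,e₁'⟩ ⊕ ⟨e₂,e₂'⟩` for a
positive-definite even lattice `M`; moreover `M` is isometric to the quotient lattice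
`K = (L^H ∩ U^⊥)/(L^H ∩ U)` (equivalently, `M` is a complement of `L^H ∩ U` in
`L^H ∩ U^⊥`, the isometry being induced by the quotient map).
-/

namespace RMV

variable {V : Type} [AddCommGroup V] [Module ℚ V]

/-- The dual lattice of `L` with respect to the bilinear form `B`. -/
def dual (B : V →ₗ[ℚ] V →ₗ[ℚ] ℚ) (L : Submodule ℤ V) : Submodule ℤ V where
  carrier := {x : V | ∀ y ∈ L, ∃ k : ℤ, B x y = (k : ℚ)}
  add_mem' := by
    intro a b ha hb y hy
    obtain ⟨k, hk⟩ := ha y hy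
    obtain ⟨l, hl⟩ := hb y hy
    exact ⟨k + l, by rw [map_add, LinearMap.add_apply, hk, hl]; push_cast; ring⟩
  zero_mem' := by
    intro y hy
    exact ⟨0, by rw [map_zero, LinearMap.zero_apply]; norm_num⟩
  smul_mem' := by
    intro c x hx y hy
    obtain ⟨k, hk⟩ := hx y hy
    refine ⟨c * k, ?_⟩
    have hcast : (c : ℤ) • x = ((c : ℚ)) • x := (Int.cast_smul_eq_zsmul ℚ c x).symm
    rw [hcast, map_smul, LinearMap.smul_apply, hk, smul_eq_mul]
    push_cast; ring

/-- `L` is an even lattice (in the ambient rational quadratic space `(V, B)`). -/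
structure IsEvenLattice (B : V →ₗ[ℚ] V →ₗ[ℚ] ℚ) (L : Submodule ℤ V) : Prop where
  symm : ∀ x y : V, B x y = B y x
  nondeg : ∀ x : V, (∀ y : V, B x y = 0) → x = 0
  fg : L.FG
  spans : Submodule.span ℚ (L : Set V) = ⊤
  integral : ∀ x ∈ L, ∀ y ∈ L, ∃ k : ℤ, B x y = (k : ℚ)
  even : ∀ x ∈ L, ∃ k : ℤ, B x x = 2 * (k : ℚ)

/-- `B` has signature `(p, q)`. -/
def HasSignature (B : V →ₗ[ℚ] V →ₗ[ℚ] ℚ) (p q : ℕ) : Prop :=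
  ∃ b : Module.Basis (Fin (p + q)) ℚ V,
    (∀ i j, i ≠ j → B (b i) (b j) = 0) ∧
    (Finset.univ.filter (fun i => 0 < B (b i) (b i))).card = p ∧
    (Finset.univ.filter (fun i => B (b i) (b i) < 0)).card = q

/-- Orthogonal complement of a subspace with respect to `B`. -/
def perp (B : V →ₗ[ℚ] V →ₗ[ℚ] ℚ) (W : Submodule ℚ V) : Submodule ℚ V where
  carrier := {x : V | ∀ w ∈ W, B x w = 0}
  add_mem' := by
    intro a b ha hb w hw
    rw [map_add, LinearMap.add_apply, ha w hw, hb w hw, add_zero]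
  zero_mem' := by
    intro w hw
    rw [map_zero, LinearMap.zero_apply]
  smul_mem' := by
    intro c x hx w hw
    rw [map_smul, LinearMap.smul_apply, hx w hw, smul_zero]

/-- The overlattice `L^H = (L' ∩ U) + L`. -/
def LH (B : V →ₗ[ℚ] V →ₗ[ℚ] ℚ) (L : Submodule ℤ V) (U : Submodule ℚ V) : Submodule ℤ V :=
  (dual B L ⊓ Submodule.restrictScalars ℤ U) ⊔ L

section Aux

variable {V : Type} [AddCommGroup V] [Module ℚ V]

/-- integrality propagates to ℤ-spans -/
lemma pair_int_on_span (B : V →ₗ[ℚ] V →ₗ[ℚ] ℚ) (x : V) (s : Set V)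
    (h : ∀ y ∈ s, ∃ k : ℤ, B x y = (k : ℚ)) :
    ∀ y ∈ Submodule.span ℤ s, ∃ k : ℤ, B x y = (k : ℚ) := by
  intro y hy
  induction hy using Submodule.span_induction with
  | mem y hys => exact h y hys
  | zero => exact ⟨0, by simp⟩
  | add a b _ _ ha hb =>
    obtain ⟨k, hk⟩ := ha; obtain ⟨l, hl⟩ := hb
    exact ⟨k + l, by rw [map_add, hk, hl]; push_cast; ring⟩
  | smul c a _ ha =>
    obtain ⟨k, hk⟩ := ha
    refine ⟨c * k, ?_⟩
    have : (c : ℤ) • a = ((c : ℚ)) • a := (Int.cast_smul_eq_zsmul ℚ c a).symm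
    rw [this, map_smul, smul_eq_mul, hk]; push_cast; ring

/-- in a vector space, every vector has a nonzero integer multiple in a spanning lattice -/
lemma exists_int_smul_mem (L : Submodule ℤ V) (hsp : Submodule.span ℚ (L : Set V) = ⊤)
    (v : V) : ∃ d : ℤ, d ≠ 0 ∧ d • v ∈ L := by
  have hv : v ∈ Submodule.span ℚ (L : Set V) := by rw [hsp]; trivial
  induction hv using Submodule.span_induction with
  | mem y hy => exact ⟨1, one_ne_zero, by simpa using hy⟩
  | zero => exact ⟨1, one_ne_zero, by simp⟩
  | add a b _ _ ha hb =>
    obtain ⟨d, hd, hda⟩ := ha; obtain ⟨e, he, heb⟩ := hb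
    refine ⟨d * e, mul_ne_zero hd he, ?_⟩
    have : (d * e) • (a + b) = e • (d • a) + d • (e • b) := by
      rw [smul_add]; rw [smul_smul, smul_smul]; ring_nf
    rw [this]
    exact L.add_mem (L.smul_mem e hda) (L.smul_mem d heb)
  | smul c a _ ha =>
    obtain ⟨d, hd, hda⟩ := ha
    refine ⟨c.den * d, mul_ne_zero (by exact_mod_cast c.den_ne_zero) hd, ?_⟩
    have h1 : ((c.den : ℤ) * d) • (c • a) = c.num • (d • a) := by
      rw [← Int.cast_smul_eq_zsmul ℚ ((c.den : ℤ) * d) (c • a),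
        ← Int.cast_smul_eq_zsmul ℚ c.num (d • a),
        ← Int.cast_smul_eq_zsmul ℚ d a, smul_smul, smul_smul]
      congr 1
      push_cast
      rw [mul_comm (c.den : ℚ) (d : ℚ), mul_assoc, mul_comm (c.den : ℚ) c,
        Rat.mul_den_eq_num]
      ring
    rw [h1]
    exact L.smul_mem _ hda

end Aux
section Aux2

variable {V : Type} [AddCommGroup V] [Module ℚ V]

instance : NoZeroSMulDivisors ℤ V :=
  ⟨fun {c} {x} h => by
    rcases eq_or_ne c 0 with rfl | hc
    · exact Or.inl rfl
    · refine Or.inr ?_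
      rw [← Int.cast_smul_eq_zsmul ℚ c x] at h
      have : (c : ℚ) ≠ 0 := Int.cast_ne_zero.mpr hc
      exact (smul_eq_zero.mp h).resolve_left this⟩

/-- any f.g. lattice in a ℚ-vector space has a ℤ-basis consisting of
ℚ-linearly-independent vectors -/
lemma exists_latt_basis (L : Submodule ℤ V) (hfg : L.FG) :
    ∃ (k : ℕ) (b : Fin k → V), (∀ i, b i ∈ L) ∧
      Submodule.span ℤ (Set.range b) = L ∧ LinearIndependent ℚ b := by
  haveI : Module.Finite ℤ ↥L := Module.Finite.iff_fg.mpr hfg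
  haveI : Module.Free ℤ ↥L := Module.free_of_finite_type_torsion_free'
  let ι := Module.Free.ChooseBasisIndex ℤ ↥L
  let bL : Module.Basis ι ℤ ↥L := Module.Free.chooseBasis ℤ ↥L
  haveI : Fintype ι := Module.Free.ChooseBasisIndex.fintype ℤ ↥L
  let eqv : Fin (Fintype.card ι) ≃ ι := (Fintype.equivFin ι).symm
  refine ⟨Fintype.card ι, fun i => ((bL (eqv i) : ↥L) : V), fun i => (bL (eqv i)).2, ?_, ?_⟩
  · have h1 : Set.range (fun i => ((bL (eqv i) : ↥L) : V)) = L.subtype '' Set.range ⇑bL := by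
      ext x
      constructor
      · rintro ⟨i, rfl⟩; exact ⟨bL (eqv i), ⟨eqv i, rfl⟩, rfl⟩
      · rintro ⟨y, ⟨j, rfl⟩, rfl⟩; exact ⟨eqv.symm j, by simp⟩
    rw [h1, ← Submodule.map_span, bL.span_eq, Submodule.map_top, Submodule.range_subtype]
  · have hli : LinearIndependent ℤ (fun i => ((bL (eqv i) : ↥L) : V)) := by
      have := (bL.reindex eqv.symm).linearIndependent
      have h2 := this.map' L.subtype (Submodule.ker_subtype L)
      convert h2 using 1
      funext i
      simp [Module.Basis.reindex]
      rfl
    exact LinearIndependent.iff_fractionRing ℤ ℚ |>.mp hli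

end Aux2
set_option maxHeartbeats 2000000 in
theorem overlattice_splits_two_hyperbolic_planes
    (V : Type) [AddCommGroup V] [Module ℚ V]
    (B : V →ₗ[ℚ] V →ₗ[ℚ] ℚ) (L : Submodule ℤ V)
    (n : ℕ) (hn : 2 < n)
    (hL : IsEvenLattice B L) (hsig : HasSignature B n 2)
    (U : Submodule ℚ V) (hU2 : Module.finrank ℚ U = 2)
    (hUiso : ∀ x ∈ U, ∀ y ∈ U, B x y = 0) :
    ∃ (e₁ e₂ e₁' e₂' : V) (M : Submodule ℤ V),
      -- `(e₁, e₂)` is a basis of `L^H ∩ U`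
      e₁ ∈ U ∧ e₂ ∈ U ∧
      LH B L U ⊓ Submodule.restrictScalars ℤ U = Submodule.span ℤ {e₁, e₂} ∧
      LinearIndependent ℚ ![e₁, e₂] ∧
      -- `e₁', e₂'` are isotropic elements of `L^H`
      e₁' ∈ LH B L U ∧ e₂' ∈ LH B L U ∧
      B e₁' e₁' = 0 ∧ B e₂' e₂' = 0 ∧
      -- Gram conditions: two mutually orthogonal unimodular hyperbolic planes
      B e₁ e₁' = 1 ∧ B e₂ e₂' = 1 ∧
      B e₁ e₂' = 0 ∧ B e₂ e₁' = 0 ∧ B e₁' e₂' = 0 ∧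
      -- `M` is orthogonal to both hyperbolic planes
      (∀ x ∈ M, B x e₁ = 0 ∧ B x e₂ = 0 ∧ B x e₁' = 0 ∧ B x e₂' = 0) ∧
      -- orthogonal direct sum decomposition `L^H = M ⊕ ⟨e₁,e₁'⟩ ⊕ ⟨e₂,e₂'⟩`
      LH B L U = M ⊔ Submodule.span ℤ {e₁, e₁'} ⊔ Submodule.span ℤ {e₂, e₂'} ∧
      M ⊓ (Submodule.span ℤ {e₁, e₁'} ⊔ Submodule.span ℤ {e₂, e₂'}) = ⊥ ∧
      Submodule.span ℤ {e₁, e₁'} ⊓ Submodule.span ℤ {e₂, e₂'} = ⊥ ∧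
      -- `M` is a positive-definite even lattice
      (∀ x ∈ M, x ≠ 0 → 0 < B x x) ∧
      (∀ x ∈ M, ∀ y ∈ M, ∃ k : ℤ, B x y = (k : ℚ)) ∧
      (∀ x ∈ M, ∃ k : ℤ, B x x = 2 * (k : ℚ)) ∧
      -- `M` is isometric to `K = (L^H ∩ U^⊥)/(L^H ∩ U)`: it is a complement of
      -- `L^H ∩ U` in `L^H ∩ U^⊥`, the isometry being the quotient map
      LH B L U ⊓ Submodule.restrictScalars ℤ (perp B U)
        = M ⊔ (LH B L U ⊓ Submodule.restrictScalars ℤ U) ∧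
      M ⊓ Submodule.restrictScalars ℤ U = ⊥ := by
    -- === Step 0: basics ===
  classical
  have hsymm := hL.symm
  obtain ⟨bsig, hsorth, hspos, hsneg⟩ := hsig
  haveI : FiniteDimensional ℚ V := Module.Finite.of_basis bsig
  have hdim : Module.finrank ℚ V = n + 2 := by
    rw [Module.finrank_eq_card_basis bsig, Fintype.card_fin]
  have hBinj : Function.Injective ⇑B := by
    intro x y hxy
    have : ∀ z, B (x - y) z = 0 := by
      intro z; rw [map_sub, LinearMap.sub_apply, hxy, sub_self]
    have h0 := hL.nondeg _ this
    exact sub_eq_zero.mp h0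
  have hBsurj : Function.Surjective ⇑B :=
    (LinearMap.injective_iff_surjective_of_finrank_eq_finrank
      (Subspace.dual_finrank_eq).symm).mp hBinj
  let Bequiv : V ≃ₗ[ℚ] Module.Dual ℚ V := LinearEquiv.ofBijective B ⟨hBinj, hBsurj⟩
  have hBequiv : ∀ x, Bequiv x = B x := fun _ => rfl
  -- === Step 1: lattice basis of L ===
  obtain ⟨m, bb, hbbL, hbbspan, hbbli⟩ := exists_latt_basis L hL.fg
  have hbbtop : Submodule.span ℚ (Set.range bb) = ⊤ := by
    rw [← Submodule.span_span_of_tower (R := ℤ) (S := ℚ), hbbspan, hL.spans]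
  let bV : Module.Basis (Fin m) ℚ V := Module.Basis.mk hbbli (le_of_eq hbbtop.symm)
  have hbV : ∀ i, bV i = bb i := fun i => Module.Basis.mk_apply _ _ i
  -- === Step 2: dual basis ===
  let bsB : Module.Basis (Fin m) ℚ V := bV.dualBasis.map Bequiv.symm
  have hbs : ∀ i y, B (bsB i) y = bV.coord i y := by
    intro i y
    have h1 : bsB i = Bequiv.symm (bV.coord i) := by
      simp [bsB, Module.Basis.map_apply]
    rw [h1]
    have h2 : B (Bequiv.symm (bV.coord i)) = bV.coord i := Bequiv.apply_symm_apply _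
    rw [h2]
  have hbsb : ∀ i j, B (bsB i) (bb j) = if i = j then 1 else 0 := by
    intro i j
    rw [hbs, ← hbV j, Module.Basis.coord_apply, Module.Basis.repr_self]
    by_cases h : i = j <;> simp [h, Finsupp.single_apply, eq_comm]
  have hrepr1 : ∀ x : V, x = ∑ i, (B x (bb i)) • bsB i := by
    intro x
    apply hBinj
    apply bV.ext
    intro j
    rw [map_sum, LinearMap.sum_apply]
    simp only [map_smul, LinearMap.smul_apply, smul_eq_mul, hbV, hbsb, mul_ite,
      mul_one, mul_zero]
    rw [Finset.sum_ite_eq' Finset.univ j (fun i => B x (bb i))]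
    simp
  have hbsb' : ∀ i j, B (bb i) (bsB j) = if i = j then 1 else 0 := by
    intro i j
    rw [hsymm, hbsb]
    by_cases h : i = j <;> simp [h, eq_comm]
  have hrepr2 : ∀ x : V, x = ∑ i, (B x (bsB i)) • bb i := by
    intro x
    apply hBinj
    apply bsB.ext
    intro j
    rw [map_sum, LinearMap.sum_apply]
    simp only [map_smul, LinearMap.smul_apply, smul_eq_mul, hbsb', mul_ite,
      mul_one, mul_zero]
    rw [Finset.sum_ite_eq' Finset.univ j (fun i => B x (bsB i))]
    simp
  -- === Step 3: description of the dual lattice ===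
  have hmemdual : ∀ x : V, x ∈ dual B L ↔ ∀ y ∈ L, ∃ k : ℤ, B x y = (k : ℚ) := by
    intro x; rfl
  have hdual : dual B L = Submodule.span ℤ (Set.range ⇑bsB) := by
    apply le_antisymm
    · intro x hx
      rw [hmemdual] at hx
      choose k hk using fun i => hx (bb i) (hbbL i)
      have h1 : x = ∑ i, (k i) • bsB i := by
        rw [hrepr1 x]
        congr 1
        funext i
        rw [hk i, Int.cast_smul_eq_zsmul]
      rw [h1]
      exact Submodule.sum_mem _ fun i _ =>
        Submodule.smul_mem _ _ (Submodule.subset_span ⟨i, rfl⟩)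
    · rw [Submodule.span_le]
      rintro _ ⟨i, rfl⟩
      rw [SetLike.mem_coe, hmemdual]
      intro y hy
      refine pair_int_on_span B (bsB i) (Set.range bb) ?_ y (by rw [hbbspan]; exact hy)
      rintro _ ⟨j, rfl⟩
      exact ⟨if i = j then 1 else 0, by rw [hbsb i j]; split <;> simp⟩
  -- === Step 4: double dual ===
  have hddual : ∀ x : V, (∀ i, ∃ c : ℤ, B x (bsB i) = (c : ℚ)) → x ∈ L := by
    intro x hx
    choose k hk using hx
    have h1 : x = ∑ i, (k i) • bb i := by
      rw [hrepr2 x]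
      congr 1
      funext i
      rw [hk i, Int.cast_smul_eq_zsmul]
    rw [← hbbspan, h1]
    exact Submodule.sum_mem _ fun i _ =>
      Submodule.smul_mem _ _ (Submodule.subset_span ⟨i, rfl⟩)
  -- === Step 5: the lattice Dv = L' ∩ U and its basis e₁, e₂ ===
  have hLdual : L ≤ dual B L := by
    intro x hx
    rw [hmemdual]
    exact fun y hy => hL.integral x hx y hy
  set Dv : Submodule ℤ V := dual B L ⊓ Submodule.restrictScalars ℤ U with hDvdef
  have hdualfg : (dual B L).FG := by
    refine ⟨Finset.univ.image bsB, ?_⟩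
    rw [hdual, Finset.coe_image, Finset.coe_univ, Set.image_univ]
  have hDvfg : Dv.FG := by
    haveI : Module.Finite ℤ ↥(dual B L) := Module.Finite.iff_fg.mpr hdualfg
    haveI : IsNoetherian ℤ ↥(dual B L) := isNoetherian_of_isNoetherianRing_of_finite ℤ _
    have h1 : (Dv.comap (dual B L).subtype).FG := IsNoetherian.noetherian _
    have h2 : Dv = (Dv.comap (dual B L).subtype).map (dual B L).subtype := by
      rw [Submodule.map_comap_subtype]
      exact (inf_eq_right.mpr inf_le_left).symm
    rw [h2]
    exact h1.map _
  obtain ⟨k, ee, heeDv, heespan, heeli⟩ := exists_latt_basis Dv hDvfg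
  have hspanDvU : Submodule.span ℚ (Dv : Set V) = U := by
    apply le_antisymm
    · rw [Submodule.span_le]
      exact fun x hx => hx.2
    · intro u hu
      obtain ⟨d, hd0, hdL⟩ := exists_int_smul_mem L hL.spans u
      have hdu : d • u ∈ Dv := by
        refine ⟨hLdual hdL, ?_⟩
        show d • u ∈ U
        rw [← Int.cast_smul_eq_zsmul ℚ d u]
        exact U.smul_mem _ hu
      have h1 : u = ((d : ℚ))⁻¹ • ((d : ℚ) • u) := by
        rw [smul_smul, inv_mul_cancel₀ (by exact_mod_cast hd0), one_smul]
      rw [h1]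
      refine Submodule.smul_mem _ _ (Submodule.subset_span ?_)
      rw [Int.cast_smul_eq_zsmul ℚ d u]
      exact hdu
  have hk2 : k = 2 := by
    have h1 : Submodule.span ℚ (Set.range ee) = U := by
      rw [← Submodule.span_span_of_tower (R := ℤ) (S := ℚ), heespan, hspanDvU]
    have h2 := finrank_span_eq_card heeli
    rw [h1, hU2, Fintype.card_fin] at h2
    omega
  subst hk2
  set e₁ := ee 0 with he₁def
  set e₂ := ee 1 with he₂def
  have hee : ee = ![e₁, e₂] := by
    funext i; fin_cases i <;> rfl
  have hrangeee : Set.range ee = {e₁, e₂} := by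
    ext z
    simp only [Set.mem_range, Set.mem_insert_iff, Set.mem_singleton_iff, Fin.exists_fin_two]
    exact or_congr eq_comm eq_comm
  have heeli2 : LinearIndependent ℚ ![e₁, e₂] := hee ▸ heeli
  have hDvspan : Dv = Submodule.span ℤ {e₁, e₂} := by rw [← heespan, hrangeee]
  have hUspan : Submodule.span ℚ {e₁, e₂} = U := by
    rw [← hrangeee, ← Submodule.span_span_of_tower (R := ℤ) (S := ℚ), heespan, hspanDvU]
  -- === Step 6: LH ∩ U = Dv ===
  have hDvLH : Dv ≤ LH B L U := le_sup_left
  have hLLH : L ≤ LH B L U := le_sup_right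
  have hLHU : LH B L U ⊓ Submodule.restrictScalars ℤ U = Dv := by
    apply le_antisymm
    · rintro x ⟨hx1, hx2⟩
      obtain ⟨d, hd, l, hl, rfl⟩ := Submodule.mem_sup.mp hx1
      have hlU : l ∈ Submodule.restrictScalars ℤ U := by
        have : l = (d + l) - d := by abel
        rw [this]
        exact Submodule.sub_mem _ hx2 hd.2
      exact Submodule.add_mem _ hd (⟨hLdual hl, hlU⟩ : l ∈ Dv)
    · exact le_inf hDvLH fun x hx => hx.2
  -- === Step 7: finding dual vectors f₁ f₂ in L ===
  have hbsD : ∀ i, bsB i ∈ dual B L := fun i => by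
    rw [hdual]; exact Submodule.subset_span ⟨i, rfl⟩
  have hinjZQ : Function.Injective fun r : ℤ => r • (1 : ℚ) := by
    intro a b h; simpa using h
  have hbsZli : LinearIndependent ℤ ⇑bsB := bsB.linearIndependent.restrict_scalars hinjZQ
  have heeZli : LinearIndependent ℤ ee := heeli.restrict_scalars hinjZQ
  let bD : Module.Basis (Fin m) ℤ ↥(dual B L) :=
    (Module.Basis.span hbsZli).map (LinearEquiv.ofEq _ _ hdual.symm)
  have hbD : ∀ i, ((bD i : ↥(dual B L)) : V) = bsB i := by
    intro i
    show ((((Module.Basis.span hbsZli).map (LinearEquiv.ofEq _ _ hdual.symm)) i : ↥(dual B L)) : V)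
      = bsB i
    rw [Module.Basis.map_apply, LinearEquiv.coe_ofEq_apply]
    exact congrArg Subtype.val (Module.Basis.span_apply hbsZli i)
  let bDv : Module.Basis (Fin 2) ℤ ↥Dv := (Module.Basis.span heeZli).map (LinearEquiv.ofEq _ _ heespan)
  have hbDv : ∀ i, ((bDv i : ↥Dv) : V) = ee i := by
    intro i
    show ((((Module.Basis.span heeZli).map (LinearEquiv.ofEq _ _ heespan)) i : ↥Dv) : V) = ee i
    rw [Module.Basis.map_apply, LinearEquiv.coe_ofEq_apply]
    exact congrArg Subtype.val (Module.Basis.span_apply heeZli i)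
  have hDvD : Dv ≤ dual B L := inf_le_left
  set W : Submodule ℤ ↥(dual B L) := Dv.comap (dual B L).subtype with hWdef
  haveI : Module.Finite ℤ ↥(dual B L) := Module.Finite.iff_fg.mpr hdualfg
  haveI hQtf : NoZeroSMulDivisors ℤ (↥(dual B L) ⧸ W) := by
    constructor
    intro c q h
    rcases eq_or_ne c 0 with rfl | hc
    · exact Or.inl rfl
    refine Or.inr ?_
    obtain ⟨x, rfl⟩ := W.mkQ_surjective q
    rw [← map_smul] at h
    have hcx : c • x ∈ W := (Submodule.Quotient.mk_eq_zero _).mp h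
    have hxU : (x : V) ∈ U := by
      have h1 : ((c • x : ↥(dual B L)) : V) ∈ U := hcx.2
      have h2 : ((c • x : ↥(dual B L)) : V) = (c : ℚ) • (x : V) := by
        rw [Submodule.coe_smul, Int.cast_smul_eq_zsmul]
      rw [h2] at h1
      have h3 := U.smul_mem ((c : ℚ))⁻¹ h1
      rwa [smul_smul, inv_mul_cancel₀ (by exact_mod_cast hc), one_smul] at h3
    have : x ∈ W := ⟨x.2, hxU⟩
    exact (Submodule.Quotient.mk_eq_zero _).mpr this
  haveI : Module.Free ℤ (↥(dual B L) ⧸ W) := Module.free_of_finite_type_torsion_free'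
  obtain ⟨sec, hsec⟩ :=
    Module.projective_lifting_property W.mkQ (LinearMap.id (M := ↥(dual B L) ⧸ W))
      W.mkQ_surjective
  set π : ↥(dual B L) →ₗ[ℤ] ↥(dual B L) := LinearMap.id - sec.comp W.mkQ with hπdef
  have hπmem : ∀ x, π x ∈ W := by
    intro x
    rw [← Submodule.ker_mkQ W, LinearMap.mem_ker]
    have h1 : W.mkQ (sec (W.mkQ x)) = W.mkQ x := by
      have := congrFun (congrArg DFunLike.coe hsec) (W.mkQ x)
      simpa using this
    simp only [hπdef, LinearMap.sub_apply, LinearMap.id_apply, LinearMap.comp_apply,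
      map_sub, Submodule.mkQ_apply]
    rw [← Submodule.mkQ_apply, ← Submodule.mkQ_apply, h1, sub_self]
  have hπfix : ∀ (x : ↥(dual B L)), (x : V) ∈ Dv → π x = x := by
    intro x hx
    have h1 : W.mkQ x = 0 := (Submodule.Quotient.mk_eq_zero _).mpr ⟨hx.1, hx.2⟩
    simp [hπdef, h1]
  let equivW : ↥W ≃ₗ[ℤ] ↥Dv := Submodule.comapSubtypeEquivOfLe hDvD
  let φ : Fin 2 → (↥(dual B L) →ₗ[ℤ] ℚ) := fun i =>
    (Algebra.linearMap ℤ ℚ) ∘ₗ (bDv.coord i) ∘ₗ (equivW : ↥W →ₗ[ℤ] ↥Dv) ∘ₗ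
      (π.codRestrict W hπmem)
  have hφint : ∀ i x, ∃ k : ℤ, φ i x = (k : ℚ) := fun i x => ⟨_, rfl⟩
  have hφee : ∀ i j, φ i ⟨ee j, hDvD (heeDv j)⟩ = if i = j then 1 else 0 := by
    intro i j
    have h1 : π ⟨ee j, hDvD (heeDv j)⟩ = ⟨ee j, hDvD (heeDv j)⟩ := hπfix _ (heeDv j)
    have h2 : equivW ((π.codRestrict W hπmem) ⟨ee j, hDvD (heeDv j)⟩) = bDv j := by
      apply Subtype.ext
      rw [hbDv j]
      have h3 : ((equivW ((π.codRestrict W hπmem) ⟨ee j, hDvD (heeDv j)⟩) : ↥Dv) : V)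
          = ((((π.codRestrict W hπmem) ⟨ee j, hDvD (heeDv j)⟩ : ↥W) : ↥(dual B L)) : V) := by
        simp [equivW, Submodule.comapSubtypeEquivOfLe]
      rw [h3]
      simp [LinearMap.codRestrict, h1]
    show (Algebra.linearMap ℤ ℚ) ((bDv.coord i) (equivW ((LinearMap.codRestrict W π hπmem)
      ⟨ee j, hDvD (heeDv j)⟩))) = if i = j then 1 else 0
    rw [h2]
    simp only [Module.Basis.coord_apply, Module.Basis.repr_self, Algebra.linearMap_apply]
    by_cases h : i = j <;> simp [h, Finsupp.single_apply, eq_comm]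
  let ψ : Fin 2 → (V →ₗ[ℚ] ℚ) := fun i => bsB.constr ℚ (fun j => φ i ⟨bsB j, hbsD j⟩)
  let f : Fin 2 → V := fun i => Bequiv.symm (ψ i)
  have hBf : ∀ i, B (f i) = ψ i := fun i => Bequiv.apply_symm_apply (ψ i)
  have hφψ : ∀ i (x : ↥(dual B L)), ψ i (x : V) = φ i x := by
    intro i
    have hext : ((ψ i).restrictScalars ℤ).comp (dual B L).subtype = φ i := by
      apply bD.ext
      intro j
      have hcoe : ((bD j : ↥(dual B L)) : V) = bsB j := hbD j
      have h1 : bD j = ⟨bsB j, hbsD j⟩ := Subtype.ext hcoe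
      rw [h1]
      simp only [LinearMap.comp_apply, LinearMap.restrictScalars_apply,
        Submodule.subtype_apply]
      exact Module.Basis.constr_basis bsB ℚ _ j
    intro x
    have := congrFun (congrArg DFunLike.coe hext) x
    simpa using this
  have hfL : ∀ i, f i ∈ L := by
    intro i
    apply hddual
    intro j
    rw [hBf, Module.Basis.constr_basis]
    exact hφint i _
  have hfee : ∀ i j, B (f i) (ee j) = if i = j then 1 else 0 := by
    intro i j
    rw [hBf]
    have := hφψ i ⟨ee j, hDvD (heeDv j)⟩
    simp only at this
    rw [this, hφee]
  -- === Step 8: the hyperbolic basis vectors ===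
  obtain ⟨k₁, hk₁⟩ := hL.even (f 0) (hfL 0)
  obtain ⟨k₂, hk₂⟩ := hL.even (f 1) (hfL 1)
  obtain ⟨c₀, hc₀⟩ := hL.integral (f 0) (hfL 0) (f 1) (hfL 1)
  have hc₀' : B (f 1) (f 0) = (c₀ : ℚ) := by rw [hsymm]; exact hc₀
  have hz : ∀ (k : ℤ) (x y : V), B (k • x) y = (k : ℚ) * B x y := by
    intro k x y
    rw [← Int.cast_smul_eq_zsmul ℚ k x, map_smul]
    simp
  have hz2 : ∀ (k : ℤ) (x y : V), B x (k • y) = (k : ℚ) * B x y := by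
    intro k x y
    rw [← Int.cast_smul_eq_zsmul ℚ k y, (B x).map_smul]
    simp
  set e₁' : V := f 0 - k₁ • e₁ with he₁'def
  set e₂' : V := f 1 - k₂ • e₂ - c₀ • e₁ with he₂'def
  have he₁U : e₁ ∈ U := (heeDv 0).2
  have he₂U : e₂ ∈ U := (heeDv 1).2
  have hBe11 : B e₁ e₁ = 0 := hUiso _ he₁U _ he₁U
  have hBe12 : B e₁ e₂ = 0 := hUiso _ he₁U _ he₂U
  have hBe21 : B e₂ e₁ = 0 := hUiso _ he₂U _ he₁U
  have hBe22 : B e₂ e₂ = 0 := hUiso _ he₂U _ he₂U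
  have hf0e1 : B (f 0) e₁ = 1 := by rw [he₁def]; simpa using hfee 0 0
  have hf0e2 : B (f 0) e₂ = 0 := by rw [he₂def]; simpa using hfee 0 1
  have hf1e1 : B (f 1) e₁ = 0 := by rw [he₁def]; simpa using hfee 1 0
  have hf1e2 : B (f 1) e₂ = 1 := by rw [he₂def]; simpa using hfee 1 1
  have he₁f0 : B e₁ (f 0) = 1 := by rw [hsymm]; exact hf0e1
  have he₂f0 : B e₂ (f 0) = 0 := by rw [hsymm]; exact hf0e2
  have he₁f1 : B e₁ (f 1) = 0 := by rw [hsymm]; exact hf1e1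
  have he₂f1 : B e₂ (f 1) = 1 := by rw [hsymm]; exact hf1e2
  have hg1 : B e₁ e₁' = 1 := by
    simp only [he₁'def, map_sub, LinearMap.sub_apply, hz, hz2, hBe11, hBe12, hBe21,
      hBe22, hf0e1, hf0e2, hf1e1, hf1e2, he₁f0, he₂f0, he₁f1, he₂f1, hk₁, hk₂, hc₀, hc₀']
    ring
  have hg2 : B e₂ e₂' = 1 := by
    simp only [he₂'def, map_sub, LinearMap.sub_apply, hz, hz2, hBe11, hBe12, hBe21,
      hBe22, hf0e1, hf0e2, hf1e1, hf1e2, he₁f0, he₂f0, he₁f1, he₂f1, hk₁, hk₂, hc₀, hc₀']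
    ring
  have hg3 : B e₁ e₂' = 0 := by
    simp only [he₂'def, map_sub, LinearMap.sub_apply, hz, hz2, hBe11, hBe12, hBe21,
      hBe22, hf0e1, hf0e2, hf1e1, hf1e2, he₁f0, he₂f0, he₁f1, he₂f1, hk₁, hk₂, hc₀, hc₀']
    ring
  have hg4 : B e₂ e₁' = 0 := by
    simp only [he₁'def, map_sub, LinearMap.sub_apply, hz, hz2, hBe11, hBe12, hBe21,
      hBe22, hf0e1, hf0e2, hf1e1, hf1e2, he₁f0, he₂f0, he₁f1, he₂f1, hk₁, hk₂, hc₀, hc₀']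
    ring
  have hg5 : B e₁' e₁' = 0 := by
    simp only [he₁'def, map_sub, LinearMap.sub_apply, hz, hz2, hBe11, hBe12, hBe21,
      hBe22, hf0e1, hf0e2, hf1e1, hf1e2, he₁f0, he₂f0, he₁f1, he₂f1, hk₁, hk₂, hc₀, hc₀']
    ring
  have hg6 : B e₂' e₂' = 0 := by
    simp only [he₁'def, he₂'def, map_sub, LinearMap.sub_apply, hz, hz2, hBe11, hBe12,
      hBe21, hBe22, hf0e1, hf0e2, hf1e1, hf1e2, he₁f0, he₂f0, he₁f1, he₂f1, hk₁, hk₂,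
      hc₀, hc₀']
    ring
  have hg7 : B e₁' e₂' = 0 := by
    simp only [he₁'def, he₂'def, map_sub, LinearMap.sub_apply, hz, hz2, hBe11, hBe12,
      hBe21, hBe22, hf0e1, hf0e2, hf1e1, hf1e2, he₁f0, he₂f0, he₁f1, he₂f1, hk₁, hk₂,
      hc₀, hc₀']
    ring
  have he₁LH : e₁ ∈ LH B L U := hDvLH (heeDv 0)
  have he₂LH : e₂ ∈ LH B L U := hDvLH (heeDv 1)
  have he₁'LH : e₁' ∈ LH B L U := by
    rw [he₁'def]
    exact Submodule.sub_mem _ (hLLH (hfL 0)) (Submodule.smul_mem _ _ he₁LH)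
  have he₂'LH : e₂' ∈ LH B L U := by
    rw [he₂'def]
    exact Submodule.sub_mem _ (Submodule.sub_mem _ (hLLH (hfL 1))
      (Submodule.smul_mem _ _ he₂LH)) (Submodule.smul_mem _ _ he₁LH)
  -- === Step 9: integrality and evenness of LH ===
  have hNint : ∀ x ∈ LH B L U, ∀ y ∈ LH B L U, ∃ k : ℤ, B x y = (k : ℚ) := by
    intro x hx y hy
    obtain ⟨d, hd, l, hl, rfl⟩ := Submodule.mem_sup.mp hx
    obtain ⟨d', hd', l', hl', rfl⟩ := Submodule.mem_sup.mp hy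
    have h1 : B d d' = 0 := hUiso _ hd.2 _ hd'.2
    obtain ⟨a, ha⟩ := hd.1 l' hl'
    obtain ⟨b, hb⟩ := hd'.1 l hl
    obtain ⟨c, hc⟩ := hL.integral l hl l' hl'
    refine ⟨a + b + c, ?_⟩
    have hexp : B (d + l) (d' + l') = B d d' + B d l' + B l d' + B l l' := by
      simp only [map_add, LinearMap.add_apply]; ring
    rw [hexp, h1, ha, hsymm l d', hb, hc]
    push_cast; ring
  have hNeven : ∀ x ∈ LH B L U, ∃ k : ℤ, B x x = 2 * (k : ℚ) := by
    intro x hx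
    obtain ⟨d, hd, l, hl, rfl⟩ := Submodule.mem_sup.mp hx
    have h1 : B d d = 0 := hUiso _ hd.2 _ hd.2
    obtain ⟨a, ha⟩ := hd.1 l hl
    obtain ⟨c, hc⟩ := hL.even l hl
    refine ⟨a + c, ?_⟩
    have hexp : B (d + l) (d + l) = B d d + B d l + B l d + B l l := by
      simp only [map_add, LinearMap.add_apply]; ring
    rw [hexp, h1, ha, hsymm l d, ha, hc]
    push_cast; ring
  -- === Step 10: the complement M ===
  set M : Submodule ℤ V := LH B L U ⊓ Submodule.restrictScalars ℤ
      (LinearMap.ker (B.flip e₁) ⊓ LinearMap.ker (B.flip e₁') ⊓ LinearMap.ker (B.flip e₂)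
        ⊓ LinearMap.ker (B.flip e₂')) with hMdef
  have hMmem : ∀ x : V, x ∈ M ↔ x ∈ LH B L U ∧ B x e₁ = 0 ∧ B x e₁' = 0 ∧ B x e₂ = 0
      ∧ B x e₂' = 0 := by
    intro x
    rw [hMdef]
    simp only [Submodule.mem_inf, Submodule.restrictScalars_mem, LinearMap.mem_ker,
      LinearMap.flip_apply, and_assoc]
  have hg1s : B e₁' e₁ = 1 := by rw [hsymm]; exact hg1
  have hg2s : B e₂' e₂ = 1 := by rw [hsymm]; exact hg2
  have hg3s : B e₂' e₁ = 0 := by rw [hsymm]; exact hg3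
  have hg4s : B e₁' e₂ = 0 := by rw [hsymm]; exact hg4
  have hg7s : B e₂' e₁' = 0 := by rw [hsymm]; exact hg7
  have hdecomp : ∀ x ∈ LH B L U, ∃ a b c d : ℤ,
      x - a • e₁ - b • e₁' - c • e₂ - d • e₂' ∈ M ∧
      (a : ℚ) = B x e₁' ∧ (b : ℚ) = B x e₁ ∧ (c : ℚ) = B x e₂' ∧ (d : ℚ) = B x e₂ := by
    intro x hx
    obtain ⟨a, ha⟩ := hNint x hx e₁' he₁'LH
    obtain ⟨b, hb⟩ := hNint x hx e₁ he₁LH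
    obtain ⟨c, hc⟩ := hNint x hx e₂' he₂'LH
    obtain ⟨d, hd⟩ := hNint x hx e₂ he₂LH
    refine ⟨a, b, c, d, ?_, ha.symm, hb.symm, hc.symm, hd.symm⟩
    rw [hMmem]
    refine ⟨?_, ?_, ?_, ?_, ?_⟩
    · exact Submodule.sub_mem _ (Submodule.sub_mem _ (Submodule.sub_mem _
        (Submodule.sub_mem _ hx (Submodule.smul_mem _ _ he₁LH))
        (Submodule.smul_mem _ _ he₁'LH)) (Submodule.smul_mem _ _ he₂LH))
        (Submodule.smul_mem _ _ he₂'LH)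
    all_goals
      simp only [map_sub, LinearMap.sub_apply, hz, hBe11, hBe12, hBe21, hBe22, hg1, hg2,
        hg3, hg4, hg5, hg6, hg7, hg1s, hg2s, hg3s, hg4s, hg7s, ha, hb, hc, hd]
      ring
  have hspan1LH : Submodule.span ℤ {e₁, e₁'} ≤ LH B L U := by
    rw [Submodule.span_le]
    rintro x (rfl | rfl)
    · exact he₁LH
    · exact he₁'LH
  have hspan2LH : Submodule.span ℤ {e₂, e₂'} ≤ LH B L U := by
    rw [Submodule.span_le]
    rintro x (rfl | rfl)
    · exact he₂LH
    · exact he₂'LH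
  have hMLH : M ≤ LH B L U := inf_le_left
  -- === Step 11: direct sum decomposition ===
  have hsum : LH B L U = M ⊔ Submodule.span ℤ {e₁, e₁'} ⊔ Submodule.span ℤ {e₂, e₂'} := by
    apply le_antisymm
    · intro x hx
      obtain ⟨a, b, c, d, hx₀, _, _, _, _⟩ := hdecomp x hx
      have hxeq : x = (x - a • e₁ - b • e₁' - c • e₂ - d • e₂') + (a • e₁ + b • e₁')
          + (c • e₂ + d • e₂') := by abel
      rw [hxeq]
      refine Submodule.add_mem _ (Submodule.add_mem _
        (Submodule.mem_sup_left (Submodule.mem_sup_left hx₀))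
        (Submodule.mem_sup_left (Submodule.mem_sup_right ?_)))
        (Submodule.mem_sup_right ?_)
      · exact Submodule.mem_span_pair.mpr ⟨a, b, rfl⟩
      · exact Submodule.mem_span_pair.mpr ⟨c, d, rfl⟩
    · exact sup_le (sup_le hMLH hspan1LH) hspan2LH
  have hint2 : Submodule.span ℤ {e₁, e₁'} ⊓ Submodule.span ℤ {e₂, e₂'} = ⊥ := by
    rw [eq_bot_iff]
    intro x hx
    obtain ⟨hx1, hx2⟩ := Submodule.mem_inf.mp hx
    obtain ⟨a, b, hab⟩ := Submodule.mem_span_pair.mp hx1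
    obtain ⟨c, d, hcd⟩ := Submodule.mem_span_pair.mp hx2
    have h1 : B x e₁ = (b : ℚ) := by
      rw [← hab]
      simp only [map_add, LinearMap.add_apply, hz, hBe11, hg1s]; ring
    have h2 : B x e₁ = 0 := by
      rw [← hcd]
      simp only [map_add, LinearMap.add_apply, hz, hBe21, hg3s]; ring
    have h3 : B x e₁' = (a : ℚ) := by
      rw [← hab]
      simp only [map_add, LinearMap.add_apply, hz, hg1, hg5]; ring
    have h4 : B x e₁' = 0 := by
      rw [← hcd]
      simp only [map_add, LinearMap.add_apply, hz, hg4, hg7s]; ring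
    have ha0 : a = 0 := by exact_mod_cast h3.symm.trans h4
    have hb0 : b = 0 := by exact_mod_cast h1.symm.trans h2
    rw [Submodule.mem_bot, ← hab, ha0, hb0]
    simp
  have hint1 : M ⊓ (Submodule.span ℤ {e₁, e₁'} ⊔ Submodule.span ℤ {e₂, e₂'}) = ⊥ := by
    rw [eq_bot_iff]
    intro x hx
    obtain ⟨hxM, hx2⟩ := Submodule.mem_inf.mp hx
    obtain ⟨y, hy, z, hzz, rfl⟩ := Submodule.mem_sup.mp hx2
    obtain ⟨a, b, hab⟩ := Submodule.mem_span_pair.mp hy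
    obtain ⟨c, d, hcd⟩ := Submodule.mem_span_pair.mp hzz
    obtain ⟨_, hM1, hM2, hM3, hM4⟩ := (hMmem _).mp hxM
    have hxeq : y + z = a • e₁ + b • e₁' + c • e₂ + d • e₂' := by
      rw [← hab, ← hcd]; abel
    have h1 : B (y + z) e₁' = (a : ℚ) := by
      rw [hxeq]
      simp only [map_add, LinearMap.add_apply, hz, hg1, hg5, hg4, hg7s]; ring
    have h2 : B (y + z) e₁ = (b : ℚ) := by
      rw [hxeq]
      simp only [map_add, LinearMap.add_apply, hz, hBe11, hBe21, hg1s, hg3s]; ring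
    have h3 : B (y + z) e₂' = (c : ℚ) := by
      rw [hxeq]
      simp only [map_add, LinearMap.add_apply, hz, hg3, hg7, hg2, hg6]; ring
    have h4 : B (y + z) e₂ = (d : ℚ) := by
      rw [hxeq]
      simp only [map_add, LinearMap.add_apply, hz, hBe12, hBe22, hg4s, hg2s]; ring
    have ha0 : a = 0 := by exact_mod_cast h1.symm.trans hM2
    have hb0 : b = 0 := by exact_mod_cast h2.symm.trans hM1
    have hc0 : c = 0 := by exact_mod_cast h3.symm.trans hM4
    have hd0 : d = 0 := by exact_mod_cast h4.symm.trans hM3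
    rw [Submodule.mem_bot, hxeq, ha0, hb0, hc0, hd0]
    simp
  -- === Step 12: positive definiteness of M ===
  have hsig_ne : ∀ i, B (bsig i) (bsig i) ≠ 0 := by
    intro i h0
    have hall : ∀ y, B (bsig i) y = 0 := by
      intro y
      conv_lhs => rw [← Module.Basis.sum_repr bsig y]
      rw [map_sum]
      refine Finset.sum_eq_zero fun j _ => ?_
      rcases eq_or_ne j i with rfl | hji
      · rw [map_smul, h0, smul_zero]
      · rw [map_smul, hsorth i j (Ne.symm hji), smul_zero]
    exact bsig.ne_zero i (hL.nondeg _ hall)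
  set pos : Finset (Fin (n + 2)) :=
    Finset.univ.filter (fun i => 0 < B (bsig i) (bsig i)) with hposdef
  set P : Submodule ℚ V := Submodule.span ℚ (⇑bsig '' ↑pos) with hPdef
  have hPpos : ∀ v ∈ P, v ≠ 0 → 0 < B v v := by
    intro v hv hv0
    rw [hPdef] at hv
    have hsupp : ↑(bsig.repr v).support ⊆ (↑pos : Set (Fin (n + 2))) :=
      (Module.Basis.mem_span_image (b := bsig)).mp hv
    have hexpand : ∀ w y : V, B w y = ∑ j, bsig.repr w j * B (bsig j) y := by
      intro w y
      conv_lhs => rw [← Module.Basis.sum_repr bsig w]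
      rw [map_sum, LinearMap.sum_apply]
      exact Finset.sum_congr rfl fun j _ => by
        rw [map_smul, LinearMap.smul_apply, smul_eq_mul]
    have hBvv : B v v = ∑ j, (bsig.repr v j) ^ 2 * B (bsig j) (bsig j) := by
      rw [hexpand v v]
      refine Finset.sum_congr rfl fun j _ => ?_
      have hin : B (bsig j) v = bsig.repr v j * B (bsig j) (bsig j) := by
        conv_lhs => rw [← Module.Basis.sum_repr bsig v]
        rw [map_sum]
        rw [Finset.sum_eq_single j]
        · rw [map_smul, smul_eq_mul]
        · intro l _ hlj
          rw [map_smul, hsorth j l (Ne.symm hlj), smul_zero]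
        · intro h; exact absurd (Finset.mem_univ j) h
      rw [hin]; ring
    rw [hBvv]
    have hne : bsig.repr v ≠ 0 := by
      intro h
      exact hv0 (by simpa using congrArg bsig.repr.symm h)
    obtain ⟨j, hj⟩ := Finsupp.ne_iff.mp hne
    rw [Finsupp.coe_zero, Pi.zero_apply] at hj
    refine Finset.sum_pos' (fun i _ => ?_) ⟨j, Finset.mem_univ j, ?_⟩
    · rcases eq_or_ne (bsig.repr v i) 0 with h | h
      · rw [h]; simp
      · have hipos : i ∈ pos := hsupp (Finsupp.mem_support_iff.mpr h)
        have := (Finset.mem_filter.mp hipos).2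
        positivity
    · have hjpos : j ∈ pos := hsupp (Finsupp.mem_support_iff.mpr hj)
      have := (Finset.mem_filter.mp hjpos).2
      positivity
  have hPdim : Module.finrank ℚ ↥P = n := by
    have hgli : LinearIndependent ℚ (fun i : ↥(↑pos : Set (Fin (n + 2))) => bsig ↑i) :=
      bsig.linearIndependent.comp _ Subtype.val_injective
    have hrange : Set.range (fun i : ↥(↑pos : Set (Fin (n + 2))) => bsig ↑i)
        = ⇑bsig '' ↑pos := (Set.image_eq_range _ _).symm
    have h1 := finrank_span_eq_card hgli
    rw [hrange] at h1
    rw [hPdef, h1]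
    simpa using hspos
  have hMpos : ∀ x ∈ M, x ≠ 0 → 0 < B x x := by
    intro x hxM hx0
    by_contra hle'
    push_neg at hle'
    obtain ⟨hxLH, hxe₁, hxe₁', hxe₂, hxe₂'⟩ := (hMmem x).mp hxM
    have hxe₁s : B e₁ x = 0 := by rw [hsymm]; exact hxe₁
    have hxe₂s : B e₂ x = 0 := by rw [hsymm]; exact hxe₂
    have hli3 : LinearIndependent ℚ ![e₁, e₂, x] := by
      rw [Fintype.linearIndependent_iff]
      intro g hg
      rw [Fin.sum_univ_three] at hg
      simp only [Matrix.cons_val_zero, Matrix.cons_val_one, Matrix.head_cons,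
        Matrix.cons_val_two, Matrix.tail_cons] at hg
      have hv1 : B (g 0 • e₁ + g 1 • e₂ + g 2 • x) e₁' = g 0 := by
        simp only [map_add, LinearMap.add_apply, map_smul, LinearMap.smul_apply,
          smul_eq_mul, hg1, hg4, hxe₁']
        ring
      have hv2 : B (g 0 • e₁ + g 1 • e₂ + g 2 • x) e₂' = g 1 := by
        simp only [map_add, LinearMap.add_apply, map_smul, LinearMap.smul_apply,
          smul_eq_mul, hg3, hg2, hxe₂']
        ring
      rw [hg, map_zero, LinearMap.zero_apply] at hv1 hv2
      have hg0 : g 0 = 0 := hv1.symm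
      have hg1' : g 1 = 0 := hv2.symm
      rw [hg0, hg1', zero_smul, zero_smul, zero_add, zero_add] at hg
      have hg2' : g 2 = 0 := by
        rcases smul_eq_zero.mp hg with h | h
        · exact h
        · exact absurd h hx0
      intro i
      fin_cases i
      · exact hg0
      · exact hg1'
      · exact hg2'
    set S : Submodule ℚ V := Submodule.span ℚ (Set.range ![e₁, e₂, x]) with hSdef
    have hSneg : ∀ v ∈ S, B v v ≤ 0 := by
      intro v hv
      rw [hSdef] at hv
      obtain ⟨c, rfl⟩ := (Submodule.mem_span_range_iff_exists_fun ℚ).mp hv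
      rw [Fin.sum_univ_three]
      simp only [Matrix.cons_val_zero, Matrix.cons_val_one, Matrix.head_cons,
        Matrix.cons_val_two, Matrix.tail_cons]
      have hexp : B (c 0 • e₁ + c 1 • e₂ + c 2 • x) (c 0 • e₁ + c 1 • e₂ + c 2 • x)
          = c 2 * c 2 * B x x := by
        simp only [map_add, LinearMap.add_apply, map_smul, LinearMap.smul_apply,
          smul_eq_mul, hBe11, hBe12, hBe21, hBe22, hxe₁, hxe₂, hxe₁s, hxe₂s]
        ring
      rw [hexp]
      nlinarith [sq_nonneg (c 2), hle']
    have hSP : S ⊓ P = ⊥ := by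
      rw [eq_bot_iff]
      intro v hv
      rw [Submodule.mem_bot]
      by_contra hv0
      exact absurd (hSneg v hv.1) (not_le.mpr (hPpos v hv.2 hv0))
    have hSdim : Module.finrank ℚ ↥S = 3 := by
      rw [hSdef, finrank_span_eq_card hli3, Fintype.card_fin]
    have hsum' := Submodule.finrank_sup_add_finrank_inf_eq S P
    rw [hSP, finrank_bot, hSdim, hPdim] at hsum'
    have hle2 : Module.finrank ℚ ↥(S ⊔ P) ≤ n + 2 := hdim ▸ Submodule.finrank_le _
    omega
  -- === Step 13: M vs U-perp, and final assembly ===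
  have hMint : ∀ x ∈ M, ∀ y ∈ M, ∃ k : ℤ, B x y = (k : ℚ) :=
    fun x hx y hy => hNint x (hMLH hx) y (hMLH hy)
  have hMeven : ∀ x ∈ M, ∃ k : ℤ, B x x = 2 * (k : ℚ) :=
    fun x hx => hNeven x (hMLH hx)
  have hMperpU : ∀ x ∈ M, ∀ u ∈ U, B x u = 0 := by
    intro x hx u hu
    obtain ⟨_, h1, _, h3, _⟩ := (hMmem x).mp hx
    rw [← hUspan] at hu
    obtain ⟨a, b, hab⟩ := Submodule.mem_span_pair.mp hu
    rw [← hab, map_add, map_smul, map_smul, h1, h3]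
    simp
  have hmemperp : ∀ x : V, x ∈ perp B U ↔ ∀ w ∈ U, B x w = 0 := fun x => Iff.rfl
  have hfinal1 : LH B L U ⊓ Submodule.restrictScalars ℤ (perp B U)
      = M ⊔ (LH B L U ⊓ Submodule.restrictScalars ℤ U) := by
    apply le_antisymm
    · rintro x ⟨hxLH', hxperp⟩
      obtain ⟨a, b, c, d, hx₀, ha, hb, hc, hd⟩ := hdecomp x hxLH'
      have hxperp' : ∀ w ∈ U, B x w = 0 := hxperp
      have hb0 : b = 0 := by
        have := (hxperp' e₁ he₁U)
        exact_mod_cast hb.trans this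
      have hd0 : d = 0 := by
        have := (hxperp' e₂ he₂U)
        exact_mod_cast hd.trans this
      have hxeq : x = (x - a • e₁ - b • e₁' - c • e₂ - d • e₂') + (a • e₁ + c • e₂) := by
        rw [hb0, hd0]
        simp only [zero_smul, sub_zero]
        abel
      rw [hxeq]
      refine Submodule.add_mem _ (Submodule.mem_sup_left hx₀) (Submodule.mem_sup_right ?_)
      refine ⟨Submodule.add_mem _ (Submodule.smul_mem _ _ he₁LH)
        (Submodule.smul_mem _ _ he₂LH), ?_⟩
      show a • e₁ + c • e₂ ∈ U
      rw [← Int.cast_smul_eq_zsmul ℚ a e₁, ← Int.cast_smul_eq_zsmul ℚ c e₂]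
      exact U.add_mem (U.smul_mem _ he₁U) (U.smul_mem _ he₂U)
    · refine sup_le ?_ ?_
      · intro x hx
        exact ⟨hMLH hx, hMperpU x hx⟩
      · rintro x ⟨hx1, hx2⟩
        refine ⟨hx1, ?_⟩
        intro w hw
        exact hUiso x hx2 w hw
  have hfinal2 : M ⊓ Submodule.restrictScalars ℤ U = ⊥ := by
    rw [eq_bot_iff]
    rintro x ⟨hx1, hx2⟩
    rw [Submodule.mem_bot]
    by_contra hx0
    have h1 : B x x = 0 := hUiso x hx2 x hx2
    exact absurd h1 (ne_of_gt (hMpos x hx1 hx0))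
  refine ⟨e₁, e₂, e₁', e₂', M, he₁U, he₂U, hLHU.trans hDvspan, heeli2, he₁'LH, he₂'LH,
    hg5, hg6, hg1, hg2, hg3, hg4, hg7, ?_, hsum, hint1, hint2, hMpos, hMint, hMeven,
    hfinal1, hfinal2⟩
  intro x hx
  obtain ⟨_, h1, h2, h3, h4⟩ := (hMmem x).mp hx
  exact ⟨h1, h3, h2, h4⟩

end RMV
end

section
/- Let L be an even lattice of signature (n,2) with n > 2, let U ⊆ L ⊗ ℚ be a 2-dimensional isotropic subspace, and set L^H = (L' ∩ U) + L. Then L' ∩ U^⊥ = (L^H)' ∩ U^⊥. Moreover, if L^H = K ⊕ ⟨e₁, e₁'⟩ ⊕ ⟨e₂, e₂'⟩ is an orthogonal decomposition with ⟨e_i, e_i'⟩ unimodular hyperbolic planes and U spanned by e₁ and e₂, then L' ∩ U^⊥ = K' + (L' ∩ U), where K' is the dual lattice of K inside K ⊗ ℚ ⊆ L ⊗ ℚ. In particular every element of L' ∩ U^⊥ can be written as α + u with α ∈ K' and u ∈ L' ∩ U. -/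
/-!
Statement 4: Let `L` be an even lattice of signature `(n,2)`, `n > 2`, `U ⊆ L ⊗ ℚ` a
2-dimensional isotropic subspace and `L^H = (L' ∩ U) + L`.  Then
`L' ∩ U^⊥ = (L^H)' ∩ U^⊥`.  Moreover, if `L^H = K ⊕ ⟨e₁,e₁'⟩ ⊕ ⟨e₂,e₂'⟩` is an
orthogonal decomposition with unimodular hyperbolic planes and `U` spanned by `e₁, e₂`,
then `L' ∩ U^⊥ = K' + (L' ∩ U)`, where `K'` is the dual lattice of `K` inside
`K ⊗ ℚ`.  In particular every element of `L' ∩ U^⊥` can be written `α + u` with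
`α ∈ K'`, `u ∈ L' ∩ U`.
-/

namespace RMV

variable {V : Type} [AddCommGroup V] [Module ℚ V]

/-- The dual lattice `K'` of `K`, taken inside `K ⊗ ℚ ⊆ V`. -/
def dualIn (B : V →ₗ[ℚ] V →ₗ[ℚ] ℚ) (K : Submodule ℤ V) : Submodule ℤ V :=
  dual B K ⊓ Submodule.restrictScalars ℤ (Submodule.span ℚ (K : Set V))

theorem dual_inter_perp_eq
    (V : Type) [AddCommGroup V] [Module ℚ V]
    (B : V →ₗ[ℚ] V →ₗ[ℚ] ℚ) (L : Submodule ℤ V)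
    (n : ℕ) (hn : 2 < n)
    (hL : IsEvenLattice B L) (hsig : HasSignature B n 2)
    (U : Submodule ℚ V) (hU2 : Module.finrank ℚ U = 2)
    (hUiso : ∀ x ∈ U, ∀ y ∈ U, B x y = 0)
    (K : Submodule ℤ V) (e₁ e₂ e₁' e₂' : V)
    (hUspan : U = Submodule.span ℚ {e₁, e₂})
    -- Gram conditions: unimodular hyperbolic planes `⟨e₁,e₁'⟩`, `⟨e₂,e₂'⟩`
    (h11 : B e₁ e₁ = 0) (h22 : B e₂ e₂ = 0)
    (h1'1' : B e₁' e₁' = 0) (h2'2' : B e₂' e₂' = 0)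
    (h11' : B e₁ e₁' = 1) (h22' : B e₂ e₂' = 1)
    (h12 : B e₁ e₂ = 0) (h12' : B e₁ e₂' = 0)
    (h1'2 : B e₁' e₂ = 0) (h1'2' : B e₁' e₂' = 0)
    -- `K` is orthogonal to the hyperbolic planes
    (hKorth : ∀ x ∈ K, B x e₁ = 0 ∧ B x e₂ = 0 ∧ B x e₁' = 0 ∧ B x e₂' = 0)
    -- orthogonal decomposition `L^H = K ⊕ ⟨e₁,e₁'⟩ ⊕ ⟨e₂,e₂'⟩`
    (hdec : LH B L U = K ⊔ Submodule.span ℤ {e₁, e₁'} ⊔ Submodule.span ℤ {e₂, e₂'}) :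
    -- `L' ∩ U^⊥ = (L^H)' ∩ U^⊥`
    dual B L ⊓ Submodule.restrictScalars ℤ (perp B U)
      = dual B (LH B L U) ⊓ Submodule.restrictScalars ℤ (perp B U) ∧
    -- `L' ∩ U^⊥ = K' + (L' ∩ U)`
    dual B L ⊓ Submodule.restrictScalars ℤ (perp B U)
      = dualIn B K ⊔ (dual B L ⊓ Submodule.restrictScalars ℤ U) ∧
    -- in particular, every element of `L' ∩ U^⊥` is `α + u`, `α ∈ K'`, `u ∈ L' ∩ U`
    (∀ x ∈ dual B L ⊓ Submodule.restrictScalars ℤ (perp B U),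
      ∃ α ∈ dualIn B K, ∃ u ∈ dual B L ⊓ Submodule.restrictScalars ℤ U, x = α + u) := by
  have symmB := hL.symm
  -- basic memberships
  have he₁U : e₁ ∈ U := by rw [hUspan]; exact Submodule.subset_span (by simp)
  have he₂U : e₂ ∈ U := by rw [hUspan]; exact Submodule.subset_span (by simp)
  have hLle : L ≤ LH B L U := le_sup_right
  have hKLH : K ≤ LH B L U := by rw [hdec]; exact le_sup_of_le_left le_sup_left
  have he₁LH : e₁ ∈ LH B L U := by
    rw [hdec]
    exact Submodule.mem_sup_left (Submodule.mem_sup_right (Submodule.subset_span (by simp)))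
  have he₁'LH : e₁' ∈ LH B L U := by
    rw [hdec]
    exact Submodule.mem_sup_left (Submodule.mem_sup_right (Submodule.subset_span (by simp)))
  have he₂LH : e₂ ∈ LH B L U := by
    rw [hdec]; exact Submodule.mem_sup_right (Submodule.subset_span (by simp))
  have he₂'LH : e₂' ∈ LH B L U := by
    rw [hdec]; exact Submodule.mem_sup_right (Submodule.subset_span (by simp))
  have hLHdual : ∀ x ∈ LH B L U, x ∈ dual B L := by
    intro x hx
    rcases Submodule.mem_sup.mp hx with ⟨a, ha, b, hb, rfl⟩
    exact (dual B L).add_mem (Submodule.mem_inf.mp ha).1 (fun y hy => hL.integral b hb y hy)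
  -- symmetric Gram values
  have h1'1 : B e₁' e₁ = 1 := (symmB e₁' e₁).trans h11'
  have h2'2 : B e₂' e₂ = 1 := (symmB e₂' e₂).trans h22'
  have h21 : B e₂ e₁ = 0 := (symmB e₂ e₁).trans h12
  have h2'1 : B e₂' e₁ = 0 := (symmB e₂' e₁).trans h12'
  have h21' : B e₂ e₁' = 0 := (symmB e₂ e₁').trans h1'2
  have h2'1' : B e₂' e₁' = 0 := (symmB e₂' e₁').trans h1'2'
  -- orthogonality of span ℚ K to a vector
  have spanK_orth : ∀ v : V, (∀ k ∈ K, B k v = 0) →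
      ∀ α ∈ Submodule.span ℚ (K : Set V), B α v = 0 := by
    intro v hv α hα
    induction hα using Submodule.span_induction with
    | mem x hx => exact hv x hx
    | zero => simp
    | add x y _ _ hx hy => rw [map_add, LinearMap.add_apply, hx, hy, add_zero]
    | smul c x _ hx => rw [map_smul, LinearMap.smul_apply, hx, smul_zero]
  -- Part 1
  have part1 : dual B L ⊓ Submodule.restrictScalars ℤ (perp B U)
      = dual B (LH B L U) ⊓ Submodule.restrictScalars ℤ (perp B U) := by
    ext x
    simp only [Submodule.mem_inf, Submodule.restrictScalars_mem]
    constructor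
    · rintro ⟨hxL, hxP⟩
      refine ⟨?_, hxP⟩
      intro y hy
      rcases Submodule.mem_sup.mp hy with ⟨a, ha, b, hb, rfl⟩
      obtain ⟨k, hk⟩ := hxL b hb
      refine ⟨k, ?_⟩
      have ha2 : a ∈ U := (Submodule.mem_inf.mp ha).2
      rw [map_add]
      have hxa : B x a = 0 := hxP a ha2
      rw [hxa, zero_add, hk]
    · rintro ⟨hxLH, hxP⟩
      exact ⟨fun y hy => hxLH y (hLle hy), hxP⟩
  -- the key projection fact
  have keyf : ∀ x : V,
      x - (B x e₁') • e₁ - (B x e₂') • e₂ - (B x e₁) • e₁' - (B x e₂) • e₂'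
        ∈ Submodule.span ℚ (K : Set V) := by
    have htop : (⊤ : Submodule ℚ V) ≤ Submodule.span ℚ ((LH B L U : Submodule ℤ V) : Set V) := by
      rw [← hL.spans]
      exact Submodule.span_mono (fun y hy => hLle hy)
    intro x
    have hx : x ∈ Submodule.span ℚ ((LH B L U : Submodule ℤ V) : Set V) := htop trivial
    induction hx using Submodule.span_induction with
    | mem y hy =>
      rw [hdec] at hy
      rcases Submodule.mem_sup.mp hy with ⟨p, hp, q, hq, rfl⟩
      rcases Submodule.mem_sup.mp hp with ⟨k, hk, p₁, hp₁, rfl⟩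
      rcases Submodule.mem_span_pair.mp hp₁ with ⟨m, n, rfl⟩
      rcases Submodule.mem_span_pair.mp hq with ⟨s, t, rfl⟩
      obtain ⟨hk1, hk2, hk1', hk2'⟩ := hKorth k hk
      have hm : (m : ℤ) • e₁ = ((m : ℚ)) • e₁ := (Int.cast_smul_eq_zsmul ℚ m e₁).symm
      have hn : (n : ℤ) • e₁' = ((n : ℚ)) • e₁' := (Int.cast_smul_eq_zsmul ℚ n e₁').symm
      have hs : (s : ℤ) • e₂ = ((s : ℚ)) • e₂ := (Int.cast_smul_eq_zsmul ℚ s e₂).symm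
      have ht : (t : ℤ) • e₂' = ((t : ℚ)) • e₂' := (Int.cast_smul_eq_zsmul ℚ t e₂').symm
      rw [hm, hn, hs, ht]
      set w : V := k + ((m : ℚ) • e₁ + (n : ℚ) • e₁') + ((s : ℚ) • e₂ + (t : ℚ) • e₂') with hw
      have hb1' : B w e₁' = (m : ℚ) := by
        simp [hw, map_add, map_smul, h11, h1'1', h11', h21', h2'1', hk1']
      have hb2' : B w e₂' = (s : ℚ) := by
        simp [hw, map_add, map_smul, h12', h1'2', h22', h2'2', hk2']
      have hb1 : B w e₁ = (n : ℚ) := by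
        simp [hw, map_add, map_smul, h11, h1'1, h21, h2'1, hk1]
      have hb2 : B w e₂ = (t : ℚ) := by
        simp [hw, map_add, map_smul, h12, h1'2, h22, h2'2, hk2]
      rw [hb1', hb2', hb1, hb2]
      have : w - (m : ℚ) • e₁ - (s : ℚ) • e₂ - (n : ℚ) • e₁' - (t : ℚ) • e₂' = k := by
        rw [hw]; module
      rw [this]
      exact Submodule.subset_span hk
    | zero => simp
    | add a b _ _ ha hb =>
      have h : (a + b) - (B (a + b) e₁') • e₁ - (B (a + b) e₂') • e₂
            - (B (a + b) e₁) • e₁' - (B (a + b) e₂) • e₂'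
          = (a - (B a e₁') • e₁ - (B a e₂') • e₂ - (B a e₁) • e₁' - (B a e₂) • e₂')
          + (b - (B b e₁') • e₁ - (B b e₂') • e₂ - (B b e₁) • e₁' - (B b e₂) • e₂') := by
        simp only [map_add, LinearMap.add_apply]
        module
      rw [h]
      exact Submodule.add_mem _ ha hb
    | smul c a _ ha =>
      have h : (c • a) - (B (c • a) e₁') • e₁ - (B (c • a) e₂') • e₂
            - (B (c • a) e₁) • e₁' - (B (c • a) e₂) • e₂'
          = c • (a - (B a e₁') • e₁ - (B a e₂') • e₂ - (B a e₁) • e₁' - (B a e₂) • e₂') := by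
        simp only [map_smul, LinearMap.smul_apply, smul_eq_mul]
        module
      rw [h]
      exact Submodule.smul_mem _ c ha
  -- Part 2, ⊆ direction (also gives Part 3)
  have sub2 : dual B L ⊓ Submodule.restrictScalars ℤ (perp B U)
      ≤ dualIn B K ⊔ (dual B L ⊓ Submodule.restrictScalars ℤ U) := by
    intro x hx
    have hx' : x ∈ dual B (LH B L U) ⊓ Submodule.restrictScalars ℤ (perp B U) := part1 ▸ hx
    obtain ⟨hxd, hxp⟩ := Submodule.mem_inf.mp hx'
    have hxP : ∀ w ∈ U, B x w = 0 := hxp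
    obtain ⟨a, ha⟩ := hxd e₁' he₁'LH
    obtain ⟨b, hb⟩ := hxd e₂' he₂'LH
    have hx1 : B x e₁ = 0 := hxP e₁ he₁U
    have hx2 : B x e₂ = 0 := hxP e₂ he₂U
    set u : V := a • e₁ + b • e₂ with hu
    have hu' : u = ((a : ℚ)) • e₁ + ((b : ℚ)) • e₂ := by
      rw [hu, Int.cast_smul_eq_zsmul, Int.cast_smul_eq_zsmul]
    have huMem : u ∈ dual B L ⊓ Submodule.restrictScalars ℤ U := by
      refine Submodule.add_mem _ ?_ ?_
      · exact Submodule.smul_mem _ a (Submodule.mem_inf.mpr ⟨hLHdual e₁ he₁LH, he₁U⟩)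
      · exact Submodule.smul_mem _ b (Submodule.mem_inf.mpr ⟨hLHdual e₂ he₂LH, he₂U⟩)
    have hαspan : x - u ∈ Submodule.span ℚ (K : Set V) := by
      have heq : x - u
          = x - (B x e₁') • e₁ - (B x e₂') • e₂ - (B x e₁) • e₁' - (B x e₂) • e₂' := by
        rw [hx1, hx2, ha, hb, zero_smul, zero_smul, sub_zero, sub_zero, hu',
          sub_add_eq_sub_sub]
      rw [heq]
      exact keyf x
    have hαdual : x - u ∈ dual B K := by
      intro y hy
      obtain ⟨c, hc⟩ := hxd y (hKLH hy)
      refine ⟨c, ?_⟩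
      obtain ⟨hy1, hy2, hy1', hy2'⟩ := hKorth y hy
      have h1y : B e₁ y = 0 := (symmB e₁ y).trans hy1
      have h2y : B e₂ y = 0 := (symmB e₂ y).trans hy2
      have hBu : B u y = 0 := by
        rw [hu']
        simp [map_add, map_smul, h1y, h2y]
      rw [map_sub, LinearMap.sub_apply, hBu, sub_zero, hc]
    have hαmem : x - u ∈ dualIn B K := Submodule.mem_inf.mpr ⟨hαdual, hαspan⟩
    exact Submodule.mem_sup.mpr ⟨x - u, hαmem, u, huMem, sub_add_cancel x u⟩
  -- Part 2, ⊇ direction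
  have sup2 : dualIn B K ⊔ (dual B L ⊓ Submodule.restrictScalars ℤ U)
      ≤ dual B L ⊓ Submodule.restrictScalars ℤ (perp B U) := by
    apply sup_le
    · intro α hα
      obtain ⟨hαd, hαs⟩ := Submodule.mem_inf.mp hα
      have hαs' : α ∈ Submodule.span ℚ (K : Set V) := hαs
      have hα1 : B α e₁ = 0 := spanK_orth e₁ (fun k hk => (hKorth k hk).1) α hαs'
      have hα2 : B α e₂ = 0 := spanK_orth e₂ (fun k hk => (hKorth k hk).2.1) α hαs'
      have hα1' : B α e₁' = 0 := spanK_orth e₁' (fun k hk => (hKorth k hk).2.2.1) α hαs'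
      have hα2' : B α e₂' = 0 := spanK_orth e₂' (fun k hk => (hKorth k hk).2.2.2) α hαs'
      refine Submodule.mem_inf.mpr ⟨?_, ?_⟩
      · intro y hy
        have hyLH : y ∈ LH B L U := hLle hy
        rw [hdec] at hyLH
        rcases Submodule.mem_sup.mp hyLH with ⟨p, hp, q, hq, rfl⟩
        rcases Submodule.mem_sup.mp hp with ⟨k, hk, p₁, hp₁, rfl⟩
        rcases Submodule.mem_span_pair.mp hp₁ with ⟨m, n, rfl⟩
        rcases Submodule.mem_span_pair.mp hq with ⟨s, t, rfl⟩
        obtain ⟨c, hc⟩ := hαd k hk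
        refine ⟨c, ?_⟩
        simp [map_add, map_zsmul, hα1, hα2, hα1', hα2', hc]
      · intro w hw
        rw [hUspan] at hw
        rcases Submodule.mem_span_pair.mp hw with ⟨cc, dd, rfl⟩
        simp [map_add, map_smul, hα1, hα2]
    · intro u hu
      obtain ⟨hud, huU⟩ := Submodule.mem_inf.mp hu
      refine Submodule.mem_inf.mpr ⟨hud, ?_⟩
      intro w hw
      exact hUiso u huU w hw
  refine ⟨part1, le_antisymm sub2 sup2, ?_⟩
  intro x hx
  rcases Submodule.mem_sup.mp (sub2 hx) with ⟨α, hα, u, hu, h⟩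
  exact ⟨α, hα, u, hu, h.symm⟩

end RMV
end

section
/- Let L be an even lattice, λ ∈ L a primitive vector with (λ, λ) = 2d > 0, and write λ = mμ with m a positive integer and μ primitive in the dual lattice L'. Then m divides 2d. Moreover, if k and c are positive integers such that ckμ ∈ L and k²(μ, μ) = 2/c, then k divides 2 and dk divides m; consequently m = d or m = 2d, and if m = d then necessarily k = 1. -/
/-!
Statement 7: Let `L` be an even lattice, `λ ∈ L` primitive with `(λ,λ) = 2d > 0`, and
write `λ = mμ` with `m` a positive integer and `μ` primitive in the dual lattice `L'`.
Then `m ∣ 2d`.  Moreover if `k, c` are positive integers with `ckμ ∈ L` and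
`k²(μ,μ) = 2/c`, then `k ∣ 2` and `dk ∣ m`; consequently `m = d` or `m = 2d`, and if
`m = d` then necessarily `k = 1`.
-/

namespace RMV

variable {V : Type} [AddCommGroup V] [Module ℚ V]

/-- `x` is a primitive vector of the lattice `N`: it is not a proper integral
multiple of another vector of `N`. -/
def IsPrimitiveIn (N : Submodule ℤ V) (x : V) : Prop :=
  x ∈ N ∧ ∀ y ∈ N, ∀ n : ℤ, x = n • y → IsUnit n

/-!
Pairing `μ ∈ L'` with `λ = mμ ∈ L` gives the integer `(μ,λ) = m (μ,μ) = 2d / m`, so `m ∣ 2d`.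
Given `ckμ ∈ L`, Bézout puts `gcd(m, ck) μ` in `L`, and primitivity of `λ = mμ` forces
`m ∣ ck`, say `ck = ms`. Comparing `m² (μ,μ) = 2d` with `k² (μ,μ) = 2/c` gives
`m² = ck²d`, hence `m = dks`, and then `m ∣ 2d` says `ks ∣ 2`.
-/

theorem gcd_smul_mem {W : Type*} [AddCommGroup W] {N : Submodule ℤ W} {y : W} {a b : ℤ}
    (ha : a • y ∈ N) (hb : b • y ∈ N) : (Int.gcd a b : ℤ) • y ∈ N := by
  rw [Int.gcd_eq_gcd_ab, add_smul, mul_comm a, mul_comm b, mul_smul, mul_smul]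
  exact N.add_mem (N.smul_mem _ ha) (N.smul_mem _ hb)

theorem IsPrimitiveIn.dvd_of_smul_mem {W : Type} [AddCommGroup W] {N : Submodule ℤ W}
    {x y : W} {m n : ℤ} (hx : IsPrimitiveIn N x) (hxy : x = m • y) (hn : n • y ∈ N) : m ∣ n := by
  have hgm : (Int.gcd m n : ℤ) ∣ m := Int.gcd_dvd_left m n
  have hunit : IsUnit (m / Int.gcd m n) :=
    hx.2 _ (gcd_smul_mem (hxy ▸ hx.1) hn) _ (by rw [hxy, smul_smul, Int.ediv_mul_cancel hgm])
  rw [← Int.ediv_mul_cancel hgm, hunit.mul_left_dvd]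
  exact Int.gcd_dvd_right m n

theorem dvd_two_mul_of_mem_dual {B : V →ₗ[ℚ] V →ₗ[ℚ] ℚ} {L : Submodule ℤ V} {μ : V} {m d : ℤ}
    (hμ : μ ∈ dual B L) (hmμ : m • μ ∈ L) (hnorm : B (m • μ) (m • μ) = 2 * d) : m ∣ 2 * d := by
  obtain ⟨j, hj⟩ := hμ _ hmμ
  refine ⟨j, ?_⟩
  simp only [map_zsmul, LinearMap.smul_apply, zsmul_eq_mul] at hj hnorm
  rw [hj] at hnorm
  exact_mod_cast hnorm.symm

theorem divisibility_of_sq_eq {m d k c : ℤ} (hm : 0 < m) (hk : 0 < k) (hc : 0 < c)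
    (hsq : m ^ 2 = c * k ^ 2 * d) (hmck : m ∣ c * k) (hm2d : m ∣ 2 * d) :
    k ∣ 2 ∧ d * k ∣ m ∧ (m = d ∨ m = 2 * d) ∧ (m = d → k = 1) := by
  obtain ⟨s, hs⟩ := hmck
  have hs_pos : 0 < s := pos_of_mul_pos_right (hs ▸ mul_pos hc hk) hm.le
  have hmd : m = d * (k * s) :=
    mul_left_cancel₀ hm.ne' (by linear_combination hsq + d * k * hs)
  have hd : d ≠ 0 := by rintro rfl; omega
  have hks : k * s ∣ 2 := by
    rwa [hmd, mul_comm 2, mul_dvd_mul_iff_left hd] at hm2d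
  have hks_le : k * s ≤ 2 := Int.le_of_dvd two_pos hks
  have hks_pos : 0 < k * s := mul_pos hk hs_pos
  refine ⟨dvd_of_mul_right_dvd hks, ⟨s, by rw [hmd, mul_assoc]⟩, ?_, fun hmd' => ?_⟩
  · obtain h | h : k * s = 1 ∨ k * s = 2 := by omega
    · exact .inl (by rw [hmd, h, mul_one])
    · exact .inr (by rw [hmd, h, mul_comm])
  · have hks1 : k * s = 1 := mul_left_cancel₀ hd (by rw [← hmd, mul_one, hmd'])
    exact Int.eq_one_of_mul_eq_one_right hk.le hks1

theorem primitive_vector_divisibility_general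
    (V : Type) [AddCommGroup V] [Module ℚ V]
    (B : V →ₗ[ℚ] V →ₗ[ℚ] ℚ) (L : Submodule ℤ V)
    (lam mu : V) (d m : ℤ) (hm : 0 < m)
    (hlam : IsPrimitiveIn L lam)
    (hnorm : B lam lam = 2 * (d : ℚ))
    (hlm : lam = m • mu)
    (hmu : IsPrimitiveIn (dual B L) mu) :
    m ∣ 2 * d ∧
    ∀ k c : ℤ, 0 < k → 0 < c →
      (c * k) • mu ∈ L → (k : ℚ) ^ 2 * B mu mu = 2 / (c : ℚ) →
        (k ∣ 2 ∧ d * k ∣ m ∧ (m = d ∨ m = 2 * d) ∧ (m = d → k = 1)) := by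
  subst hlm
  have hm2d : m ∣ 2 * d := dvd_two_mul_of_mem_dual hmu.1 hlam.1 hnorm
  refine ⟨hm2d, fun k c hk hc hck hkμ => ?_⟩
  have hsq : (m : ℚ) ^ 2 = c * k ^ 2 * d := by
    have hc0 : (c : ℚ) ≠ 0 := by exact_mod_cast hc.ne'
    simp only [map_zsmul, LinearMap.smul_apply, zsmul_eq_mul] at hnorm
    field_simp at hkμ
    linear_combination (c * k ^ 2 / 2) * hnorm - (m ^ 2 / 2) * hkμ
  exact divisibility_of_sq_eq hm hk hc (by exact_mod_cast hsq) (hlam.dvd_of_smul_mem rfl hck) hm2d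

theorem primitive_vector_divisibility
    (V : Type) [AddCommGroup V] [Module ℚ V]
    (B : V →ₗ[ℚ] V →ₗ[ℚ] ℚ) (L : Submodule ℤ V)
    (hL : IsEvenLattice B L)
    (lam mu : V) (d m : ℤ) (hd : 0 < d) (hm : 0 < m)
    (hlam : IsPrimitiveIn L lam)
    (hnorm : B lam lam = 2 * (d : ℚ))
    (hlm : lam = m • mu)
    (hmu : IsPrimitiveIn (dual B L) mu) :
    m ∣ 2 * d ∧
    ∀ k c : ℤ, 0 < k → 0 < c →
      (c * k) • mu ∈ L → (k : ℚ) ^ 2 * B mu mu = 2 / (c : ℚ) →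
        (k ∣ 2 ∧ d * k ∣ m ∧ (m = d ∨ m = 2 * d) ∧ (m = d → k = 1)) :=
  primitive_vector_divisibility_general V B L lam mu d m hm hlam hnorm hlm hmu

end RMV
end

section
/- Let D be a finite abelian group and b : D × D → ℚ/ℤ a symmetric bilinear map which is nondegenerate, i.e., if b(x, y) = 0 for all y ∈ D then x = 0. For an integer c set D_c = {x ∈ D : cx = 0} and D^c = cD = {cx : x ∈ D}. Then D^c is exactly the orthogonal complement of D_c, i.e., D^c = {y ∈ D : b(x, y) = 0 for all x ∈ D_c}. -/
/-!
Since `ℚ/ℤ` embeds into `ℂˣ`, a finite abelian group `D` has at most `|D|` homomorphisms to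
`ℚ/ℤ`; so the injective map `x ↦ b(x, ·)` given by nondegeneracy is a bijection onto the dual.
Then `cD ⊆ D_cᗮ` is bilinearity, and conversely if `y ∉ cD`, a character of `D/cD` not vanishing
at `y` is `b(z, ·)` for some `z`, which lies in `D_c` because `b(cz, ·) = b(z, c ·)` vanishes;
hence `b(z, y) ≠ 0` and `y ∉ D_cᗮ`.
-/

namespace RMV

/-- The group `ℚ/ℤ`. -/
abbrev QmodZ : Type := ℚ ⧸ AddSubgroup.zmultiples (1 : ℚ)

noncomputable def qmodZToAddCircle : QmodZ →+ AddCircle (1 : ℝ) :=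
  QuotientAddGroup.map _ _ (Rat.castHom ℝ).toAddMonoidHom <| by
    rintro _ ⟨n, rfl⟩
    exact ⟨n, by simp⟩

theorem qmodZToAddCircle_injective : Function.Injective qmodZToAddCircle := by
  rw [injective_iff_map_eq_zero]
  intro q hq
  induction q using QuotientAddGroup.induction_on with | H q => ?_
  obtain ⟨n, hn⟩ := (AddCircle.coe_eq_zero_iff (1 : ℝ)).mp hq
  refine (AddCircle.coe_eq_zero_iff (1 : ℚ)).mpr ⟨n, ?_⟩
  have hn' : ((n : ℚ) : ℝ) = (q : ℝ) := by simpa using hn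
  simpa using Rat.cast_injective hn'

noncomputable def qmodZAddChar : AddChar QmodZ ℂ :=
  (Circle.coeHom.compAddChar AddCircle.toCircle_addChar).compAddMonoidHom qmodZToAddCircle

theorem qmodZAddChar_injective : Function.Injective qmodZAddChar :=
  Subtype.val_injective.comp <| (AddCircle.injective_toCircle one_ne_zero).comp
    qmodZToAddCircle_injective

theorem compAddMonoidHom_qmodZAddChar_injective (D : Type*) [AddCommGroup D] :
    Function.Injective fun f : D →+ QmodZ => qmodZAddChar.compAddMonoidHom f :=
  fun _ _ hfg => AddMonoidHom.ext fun x => qmodZAddChar_injective (DFunLike.congr_fun hfg x)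

instance (D : Type*) [AddCommGroup D] [Finite D] : Finite (D →+ QmodZ) :=
  Finite.of_injective _ (compAddMonoidHom_qmodZAddChar_injective D)

theorem card_addMonoidHom_qmodZ_le (D : Type*) [AddCommGroup D] [Finite D] :
    Nat.card (D →+ QmodZ) ≤ Nat.card D := by
  have : Fintype D := Fintype.ofFinite D
  calc Nat.card (D →+ QmodZ) ≤ Nat.card (AddChar D ℂ) :=
        Nat.card_le_card_of_injective _ (compAddMonoidHom_qmodZAddChar_injective D)
    _ ≤ Nat.card D := by
        simpa only [Nat.card_eq_fintype_card] using AddChar.card_addChar_le D ℂ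

theorem bijective_of_injective_of_finite {D : Type*} [AddCommGroup D] [Finite D]
    {B : D →+ D →+ QmodZ} (hB : Function.Injective B) : Function.Bijective B :=
  hB.bijective_of_nat_card_le (card_addMonoidHom_qmodZ_le D)

theorem exists_eq_zsmul_iff_of_bijective {D E : Type*} [AddCommGroup D] [AddCommGroup E]
    {B : D →+ E →+ QmodZ} (hB : Function.Bijective B) (c : ℤ) (y : E) :
    (∃ x, y = c • x) ↔ ∀ x, c • x = 0 → B x y = 0 := by
  constructor
  · rintro ⟨x', rfl⟩ x hx
    rw [map_zsmul, ← AddMonoidHom.zsmul_apply, ← map_zsmul, hx, map_zero, AddMonoidHom.zero_apply]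
  · intro hy
    by_contra hne
    set H := (zsmulAddGroupHom c : E →+ E).range
    have hyH : (y : E ⧸ H) ≠ 0 := by
      rw [Ne, QuotientAddGroup.eq_zero_iff]
      rintro ⟨x, hx⟩
      exact hne ⟨x, hx.symm⟩
    obtain ⟨χ, hχ⟩ : ∃ χ : E ⧸ H →+ QmodZ, χ y ≠ 0 :=
      CharacterModule.exists_character_apply_ne_zero_of_ne_zero hyH
    obtain ⟨z, hz⟩ := hB.2 (χ.comp (QuotientAddGroup.mk' H))
    have hcz : c • z = 0 := hB.1 <| by
      ext x
      rw [map_zsmul, AddMonoidHom.zsmul_apply, ← map_zsmul, hz, map_zero, AddMonoidHom.zero_apply]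
      have hcx : c • x ∈ H := ⟨x, rfl⟩
      rw [AddMonoidHom.comp_apply, QuotientAddGroup.mk'_apply,
        (QuotientAddGroup.eq_zero_iff _).2 hcx, map_zero]
    have hzy := hy z hcz
    rw [hz, AddMonoidHom.comp_apply, QuotientAddGroup.mk'_apply] at hzy
    exact hχ hzy

theorem image_eq_orthogonal_complement_of_torsion_general
    (D : Type) [AddCommGroup D] [Finite D]
    (b : D → D → QmodZ)
    (haddl : ∀ x y z : D, b (x + y) z = b x z + b y z)
    (haddr : ∀ x y z : D, b x (y + z) = b x y + b x z)
    (hnondeg : ∀ x : D, (∀ y : D, b x y = 0) → x = 0)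
    (c : ℤ) :
    ∀ y : D, (∃ x : D, y = c • x) ↔ (∀ x : D, c • x = 0 → b x y = 0) := by
  let B : D →+ D →+ QmodZ :=
    AddMonoidHom.mk' (fun x => AddMonoidHom.mk' (b x) (haddr x))
      fun x x' => AddMonoidHom.ext (haddl x x')
  have hB : Function.Injective B :=
    (injective_iff_map_eq_zero B).2 fun x hx => hnondeg x (DFunLike.congr_fun hx)
  exact exists_eq_zsmul_iff_of_bijective (bijective_of_injective_of_finite hB) c

theorem image_eq_orthogonal_complement_of_torsion
    (D : Type) [AddCommGroup D] [Finite D]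
    (b : D → D → QmodZ)
    (haddl : ∀ x y z : D, b (x + y) z = b x z + b y z)
    (haddr : ∀ x y z : D, b x (y + z) = b x y + b x z)
    (hsymm : ∀ x y : D, b x y = b y x)
    (hnondeg : ∀ x : D, (∀ y : D, b x y = 0) → x = 0)
    (c : ℤ) :
    ∀ y : D, (∃ x : D, y = c • x) ↔ (∀ x : D, c • x = 0 → b x y = 0) :=
  image_eq_orthogonal_complement_of_torsion_general D b haddl haddr hnondeg c

end RMV
end

section
/- Let V be a finite-dimensional vector space over 𝔽₂, B : V × V → 𝔽₂ a bilinear map, and U a subset of V. For γ₁, …, γ_n ∈ V and b₁, …, b_n ∈ 𝔽₂ set c(γ₁,…,γ_n; b₁,…,b_n) = |{μ ∈ U : B(μ, γ_i) = b_i for i = 1,…,n}|. Then for every n ≥ 1 the following identity of rational numbers holds: c(γ₁,…,γ_n; b₁,…,b_n) = 2^{1−n} · Σ_{∅ ≠ S ⊆ {1,…,n}} (−1)^{|S|+1} c(γ_S; b_S + ε_S), where γ_S = Σ_{i∈S} γ_i, b_S = Σ_{i∈S} b_i, and ε_S = 1 ∈ 𝔽₂ if |S| is even and ε_S = 0 if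 |S| is odd. -/
namespace RMV

/-- The sign character on `ZMod 2`, valued in `ℚ`. -/
def chi (x : ZMod 2) : ℚ := if x = 0 then 1 else -1

lemma chi_zero : chi 0 = 1 := rfl

lemma zmod2_cases : ∀ x : ZMod 2, x = 0 ∨ x = 1 := by decide

lemma chi_add : ∀ x y : ZMod 2, chi (x + y) = chi x * chi y := by
  have h11 : (1:ZMod 2) + 1 = 0 := by decide
  have h10 : (1:ZMod 2) ≠ 0 := by decide
  intro x y
  rcases zmod2_cases x with rfl | rfl <;> rcases zmod2_cases y with rfl | rfl <;>
    simp [chi, h11, h10]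

lemma chi_sum {ι : Type*} (f : ι → ZMod 2) (S : Finset ι) :
    chi (∑ i ∈ S, f i) = ∏ i ∈ S, chi (f i) := by
  classical
  induction S using Finset.cons_induction with
  | empty => simp [chi_zero]
  | cons a s ha ih => rw [Finset.sum_cons, Finset.prod_cons, chi_add, ih]

lemma ind_eq (x e : ZMod 2) : (if x = e then (1:ℚ) else 0) = (1 + chi e * chi x) / 2 := by
  have h10 : (1:ZMod 2) ≠ 0 := by decide
  rcases zmod2_cases x with rfl | rfl <;> rcases zmod2_cases e with rfl | rfl <;>
    norm_num [chi, h10]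

lemma key (n : ℕ) (hn : 1 ≤ n) (f : Fin n → ZMod 2) :
    (if ∀ i, f i = 0 then (1:ℚ) else 0)
      = (2:ℚ) ^ ((1:ℤ) - (n:ℤ)) *
        ∑ S ∈ Finset.univ.filter (fun S : Finset (Fin n) => S.Nonempty),
          (-1:ℚ) ^ (S.card + 1) *
            (if (∑ i ∈ S, f i) = (if Even S.card then (1:ZMod 2) else 0) then (1:ℚ) else 0) := by
  classical
  have hterm : ∀ S : Finset (Fin n),
      (-1:ℚ) ^ (S.card + 1) *
        (if (∑ i ∈ S, f i) = (if Even S.card then (1:ZMod 2) else 0) then (1:ℚ) else 0)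
      = ((-1:ℚ) ^ (S.card + 1) + ∏ i ∈ S, chi (f i)) / 2 := by
    intro S
    rw [ind_eq, chi_sum]
    have hchie : chi (if Even S.card then (1:ZMod 2) else 0) = (-1:ℚ) ^ (S.card + 1) := by
      by_cases h : Even S.card
      · rw [if_pos h, Odd.neg_one_pow (by simpa using h.add_one)]
        norm_num [chi]
      · rw [if_neg h, Even.neg_one_pow (by simpa using (Nat.not_even_iff_odd.mp h).add_one)]
        norm_num [chi]
    rw [hchie]
    have hsq : (-1:ℚ) ^ (S.card + 1) * (-1:ℚ) ^ (S.card + 1) = 1 := by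
      rw [← pow_add, ← two_mul, pow_mul]
      norm_num
    field_simp
    ring_nf
    linear_combination (∏ i ∈ S, chi (f i)) * hsq
  rw [Finset.sum_congr rfl fun S _ => hterm S]
  have hfilter : Finset.univ.filter (fun S : Finset (Fin n) => S.Nonempty)
      = (Finset.univ : Finset (Finset (Fin n))).erase ∅ := by
    ext S; simp [Finset.nonempty_iff_ne_empty]
  rw [hfilter, Finset.sum_erase_eq_sub (Finset.mem_univ ∅)]
  have h0 : ((-1:ℚ) ^ ((∅ : Finset (Fin n)).card + 1) + ∏ i ∈ (∅ : Finset (Fin n)), chi (f i)) / 2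
      = 0 := by simp
  rw [h0, sub_zero]
  have hsplit : ∑ S : Finset (Fin n),
      ((-1:ℚ) ^ (S.card + 1) + ∏ i ∈ S, chi (f i)) / 2
      = ((∑ S : Finset (Fin n), (-1:ℚ) ^ (S.card + 1))
          + ∑ S : Finset (Fin n), ∏ i ∈ S, chi (f i)) / 2 := by
    rw [← Finset.sum_add_distrib, Finset.sum_div]
  rw [hsplit]
  -- alternating sum vanishes
  have hne : (Finset.univ : Finset (Fin n)).Nonempty := by
    have : Nonempty (Fin n) := ⟨⟨0, hn⟩⟩
    exact Finset.univ_nonempty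
  have halt : (∑ S : Finset (Fin n), (-1:ℚ) ^ (S.card + 1)) = 0 := by
    have hZ : (∑ m ∈ (Finset.univ : Finset (Fin n)).powerset, (-1:ℤ) ^ m.card) = 0 :=
      Finset.sum_powerset_neg_one_pow_card_of_nonempty hne
    have hQ : (∑ S : Finset (Fin n), (-1:ℚ) ^ S.card) = 0 := by
      have := congrArg (fun z : ℤ => (z : ℚ)) hZ
      push_cast at this
      simpa [Finset.powerset_univ] using this
    calc (∑ S : Finset (Fin n), (-1:ℚ) ^ (S.card + 1))
        = ∑ S : Finset (Fin n), (-1) * (-1:ℚ) ^ S.card := by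
          refine Finset.sum_congr rfl fun S _ => ?_
          ring
      _ = (-1) * ∑ S : Finset (Fin n), (-1:ℚ) ^ S.card := by rw [Finset.mul_sum]
      _ = 0 := by rw [hQ, mul_zero]
  rw [halt, zero_add]
  -- the product expansion
  have hprod : (∑ S : Finset (Fin n), ∏ i ∈ S, chi (f i))
      = ∏ i : Fin n, (chi (f i) + 1) := by
    rw [Finset.prod_add]
    rw [Finset.powerset_univ]
    refine (Finset.sum_congr rfl fun S _ => ?_).symm
    simp
  rw [hprod]
  have hfac : ∀ i : Fin n, chi (f i) + 1 = if f i = 0 then (2:ℚ) else 0 := by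
    intro i
    by_cases h : f i = 0 <;> simp [chi, h] <;> norm_num
  rw [Finset.prod_congr rfl fun i _ => hfac i]
  by_cases h : ∀ i, f i = 0
  · rw [if_pos h]
    have : (∏ i : Fin n, if f i = 0 then (2:ℚ) else 0) = 2 ^ n := by
      rw [Finset.prod_congr rfl fun i _ => if_pos (h i)]
      simp
    rw [this]
    have h2 : (2:ℚ) ^ n = (2:ℚ) ^ (n:ℤ) := (zpow_natCast 2 n).symm
    have he : (1:ℤ) - n + n = 1 := by ring
    rw [h2, ← mul_div_assoc, ← zpow_add₀ (by norm_num : (2:ℚ) ≠ 0), he]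
    norm_num
  · rw [if_neg h]
    push_neg at h
    obtain ⟨i, hi⟩ := h
    have : (∏ i : Fin n, if f i = 0 then (2:ℚ) else 0) = 0 :=
      Finset.prod_eq_zero (Finset.mem_univ i) (if_neg hi)
    rw [this]
    simp

theorem counting_reduction_formula
    (V : Type) [AddCommGroup V] [Module (ZMod 2) V] [FiniteDimensional (ZMod 2) V]
    [DecidableEq V]
    (B : V → V → ZMod 2)
    (haddl : ∀ x y z : V, B (x + y) z = B x z + B y z)
    (haddr : ∀ x y z : V, B x (y + z) = B x y + B x z)
    (U : Finset V)
    (n : ℕ) (hn : 1 ≤ n)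
    (γ : Fin n → V) (bv : Fin n → ZMod 2) :
    ((U.filter fun μ => ∀ i : Fin n, B μ (γ i) = bv i).card : ℚ)
      = (2 : ℚ) ^ ((1 : ℤ) - (n : ℤ)) *
        ∑ S ∈ Finset.univ.filter (fun S : Finset (Fin n) => S.Nonempty),
          (-1 : ℚ) ^ (S.card + 1) *
            ((U.filter fun μ =>
                B μ (∑ i ∈ S, γ i)
                  = (∑ i ∈ S, bv i) + (if Even S.card then 1 else 0)).card : ℚ) := by
  classical
  have hB0 : ∀ μ : V, B μ 0 = 0 := by
    intro μ
    have h := haddr μ 0 0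
    rw [add_zero] at h
    exact (left_eq_add.mp h)
  have hBsum : ∀ (μ : V) (S : Finset (Fin n)),
      B μ (∑ i ∈ S, γ i) = ∑ i ∈ S, B μ (γ i) := by
    intro μ S
    induction S using Finset.cons_induction with
    | empty => simpa using hB0 μ
    | cons a s ha ih => rw [Finset.sum_cons, Finset.sum_cons, haddr, ih]
  have hz : ∀ x y e : ZMod 2, (x = y + e) ↔ (x + y = e) := by decide
  have hz0 : ∀ x y : ZMod 2, (x = y) ↔ (x + y = 0) := by decide
  have hL : ((U.filter fun μ => ∀ i : Fin n, B μ (γ i) = bv i).card : ℚ)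
      = ∑ μ ∈ U, (if ∀ i : Fin n, B μ (γ i) + bv i = 0 then (1:ℚ) else 0) := by
    rw [Finset.card_filter]
    push_cast
    exact Finset.sum_congr rfl fun μ _ =>
      if_congr (forall_congr' fun i => hz0 _ _) rfl rfl
  have hR : ∀ S : Finset (Fin n),
      ((U.filter fun μ =>
          B μ (∑ i ∈ S, γ i)
            = (∑ i ∈ S, bv i) + (if Even S.card then 1 else 0)).card : ℚ)
      = ∑ μ ∈ U, (if (∑ i ∈ S, (B μ (γ i) + bv i))
            = (if Even S.card then (1:ZMod 2) else 0) then (1:ℚ) else 0) := by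
    intro S
    rw [Finset.card_filter]
    push_cast
    refine Finset.sum_congr rfl fun μ _ => if_congr ?_ rfl rfl
    rw [hBsum μ S, Finset.sum_add_distrib]
    exact hz _ _ _
  rw [hL]
  calc ∑ μ ∈ U, (if ∀ i : Fin n, B μ (γ i) + bv i = 0 then (1:ℚ) else 0)
      = ∑ μ ∈ U, (2:ℚ) ^ ((1:ℤ) - (n:ℤ)) *
          ∑ S ∈ Finset.univ.filter (fun S : Finset (Fin n) => S.Nonempty),
            (-1:ℚ) ^ (S.card + 1) *
              (if (∑ i ∈ S, (B μ (γ i) + bv i))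
                  = (if Even S.card then (1:ZMod 2) else 0) then (1:ℚ) else 0) :=
        Finset.sum_congr rfl fun μ _ => key n hn (fun i => B μ (γ i) + bv i)
    _ = (2:ℚ) ^ ((1:ℤ) - (n:ℤ)) *
          ∑ μ ∈ U, ∑ S ∈ Finset.univ.filter (fun S : Finset (Fin n) => S.Nonempty),
            (-1:ℚ) ^ (S.card + 1) *
              (if (∑ i ∈ S, (B μ (γ i) + bv i))
                  = (if Even S.card then (1:ZMod 2) else 0) then (1:ℚ) else 0) := by
        rw [Finset.mul_sum]
    _ = (2:ℚ) ^ ((1:ℤ) - (n:ℤ)) *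
          ∑ S ∈ Finset.univ.filter (fun S : Finset (Fin n) => S.Nonempty),
            ∑ μ ∈ U, (-1:ℚ) ^ (S.card + 1) *
              (if (∑ i ∈ S, (B μ (γ i) + bv i))
                  = (if Even S.card then (1:ZMod 2) else 0) then (1:ℚ) else 0) := by
        rw [Finset.sum_comm]
    _ = (2 : ℚ) ^ ((1 : ℤ) - (n : ℤ)) *
        ∑ S ∈ Finset.univ.filter (fun S : Finset (Fin n) => S.Nonempty),
          (-1 : ℚ) ^ (S.card + 1) *
            ((U.filter fun μ =>
                B μ (∑ i ∈ S, γ i)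
                  = (∑ i ∈ S, bv i) + (if Even S.card then 1 else 0)).card : ℚ) := by
        congr 1
        refine Finset.sum_congr rfl fun S _ => ?_
        rw [← Finset.mul_sum, hR S]

end RMV
end

section
/- If γ₁, γ₂ ∈ U satisfy B(γ₁, γ₂) = 1, then γ₁ + γ₂ ∈ U. -/
namespace RMV

/-- The polarization `B(x,y) = Q(x+y) + Q(x) + Q(y)` of the quadratic form `Q`. -/
def polar2 {V : Type} [AddCommGroup V] (Q : V → ZMod 2) (x y : V) : ZMod 2 :=
  Q (x + y) + Q x + Q y

/-- The sign character `(-1)^t` on `ZMod 2`, valued in `ℤ`. -/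
def sgn : ZMod 2 → ℤ := fun t => if t = 0 then 1 else -1

lemma sgn_add : ∀ s t : ZMod 2, sgn (s + t) = sgn s * sgn t := by decide

lemma sgn_zero : sgn 0 = 1 := rfl

lemma sgn_one : sgn 1 = -1 := rfl

theorem sum_of_two_mem
    (V : Type) [AddCommGroup V] [Module (ZMod 2) V] [Fintype V] [DecidableEq V]
    -- `V` is 10-dimensional over `𝔽₂`
    (hdim : Module.finrank (ZMod 2) V = 10)
    -- `Q` is a quadratic form with bilinear polarization `B = polar2 Q`
    (Q : V → ZMod 2) (hQ0 : Q 0 = 0)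
    (hbil : ∀ x y z : V, polar2 Q (x + y) z = polar2 Q x z + polar2 Q y z)
    -- `B` is nondegenerate
    (hnondeg : ∀ x : V, (∀ y : V, polar2 Q x y = 0) → x = 0)
    -- `Q` is of minus type
    (hminus : (Finset.univ.filter fun x : V => Q x = 0).card = 496)
    -- `U` is a subset of `{x : Q x = 1}` satisfying the four counting conditions
    (U : Finset V) (hUQ : ∀ x ∈ U, Q x = 1)
    (h66 : ∀ γ : V, γ = 0 → (U.filter fun x => polar2 Q x γ = 0).card = 66)
    (h34 : ∀ γ : V, Q γ = 0 → γ ≠ 0 → (U.filter fun x => polar2 Q x γ = 0).card = 34)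
    (h46 : ∀ γ : V, Q γ = 1 → γ ∈ U → (U.filter fun x => polar2 Q x γ = 0).card = 46)
    (h30 : ∀ γ : V, Q γ = 1 → γ ∉ U → (U.filter fun x => polar2 Q x γ = 0).card = 30) :
    ∀ γ₁ ∈ U, ∀ γ₂ ∈ U, polar2 Q γ₁ γ₂ = 1 → γ₁ + γ₂ ∈ U := by
  -- basic ZMod 2 facts
  have hchar2 : ∀ t : ZMod 2, t + t = 0 := by decide
  have hz2 : ∀ t : ZMod 2, t ≠ 0 → t = 1 := by decide
  -- characteristic 2 on V
  have hVchar : ∀ x : V, x + x = 0 := by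
    intro x
    have h : (2 : ZMod 2) • x = x + x := two_smul _ x
    rw [show (2 : ZMod 2) = 0 by decide, zero_smul] at h
    exact h.symm
  -- symmetry of polar2
  have hsymm : ∀ x y : V, polar2 Q x y = polar2 Q y x := by
    intro x y
    unfold polar2
    rw [add_comm x y]
    ring
  -- polar2 vanishes with 0 in either slot
  have hzleft : ∀ γ : V, polar2 Q 0 γ = 0 := by
    intro γ
    unfold polar2
    rw [zero_add, hQ0, add_zero]
    exact hchar2 _
  have hzright : ∀ γ : V, polar2 Q γ 0 = 0 := fun γ => (hsymm γ 0).trans (hzleft γ)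
  -- bilinearity in second slot
  have hbil2 : ∀ x y z : V, polar2 Q x (y + z) = polar2 Q x y + polar2 Q x z := by
    intro x y z
    rw [hsymm x (y + z), hbil, hsymm y x, hsymm z x]
  -- |U| = 66
  have hU66 : U.card = 66 := by
    have h := h66 0 rfl
    rwa [Finset.filter_true_of_mem (fun x _ => hzright x)] at h
  -- |V| = 1024
  have hcardV : Fintype.card V = 1024 := by
    have b := Module.finBasis (ZMod 2) V
    have h := Module.card_fintype b
    simpa [hdim] using h
  -- orthogonality relation
  have horth : ∀ v : V, (∑ γ : V, sgn (polar2 Q v γ)) = if v = 0 then 1024 else 0 := by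
    intro v
    by_cases hv : v = 0
    · subst hv
      rw [if_pos rfl]
      have e : ∀ γ ∈ (Finset.univ : Finset V), sgn (polar2 Q 0 γ) = 1 := by
        intro γ _
        rw [hzleft γ, sgn_zero]
      rw [Finset.sum_congr rfl e, Finset.sum_const, Finset.card_univ, hcardV]
      norm_num
    · rw [if_neg hv]
      obtain ⟨γ₀, hγ₀⟩ : ∃ γ₀, polar2 Q v γ₀ ≠ 0 := by
        by_contra h
        push_neg at h
        exact hv (hnondeg v h)
      have hγ₀1 : polar2 Q v γ₀ = 1 := hz2 _ hγ₀
      have key : (∑ γ : V, sgn (polar2 Q v γ)) = ∑ γ : V, sgn (polar2 Q v (γ + γ₀)) :=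
        (Fintype.sum_equiv (Equiv.addRight γ₀) _ _ (fun γ => rfl)).symm
      have key2 : ∀ γ ∈ (Finset.univ : Finset V),
          sgn (polar2 Q v (γ + γ₀)) = - sgn (polar2 Q v γ) := by
        intro γ _
        rw [hbil2, hγ₀1, sgn_add, sgn_one]
        ring
      rw [Finset.sum_congr rfl key2, Finset.sum_neg_distrib] at key
      linarith
  -- the Fourier coefficient expressed via the filter cards
  have hf : ∀ γ : V, (∑ x ∈ U, sgn (polar2 Q x γ)) =
      2 * ((U.filter fun x => polar2 Q x γ = 0).card : ℤ) - 66 := by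
    intro γ
    have e1 : ∀ x ∈ U.filter (fun x => polar2 Q x γ = 0), sgn (polar2 Q x γ) = 1 := by
      intro x hx
      rw [(Finset.mem_filter.mp hx).2, sgn_zero]
    have e2 : ∀ x ∈ U.filter (fun x => ¬ polar2 Q x γ = 0), sgn (polar2 Q x γ) = -1 := by
      intro x hx
      unfold sgn
      rw [if_neg (Finset.mem_filter.mp hx).2]
    rw [← Finset.sum_filter_add_sum_filter_not U (fun x => polar2 Q x γ = 0),
      Finset.sum_congr rfl e1, Finset.sum_congr rfl e2, Finset.sum_const, Finset.sum_const]
    have h3 := Finset.card_filter_add_card_filter_not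
      (s := U) (fun x => polar2 Q x γ = 0)
    rw [hU66] at h3
    simp only [nsmul_eq_mul, mul_one, mul_neg]
    omega
  -- values on the four classes
  have hf0 : (∑ x ∈ U, sgn (polar2 Q x (0 : V))) = 66 := by
    rw [hf, h66 0 rfl]; norm_num
  have hfQ0 : ∀ γ : V, Q γ = 0 → γ ≠ 0 → (∑ x ∈ U, sgn (polar2 Q x γ)) = 2 := by
    intro γ h1 h2; rw [hf, h34 γ h1 h2]; norm_num
  have hfU : ∀ γ : V, γ ∈ U → (∑ x ∈ U, sgn (polar2 Q x γ)) = 26 := by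
    intro γ hγ; rw [hf, h46 γ (hUQ γ hγ) hγ]; norm_num
  have hfN : ∀ γ : V, Q γ = 1 → γ ∉ U → (∑ x ∈ U, sgn (polar2 Q x γ)) = -6 := by
    intro γ h1 h2; rw [hf, h30 γ h1 h2]; norm_num
  -- the big sum, evaluated by classes
  have h0mem : (0 : V) ∈ Finset.univ.filter (fun γ : V => Q γ = 0) := by
    simp [hQ0]
  have hUsub : U ⊆ Finset.univ.filter (fun γ : V => ¬ Q γ = 0) := by
    intro x hx
    simp only [Finset.mem_filter, Finset.mem_univ, true_and]
    rw [hUQ x hx]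
    decide
  have hcard1 : (Finset.univ.filter (fun γ : V => ¬ Q γ = 0)).card = 528 := by
    have h := Finset.card_filter_add_card_filter_not
      (s := (Finset.univ : Finset V)) (fun γ : V => Q γ = 0)
    rw [hminus, Finset.card_univ, hcardV] at h
    omega
  have hS3 : (∑ γ : V, (∑ x ∈ U, sgn (polar2 Q x γ)) ^ 3) = 1351680 := by
    rw [← Finset.sum_filter_add_sum_filter_not Finset.univ (fun γ : V => Q γ = 0)]
    have hA : ∑ γ ∈ Finset.univ.filter (fun γ : V => Q γ = 0),
        (∑ x ∈ U, sgn (polar2 Q x γ)) ^ 3 = 291456 := by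
      rw [← Finset.add_sum_erase _ _ h0mem, hf0]
      have e : ∀ γ ∈ (Finset.univ.filter (fun γ : V => Q γ = 0)).erase 0,
          (∑ x ∈ U, sgn (polar2 Q x γ)) ^ 3 = 2 ^ 3 := by
        intro γ hγ
        obtain ⟨hne, hmem⟩ := Finset.mem_erase.mp hγ
        rw [hfQ0 γ (Finset.mem_filter.mp hmem).2 hne]
      rw [Finset.sum_congr rfl e, Finset.sum_const, Finset.card_erase_of_mem h0mem, hminus]
      norm_num
    have hB : ∑ γ ∈ Finset.univ.filter (fun γ : V => ¬ Q γ = 0),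
        (∑ x ∈ U, sgn (polar2 Q x γ)) ^ 3 = 1060224 := by
      rw [← Finset.sum_sdiff hUsub]
      have e1 : ∀ γ ∈ Finset.univ.filter (fun γ : V => ¬ Q γ = 0) \ U,
          (∑ x ∈ U, sgn (polar2 Q x γ)) ^ 3 = (-6) ^ 3 := by
        intro γ hγ
        obtain ⟨hmem, hnotU⟩ := Finset.mem_sdiff.mp hγ
        rw [hfN γ (hz2 _ (Finset.mem_filter.mp hmem).2) hnotU]
      have e2 : ∀ γ ∈ U, (∑ x ∈ U, sgn (polar2 Q x γ)) ^ 3 = 26 ^ 3 := by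
        intro γ hγ
        rw [hfU γ hγ]
      rw [Finset.sum_congr rfl e1, Finset.sum_congr rfl e2, Finset.sum_const, Finset.sum_const,
        Finset.card_sdiff_of_subset hUsub, hcard1, hU66]
      norm_num
    rw [hA, hB]
    norm_num
  -- expand the cube
  have hcube : ∀ γ : V, (∑ x ∈ U, sgn (polar2 Q x γ)) ^ 3 =
      ∑ a ∈ U, ∑ b ∈ U, ∑ c ∈ U, sgn (polar2 Q (a + b + c) γ) := by
    intro γ
    have step : ∀ a ∈ U,
        sgn (polar2 Q a γ) * ∑ b ∈ U, ∑ c ∈ U, sgn (polar2 Q b γ) * sgn (polar2 Q c γ) =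
          ∑ b ∈ U, ∑ c ∈ U, sgn (polar2 Q (a + b + c) γ) := by
      intro a _
      rw [Finset.mul_sum]
      refine Finset.sum_congr rfl fun b _ => ?_
      rw [Finset.mul_sum]
      refine Finset.sum_congr rfl fun c _ => ?_
      rw [← sgn_add, ← sgn_add]
      congr 1
      rw [hbil, hbil]
      ring
    calc (∑ x ∈ U, sgn (polar2 Q x γ)) ^ 3
        = ∑ a ∈ U, sgn (polar2 Q a γ) *
            ∑ b ∈ U, ∑ c ∈ U, sgn (polar2 Q b γ) * sgn (polar2 Q c γ) := by
          rw [← Finset.sum_mul_sum, ← Finset.sum_mul]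
          ring
      _ = ∑ a ∈ U, ∑ b ∈ U, ∑ c ∈ U, sgn (polar2 Q (a + b + c) γ) :=
          Finset.sum_congr rfl step
  -- apply orthogonality
  have innersum : ∀ a b : V, (∑ c ∈ U, ∑ γ : V, sgn (polar2 Q (a + b + c) γ)) =
      1024 * (if a + b ∈ U then (1 : ℤ) else 0) := by
    intro a b
    have e : ∀ c ∈ U, (∑ γ : V, sgn (polar2 Q (a + b + c) γ)) =
        if c = a + b then (1024 : ℤ) else 0 := by
      intro c _
      rw [horth]
      refine if_congr ?_ rfl rfl
      constructor
      · intro h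
        have h2 : a + b + (a + b + c) = a + b + 0 := by rw [h]
        rw [add_zero, ← add_assoc, hVchar (a + b), zero_add] at h2
        exact h2
      · intro h
        rw [h]
        exact hVchar (a + b)
    rw [Finset.sum_congr rfl e, Finset.sum_ite_eq' U (a + b) (fun _ => (1024 : ℤ))]
    split <;> norm_num
  have hS3' : (∑ γ : V, (∑ x ∈ U, sgn (polar2 Q x γ)) ^ 3) =
      1024 * ∑ a ∈ U, ∑ b ∈ U, (if a + b ∈ U then (1 : ℤ) else 0) := by
    calc (∑ γ : V, (∑ x ∈ U, sgn (polar2 Q x γ)) ^ 3)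
        = ∑ γ : V, ∑ a ∈ U, ∑ b ∈ U, ∑ c ∈ U, sgn (polar2 Q (a + b + c) γ) :=
          Finset.sum_congr rfl fun γ _ => hcube γ
      _ = ∑ a ∈ U, ∑ b ∈ U, ∑ c ∈ U, ∑ γ : V, sgn (polar2 Q (a + b + c) γ) := by
          rw [Finset.sum_comm]
          refine Finset.sum_congr rfl fun a _ => ?_
          rw [Finset.sum_comm]
          refine Finset.sum_congr rfl fun b _ => ?_
          rw [Finset.sum_comm]
      _ = ∑ a ∈ U, ∑ b ∈ U, 1024 * (if a + b ∈ U then (1 : ℤ) else 0) :=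
          Finset.sum_congr rfl fun a _ => Finset.sum_congr rfl fun b _ => innersum a b
      _ = 1024 * ∑ a ∈ U, ∑ b ∈ U, (if a + b ∈ U then (1 : ℤ) else 0) := by
          rw [Finset.mul_sum]
          exact Finset.sum_congr rfl fun a _ => (Finset.mul_sum _ _ _).symm
  -- first count: pairs with sum in U
  have hcount1 : (∑ a ∈ U, ∑ b ∈ U, (if a + b ∈ U then (1 : ℤ) else 0)) = 1320 := by
    have h := hS3.symm.trans hS3'
    linarith
  -- second count: pairs with B = 1
  have hcount2 : (∑ a ∈ U, ∑ b ∈ U, (if polar2 Q a b = 1 then (1 : ℤ) else 0)) = 1320 := by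
    rw [Finset.sum_comm]
    have inner : ∀ b ∈ U,
        (∑ a ∈ U, (if polar2 Q a b = 1 then (1 : ℤ) else 0)) = 20 := by
      intro b hb
      rw [Finset.sum_boole]
      have heq : (U.filter fun a => polar2 Q a b = 1) =
          (U.filter fun a => ¬ polar2 Q a b = 0) := by
        apply Finset.filter_congr
        intro a _
        constructor
        · intro h
          rw [h]
          decide
        · intro h
          exact hz2 _ h
      have h3 := Finset.card_filter_add_card_filter_not
        (s := U) (fun a => polar2 Q a b = 0)
      rw [h46 b (hUQ b hb) hb, hU66] at h3
      have h4 : (Finset.filter (fun a => ¬ polar2 Q a b = 0) U).card = 20 := by omega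
      rw [heq, h4]
      norm_num
    rw [Finset.sum_congr rfl inner, Finset.sum_const, hU66]
    norm_num
  -- pointwise: a + b ∈ U → polar2 Q a b = 1
  have hpoint : ∀ a ∈ U, ∀ b ∈ U, a + b ∈ U → polar2 Q a b = 1 := by
    intro a ha b hb hab
    have h : polar2 Q a b = Q (a + b) + Q a + Q b := rfl
    rw [h, hUQ _ hab, hUQ _ ha, hUQ _ hb]
    decide
  -- conclude
  intro γ₁ hγ₁ γ₂ hγ₂ hB
  by_contra hnot
  have hle : ∀ p ∈ U ×ˢ U,
      (0 : ℤ) ≤ (if polar2 Q p.1 p.2 = 1 then (1 : ℤ) else 0) -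
        (if p.1 + p.2 ∈ U then (1 : ℤ) else 0) := by
    intro p hp
    obtain ⟨hp1, hp2⟩ := Finset.mem_product.mp hp
    by_cases h : p.1 + p.2 ∈ U
    · rw [if_pos h, if_pos (hpoint _ hp1 _ hp2 h)]
      norm_num
    · rw [if_neg h]
      split <;> norm_num
  have hsumzero : (∑ p ∈ U ×ˢ U,
      ((if polar2 Q p.1 p.2 = 1 then (1 : ℤ) else 0) -
        (if p.1 + p.2 ∈ U then (1 : ℤ) else 0))) = 0 := by
    rw [Finset.sum_sub_distrib, Finset.sum_product, Finset.sum_product]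
    rw [hcount1, hcount2]
    ring
  have hall := (Finset.sum_eq_zero_iff_of_nonneg hle).mp hsumzero
  have hmem : (γ₁, γ₂) ∈ U ×ˢ U := Finset.mem_product.mpr ⟨hγ₁, hγ₂⟩
  have hcontr := hall (γ₁, γ₂) hmem
  simp only [hB, if_pos rfl, if_neg hnot] at hcontr
  norm_num at hcontr

end RMV
end

section
/- If γ₁, γ₂, γ₃ ∈ U are pairwise distinct and pairwise orthogonal (B(γ_i, γ_j) = 0 for all i ≠ j), then γ₁ + γ₂ + γ₃ ∉ U. -/
namespace RMV

theorem sum_of_three_not_mem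
    (V : Type) [AddCommGroup V] [Module (ZMod 2) V] [Fintype V] [DecidableEq V]
    -- `V` is 10-dimensional over `𝔽₂`
    (hdim : Module.finrank (ZMod 2) V = 10)
    -- `Q` is a quadratic form with bilinear polarization `B = polar2 Q`
    (Q : V → ZMod 2) (hQ0 : Q 0 = 0)
    (hbil : ∀ x y z : V, polar2 Q (x + y) z = polar2 Q x z + polar2 Q y z)
    -- `B` is nondegenerate
    (hnondeg : ∀ x : V, (∀ y : V, polar2 Q x y = 0) → x = 0)
    -- `Q` is of minus type
    (hminus : (Finset.univ.filter fun x : V => Q x = 0).card = 496)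
    -- `U` is a subset of `{x : Q x = 1}` satisfying the four counting conditions
    (U : Finset V) (hUQ : ∀ x ∈ U, Q x = 1)
    (h66 : ∀ γ : V, γ = 0 → (U.filter fun x => polar2 Q x γ = 0).card = 66)
    (h34 : ∀ γ : V, Q γ = 0 → γ ≠ 0 → (U.filter fun x => polar2 Q x γ = 0).card = 34)
    (h46 : ∀ γ : V, Q γ = 1 → γ ∈ U → (U.filter fun x => polar2 Q x γ = 0).card = 46)
    (h30 : ∀ γ : V, Q γ = 1 → γ ∉ U → (U.filter fun x => polar2 Q x γ = 0).card = 30) :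
    ∀ γ₁ ∈ U, ∀ γ₂ ∈ U, ∀ γ₃ ∈ U,
      γ₁ ≠ γ₂ → γ₁ ≠ γ₃ → γ₂ ≠ γ₃ →
      polar2 Q γ₁ γ₂ = 0 → polar2 Q γ₁ γ₃ = 0 → polar2 Q γ₂ γ₃ = 0 →
      γ₁ + γ₂ + γ₃ ∉ U := by
  intro γ₁ h₁ γ₂ h₂ γ₃ h₃ h12 h13 h23 o12 o13 o23 hmem
  have hsymm : ∀ x y : V, polar2 Q x y = polar2 Q y x := by
    intro x y; unfold polar2; rw [add_comm x y]; ring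
  have hbil2 : ∀ x y z : V, polar2 Q x (y + z) = polar2 Q x y + polar2 Q x z := by
    intro x y z
    rw [hsymm x (y + z), hbil, hsymm y x, hsymm z x]
  have hQadd : ∀ x y : V, Q (x + y) = Q x + Q y + polar2 Q x y := by
    intro x y; unfold polar2
    generalize Q (x + y) = u
    generalize Q x = v
    generalize Q y = w
    revert u v w; decide
  have hxx : ∀ x : V, x + x = 0 := by
    intro x
    calc x + x = (2 : ZMod 2) • x := by rw [two_smul]
      _ = 0 := by rw [show (2 : ZMod 2) = 0 by decide, zero_smul]
  have hQ1 : Q γ₁ = 1 := hUQ _ h₁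
  have hQ2 : Q γ₂ = 1 := hUQ _ h₂
  have hQ3 : Q γ₃ = 1 := hUQ _ h₃
  have hQ12 : Q (γ₁ + γ₂) = 0 := by rw [hQadd, hQ1, hQ2, o12]; decide
  have hQ13 : Q (γ₁ + γ₃) = 0 := by rw [hQadd, hQ1, hQ3, o13]; decide
  have hQ23 : Q (γ₂ + γ₃) = 0 := by rw [hQadd, hQ2, hQ3, o23]; decide
  have hcancel : ∀ x y : V, x + y = 0 → x = y := by
    intro x y h
    calc x = x + (y + y) := by rw [hxx, add_zero]
      _ = (x + y) + y := by rw [add_assoc]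
      _ = y := by rw [h, zero_add]
  have hne12 : γ₁ + γ₂ ≠ 0 := fun h => h12 (hcancel _ _ h)
  have hne13 : γ₁ + γ₃ ≠ 0 := fun h => h13 (hcancel _ _ h)
  have hne23 : γ₂ + γ₃ ≠ 0 := fun h => h23 (hcancel _ _ h)
  have hQγ : Q (γ₁ + γ₂ + γ₃) = 1 := by
    rw [hQadd (γ₁ + γ₂) γ₃, hQ12, hQ3, hbil, o13, o23]; decide
  -- counts
  have h2Z : ∀ a : ZMod 2, a + a = 0 := by decide
  have c0 : U.card = 66 := by
    have h := h66 0 rfl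
    rwa [Finset.filter_true_of_mem] at h
    intro x _
    unfold polar2
    rw [add_zero, hQ0, add_zero]
    exact h2Z _
  have c1 := h46 γ₁ hQ1 h₁
  have c2 := h46 γ₂ hQ2 h₂
  have c3 := h46 γ₃ hQ3 h₃
  have c12 := h34 (γ₁ + γ₂) hQ12 hne12
  have c13 := h34 (γ₁ + γ₃) hQ13 hne13
  have c23 := h34 (γ₂ + γ₃) hQ23 hne23
  have c123 := h46 (γ₁ + γ₂ + γ₃) hQγ hmem
  simp only [hbil2] at c12 c13 c23 c123
  have key : ∀ x ∈ U,
      ((if polar2 Q x γ₁ = 0 then 1 else 0)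
        + (if polar2 Q x γ₂ = 0 then 1 else 0)
        + (if polar2 Q x γ₃ = 0 then 1 else 0)
        + (if polar2 Q x γ₁ + polar2 Q x γ₂ + polar2 Q x γ₃ = 0 then 1 else 0) : ℕ)
      ≤ 1 + (if polar2 Q x γ₁ + polar2 Q x γ₂ = 0 then 1 else 0)
        + (if polar2 Q x γ₁ + polar2 Q x γ₃ = 0 then 1 else 0)
        + (if polar2 Q x γ₂ + polar2 Q x γ₃ = 0 then 1 else 0) := by
    intro x _
    generalize polar2 Q x γ₁ = u
    generalize polar2 Q x γ₂ = v
    generalize polar2 Q x γ₃ = w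
    revert u v w; decide
  have hle := Finset.sum_le_sum key
  simp only [Finset.sum_add_distrib, ← Finset.card_filter, Finset.sum_const,
    smul_eq_mul, mul_one] at hle
  rw [c1, c2, c3, c123, c12, c13, c23, c0] at hle
  omega

end RMV
end

section
/- There exists an isometry φ of (V, Q), i.e., an 𝔽₂-linear bijection φ : V → V with Q ∘ φ = Q, such that φ(U) ∩ U = ∅. -/
set_option linter.unusedSectionVars false

namespace RMV

/-- The sign character of `ZMod 2`. -/
def χ : ZMod 2 → ℤ := fun a => if a = 0 then 1 else -1

lemma χ_add (a b : ZMod 2) : χ (a + b) = χ a * χ b := by revert a b; decide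

lemma zmod2_cases_s15 (a : ZMod 2) : a = 0 ∨ a = 1 := by revert a; decide

lemma χ_sum {ι : Type*} (s : Finset ι) (g : ι → ZMod 2) :
    χ (∑ i ∈ s, g i) = ∏ i ∈ s, χ (g i) := by
  classical
  induction s using Finset.cons_induction with
  | empty => simp [χ]
  | cons a t ha ih => rw [Finset.sum_cons, Finset.prod_cons, χ_add, ih]

lemma sum_chi {α : Type*} [DecidableEq α] (s : Finset α) (g : α → ZMod 2) :
    ∑ x ∈ s, χ (g x)
      = ((s.filter fun x => g x = 0).card : ℤ) - ((s.filter fun x => ¬ g x = 0).card : ℤ) := by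
  classical
  rw [← Finset.sum_filter_add_sum_filter_not s (fun x => g x = 0)]
  have e1 : ∀ x ∈ s.filter (fun x => g x = 0), χ (g x) = 1 := by
    intro x hx; rw [(Finset.mem_filter.1 hx).2]; simp [χ]
  have e2 : ∀ x ∈ s.filter (fun x => ¬ g x = 0), χ (g x) = -1 := by
    intro x hx
    rcases zmod2_cases_s15 (g x) with h' | h'
    · exact absurd h' (Finset.mem_filter.1 hx).2
    · rw [h']; simp [χ]
  rw [Finset.sum_congr rfl e1, Finset.sum_congr rfl e2, Finset.sum_const, Finset.sum_const]
  simp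
  ring

section Aux

variable {V : Type} [AddCommGroup V] [Module (ZMod 2) V] [Fintype V] [DecidableEq V]

/-- Bundle of all hypotheses. -/
structure Hyp (Q : V → ZMod 2) (U : Finset V) : Prop where
  hdim : Module.finrank (ZMod 2) V = 10
  hQ0 : Q 0 = 0
  hbil : ∀ x y z : V, polar2 Q (x + y) z = polar2 Q x z + polar2 Q y z
  hnondeg : ∀ x : V, (∀ y : V, polar2 Q x y = 0) → x = 0
  hminus : (Finset.univ.filter fun x : V => Q x = 0).card = 496
  hUQ : ∀ x ∈ U, Q x = 1
  h66 : ∀ γ : V, γ = 0 → (U.filter fun x => polar2 Q x γ = 0).card = 66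
  h34 : ∀ γ : V, Q γ = 0 → γ ≠ 0 → (U.filter fun x => polar2 Q x γ = 0).card = 34
  h46 : ∀ γ : V, Q γ = 1 → γ ∈ U → (U.filter fun x => polar2 Q x γ = 0).card = 46
  h30 : ∀ γ : V, Q γ = 1 → γ ∉ U → (U.filter fun x => polar2 Q x γ = 0).card = 30

variable {Q : V → ZMod 2} {U : Finset V}

lemma addself (x : V) : x + x = 0 := by
  have : x + x = (2 : ZMod 2) • x := by
    rw [show (2 : ZMod 2) = 1 + 1 from rfl, add_smul, one_smul]
  rw [this, show (2 : ZMod 2) = 0 from rfl, zero_smul]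

namespace Hyp
variable (h : Hyp Q U)
include h

lemma Bsymm (x y : V) : polar2 Q x y = polar2 Q y x := by
  unfold polar2; rw [add_comm x y]; ring

lemma Bxx (x : V) : polar2 Q x x = 0 := by
  unfold polar2
  rw [addself, h.hQ0]
  exact (by decide : ∀ a : ZMod 2, 0 + a + a = 0) (Q x)

lemma Bx0 (x : V) : polar2 Q x 0 = 0 := by
  unfold polar2
  rw [add_zero, h.hQ0]
  exact (by decide : ∀ a : ZMod 2, a + a + 0 = 0) (Q x)

lemma B0x (x : V) : polar2 Q 0 x = 0 := by rw [h.Bsymm, h.Bx0]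

lemma Badd_left (x y z : V) : polar2 Q (x + y) z = polar2 Q x z + polar2 Q y z :=
  h.hbil x y z

lemma Badd_right (x y z : V) : polar2 Q x (y + z) = polar2 Q x y + polar2 Q x z := by
  rw [h.Bsymm, h.hbil, h.Bsymm y x, h.Bsymm z x]

lemma Qadd (x y : V) : Q (x + y) = Q x + Q y + polar2 Q x y := by
  unfold polar2
  exact ((by decide : ∀ a b c : ZMod 2, a + b + (c + a + b) = c) (Q x) (Q y) (Q (x+y))).symm

lemma Bsmul (x : V) (a : ZMod 2) (y : V) : polar2 Q x (a • y) = a * polar2 Q x y := by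
  rcases zmod2_cases_s15 a with ha | ha <;> subst ha
  · rw [zero_smul, h.Bx0, zero_mul]
  · rw [one_smul, one_mul]

/-- sum of B over a finite family in the right slot -/
lemma Bsum_right {ι : Type*} (x : V) (s : Finset ι) (v : ι → V) :
    polar2 Q x (∑ i ∈ s, v i) = ∑ i ∈ s, polar2 Q x (v i) := by
  classical
  induction s using Finset.cons_induction with
  | empty => simpa using h.Bx0 x
  | cons a t ha ih => rw [Finset.sum_cons, Finset.sum_cons, h.Badd_right, ih]

lemma Bsum_left {ι : Type*} (x : V) (s : Finset ι) (v : ι → V) :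
    polar2 Q (∑ i ∈ s, v i) x = ∑ i ∈ s, polar2 Q (v i) x := by
  rw [h.Bsymm, h.Bsum_right]
  exact Finset.sum_congr rfl fun i _ => h.Bsymm x (v i)


end Hyp

/-- The Fourier coefficient `û(γ) = Σ_{x∈U} (-1)^{B(x,γ)}`. -/
def uhat (Q : V → ZMod 2) (U : Finset V) (γ : V) : ℤ :=
  ∑ x ∈ U, χ (polar2 Q x γ)

namespace Hyp
variable (h : Hyp Q U)
include h

lemma Ucard : U.card = 66 := by
  have h0 := h.h66 0 rfl
  rwa [Finset.filter_true_of_mem (fun x _ => h.Bx0 x)] at h0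

lemma zeroNotMem : (0 : V) ∉ U := by
  intro h0
  have := h.hUQ 0 h0
  rw [h.hQ0] at this
  exact (by decide : (0 : ZMod 2) ≠ 1) this

lemma uhat_filter (γ : V) :
    uhat Q U γ = 2 * ((U.filter fun x => polar2 Q x γ = 0).card : ℤ) - 66 := by
  classical
  unfold uhat
  rw [sum_chi U (fun x => polar2 Q x γ)]
  have e3 : (U.filter fun x => polar2 Q x γ = 0).card
      + (U.filter fun x => ¬ polar2 Q x γ = 0).card = 66 := by
    rw [← h.Ucard]
    exact Finset.card_filter_add_card_filter_not (fun x => polar2 Q x γ = 0)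
  omega

lemma uhat0 : uhat Q U 0 = 66 := by
  rw [h.uhat_filter, h.h66 0 rfl]; norm_num

lemma uhatU {γ : V} (hγ : γ ∈ U) : uhat Q U γ = 26 := by
  rw [h.uhat_filter, h.h46 γ (h.hUQ γ hγ) hγ]; norm_num

lemma uhatA {γ : V} (hγ : Q γ = 1) (hγ' : γ ∉ U) : uhat Q U γ = -6 := by
  rw [h.uhat_filter, h.h30 γ hγ hγ']; norm_num

lemma uhatZ {γ : V} (hγ : Q γ = 0) (hγ' : γ ≠ 0) : uhat Q U γ = 2 := by
  rw [h.uhat_filter, h.h34 γ hγ hγ']; norm_num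

/-- the four classes are exhaustive -/
lemma uhat_cases (γ : V) :
    (γ = 0 ∧ uhat Q U γ = 66) ∨ (γ ∈ U ∧ uhat Q U γ = 26) ∨
    (Q γ = 1 ∧ γ ∉ U ∧ uhat Q U γ = -6) ∨ (Q γ = 0 ∧ γ ≠ 0 ∧ uhat Q U γ = 2) := by
  by_cases h0 : γ = 0
  · exact Or.inl ⟨h0, by rw [h0]; exact h.uhat0⟩
  by_cases hU : γ ∈ U
  · exact Or.inr (Or.inl ⟨hU, h.uhatU hU⟩)
  rcases zmod2_cases_s15 (Q γ) with hq | hq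
  · exact Or.inr (Or.inr (Or.inr ⟨hq, h0, h.uhatZ hq h0⟩))
  · exact Or.inr (Or.inr (Or.inl ⟨hq, hU, h.uhatA hq hU⟩))

lemma cardV : Fintype.card V = 1024 := by
  have := Module.card_eq_pow_finrank (K := ZMod 2) (V := V)
  rwa [ZMod.card, h.hdim] at this

/-- T1 : the Gauss sum -/
lemma gauss : ∑ x : V, χ (Q x) = -32 := by
  classical
  rw [sum_chi Finset.univ Q]
  have e3 : (Finset.univ.filter fun x : V => Q x = 0).card
      + (Finset.univ.filter fun x : V => ¬ Q x = 0).card = 1024 := by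
    have := Finset.card_filter_add_card_filter_not (s := (Finset.univ : Finset V))
      (p := fun x => Q x = 0)
    rwa [Finset.card_univ, h.cardV] at this
  rw [h.hminus]
  rw [h.hminus] at e3
  omega

/-- T0 : sum of a nontrivial character vanishes -/
lemma charsum_zero {w : V} (hw : w ≠ 0) : ∑ γ : V, χ (polar2 Q w γ) = 0 := by
  classical
  have hex : ∃ γ₀ : V, polar2 Q w γ₀ ≠ 0 := by
    by_contra hc
    push_neg at hc
    exact hw (h.hnondeg w hc)
  obtain ⟨γ₀, hγ₀⟩ := hex
  have hγ₀1 : polar2 Q w γ₀ = 1 := by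
    rcases zmod2_cases_s15 (polar2 Q w γ₀) with h' | h'
    · exact absurd h' hγ₀
    · exact h'
  have key : ∑ γ : V, χ (polar2 Q w γ) = ∑ γ : V, χ (polar2 Q w (γ + γ₀)) := by
    exact (Fintype.sum_equiv (Equiv.addRight γ₀) _ _ (fun γ => rfl)).symm
  have key2 : ∀ γ : V, χ (polar2 Q w (γ + γ₀)) = - χ (polar2 Q w γ) := by
    intro γ
    rw [h.Badd_right, χ_add, hγ₀1]
    simp [χ]
  rw [Finset.sum_congr rfl (fun γ _ => key2 γ)] at key
  rw [Finset.sum_neg_distrib] at key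
  omega

/-- T2 : twisted Gauss sum -/
lemma gauss_twist (v : V) : ∑ γ : V, χ (Q γ + polar2 Q v γ) = -32 * χ (Q v) := by
  classical
  have key : ∑ γ : V, χ (Q γ + polar2 Q v γ)
      = ∑ γ : V, χ (Q (γ + v) + polar2 Q v (γ + v)) := by
    exact (Fintype.sum_equiv (Equiv.addRight v) _ _ (fun γ => rfl)).symm
  have key2 : ∀ γ : V, χ (Q (γ + v) + polar2 Q v (γ + v)) = χ (Q v) * χ (Q γ) := by
    intro γ
    have e1 : Q (γ + v) = Q γ + Q v + polar2 Q γ v := h.Qadd γ v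
    have e2 : polar2 Q v (γ + v) = polar2 Q v γ + polar2 Q v v := h.Badd_right v γ v
    rw [e1, e2, h.Bxx, h.Bsymm γ v, add_zero]
    rw [show Q γ + Q v + polar2 Q v γ + polar2 Q v γ
        = Q v + (Q γ + (polar2 Q v γ + polar2 Q v γ)) from by ring]
    rw [(by decide : ∀ a : ZMod 2, a + a = 0) (polar2 Q v γ), add_zero, χ_add]
  rw [Finset.sum_congr rfl (fun γ _ => key2 γ), ← Finset.mul_sum, h.gauss] at key
  rw [key]; ring


lemma uhat_sq (γ : V) : (uhat Q U γ)^2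
    = 20 - 16 * χ (Q γ) + (if γ ∈ U then 640 else 0) + (if γ = 0 then 4352 else 0) := by
  rcases h.uhat_cases γ with ⟨h0, hu⟩ | ⟨hU, hu⟩ | ⟨hq, hU, hu⟩ | ⟨hq, h0, hu⟩
  · subst h0
    rw [hu, if_neg h.zeroNotMem, if_pos rfl, h.hQ0]
    norm_num [χ]
  · have h0 : γ ≠ 0 := fun hc => h.zeroNotMem (hc ▸ hU)
    rw [hu, if_pos hU, if_neg h0, h.hUQ γ hU]
    norm_num [χ]
  · have h0 : γ ≠ 0 := by
      intro hc; rw [hc, h.hQ0] at hq; exact (by decide : (0:ZMod 2) ≠ 1) hq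
    rw [hu, if_neg hU, if_neg h0, hq]
    norm_num [χ]
  · have hU : γ ∉ U := by
      intro hc; rw [h.hUQ γ hc] at hq; exact (by decide : (1:ZMod 2) ≠ 0) hq
    rw [hu, if_neg hU, if_neg h0, hq]
    norm_num [χ]

lemma closure {x y : V} (hx : x ∈ U) (hy : y ∈ U) (hQ : Q (x + y) = 1) : x + y ∈ U := by
  classical
  by_contra hv
  set v := x + y with hvdef
  have hv0 : v ≠ 0 := by
    intro hc; rw [hc, h.hQ0] at hQ; exact (by decide : (0:ZMod 2) ≠ 1) hQ
  -- the Parseval sum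
  set S := ∑ γ : V, (uhat Q U γ)^2 * χ (polar2 Q v γ) with hSdef
  -- evaluate S via the pointwise decomposition : S = 0
  have hS0 : S = 0 := by
    have dec : ∀ γ : V, (uhat Q U γ)^2 * χ (polar2 Q v γ)
        = 20 * χ (polar2 Q v γ) - 16 * (χ (Q γ) * χ (polar2 Q v γ))
          + (if γ ∈ U then 640 * χ (polar2 Q v γ) else 0)
          + (if γ = 0 then 4352 * χ (polar2 Q v γ) else 0) := by
      intro γ
      rw [h.uhat_sq γ]
      by_cases h0' : γ = 0
      · subst h0'
        rw [if_neg h.zeroNotMem, if_neg h.zeroNotMem, if_pos rfl, if_pos rfl]; ring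
      · rw [if_neg h0', if_neg h0']
        by_cases hU' : γ ∈ U
        · rw [if_pos hU', if_pos hU']; ring
        · rw [if_neg hU', if_neg hU']; ring
    rw [hSdef, Finset.sum_congr rfl (fun γ _ => dec γ)]
    rw [Finset.sum_add_distrib, Finset.sum_add_distrib, Finset.sum_sub_distrib]
    have A1 : ∑ γ : V, 20 * χ (polar2 Q v γ) = 0 := by
      rw [← Finset.mul_sum, h.charsum_zero hv0, mul_zero]
    have A2 : ∑ γ : V, 16 * (χ (Q γ) * χ (polar2 Q v γ)) = -512 * χ (Q v) := by
      rw [← Finset.mul_sum]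
      have e : ∀ γ : V, χ (Q γ) * χ (polar2 Q v γ) = χ (Q γ + polar2 Q v γ) :=
        fun γ => (χ_add _ _).symm
      rw [Finset.sum_congr rfl (fun γ _ => e γ), h.gauss_twist v]; ring
    have A3 : ∑ γ : V, (if γ ∈ U then 640 * χ (polar2 Q v γ) else 0)
        = 640 * uhat Q U v := by
      rw [Finset.sum_ite_mem, Finset.univ_inter, ← Finset.mul_sum]
      congr 1
      exact Finset.sum_congr rfl (fun γ _ => congrArg χ (h.Bsymm v γ))
    have A4 : ∑ γ : V, (if γ = 0 then 4352 * χ (polar2 Q v γ) else 0) = 4352 := by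
      rw [Finset.sum_ite_eq' Finset.univ (0 : V) (fun γ => 4352 * χ (polar2 Q v γ))]
      rw [if_pos (Finset.mem_univ 0), h.Bx0]
      norm_num [χ]
    rw [A1, A2, A3, A4, h.uhatA hQ hv, hQ]
    norm_num [χ]
  -- evaluate S as a positive sum : contradiction
  have key : ∀ γ : V, (uhat Q U γ)^2 * χ (polar2 Q v γ)
      = ∑ a ∈ U, ∑ b ∈ U, χ (polar2 Q (a + b + v) γ) := by
    intro γ
    unfold uhat
    rw [pow_two, Finset.sum_mul_sum]
    rw [Finset.sum_mul]
    refine Finset.sum_congr rfl (fun a _ => ?_)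
    rw [Finset.sum_mul]
    refine Finset.sum_congr rfl (fun b _ => ?_)
    rw [h.Badd_left (a + b) v γ, h.Badd_left a b γ, χ_add, χ_add]
  have hSpos : S = ∑ a ∈ U, ∑ b ∈ U, (if a + b + v = 0 then (1024:ℤ) else 0) := by
    rw [hSdef, Finset.sum_congr rfl (fun γ _ => key γ)]
    rw [Finset.sum_comm]
    refine Finset.sum_congr rfl (fun a _ => ?_)
    rw [Finset.sum_comm]
    refine Finset.sum_congr rfl (fun b _ => ?_)
    by_cases hz : a + b + v = 0
    · rw [if_pos hz, hz]
      rw [Finset.sum_congr rfl (fun γ _ => by rw [h.B0x γ])]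
      simp [χ, Finset.card_univ, h.cardV]
    · rw [if_neg hz, h.charsum_zero hz]
  have ite_nonneg : ∀ (w : V), (0:ℤ) ≤ (if w = 0 then (1024:ℤ) else 0) := by
    intro w
    by_cases hw : w = 0
    · rw [if_pos hw]; norm_num
    · rw [if_neg hw]
  have term_pos : ∀ a ∈ U, (0:ℤ) ≤ ∑ b ∈ U, (if a + b + v = 0 then (1024:ℤ) else 0) := by
    intro a _
    exact Finset.sum_nonneg (fun b _ => ite_nonneg (a + b + v))
  have hxy : ∑ b ∈ U, (if x + b + v = 0 then (1024:ℤ) else 0) ≥ 1024 := by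
    have h1 : x + y + v = 0 := by rw [← hvdef, addself]
    calc ∑ b ∈ U, (if x + b + v = 0 then (1024:ℤ) else 0)
        ≥ (if x + y + v = 0 then (1024:ℤ) else 0) :=
          Finset.single_le_sum (f := fun b => (if x + b + v = 0 then (1024:ℤ) else 0))
            (fun b _ => ite_nonneg (x + b + v)) hy
      _ = 1024 := by rw [if_pos h1]
  have : (1024:ℤ) ≤ S := by
    rw [hSpos]
    calc (1024:ℤ) ≤ ∑ b ∈ U, (if x + b + v = 0 then (1024:ℤ) else 0) := hxy
      _ ≤ ∑ a ∈ U, ∑ b ∈ U, (if a + b + v = 0 then (1024:ℤ) else 0) :=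
          Finset.single_le_sum term_pos hx
  omega

lemma closureB {x y : V} (hx : x ∈ U) (hy : y ∈ U) (hB : polar2 Q x y = 1) : x + y ∈ U := by
  apply h.closure hx hy
  rw [h.Qadd, h.hUQ x hx, h.hUQ y hy, hB]
  decide


/-- expansion of Q on sums of pairwise non-orthogonal norm-1 vectors -/
lemma Qsum {ι : Type*} [DecidableEq ι] (s : Finset ι) (v : ι → V)
    (h1 : ∀ i ∈ s, Q (v i) = 1)
    (hB : ∀ i ∈ s, ∀ j ∈ s, i ≠ j → polar2 Q (v i) (v j) = 1) :
    Q (∑ i ∈ s, v i) = (s.card : ZMod 2) + ((s.card.choose 2 : ℕ) : ZMod 2) := by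
  classical
  induction s using Finset.cons_induction with
  | empty => simpa using h.hQ0
  | cons a t ha ih =>
    rw [Finset.sum_cons, h.Qadd, h.Bsum_right]
    have hQa : Q (v a) = 1 := h1 a (Finset.mem_cons_self a t)
    have hBa : ∀ j ∈ t, polar2 Q (v a) (v j) = 1 := fun j hj =>
      hB a (Finset.mem_cons_self a t) j (Finset.mem_cons_of_mem hj)
        (fun hc => ha (hc ▸ hj))
    rw [Finset.sum_congr rfl hBa, Finset.sum_const, nsmul_eq_mul, mul_one]
    rw [ih (fun i hi => h1 i (Finset.mem_cons_of_mem hi))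
      (fun i hi j hj hij => hB i (Finset.mem_cons_of_mem hi) j (Finset.mem_cons_of_mem hj) hij)]
    rw [Finset.card_cons]
    have hch : ((t.card + 1).choose 2 : ℕ) = t.card.choose 2 + t.card := by
      rw [Nat.choose_succ_succ, Nat.choose_one_right, Nat.add_comm]
    rw [hQa, hch]
    push_cast
    generalize (t.card : ZMod 2) = c
    generalize ((t.card.choose 2 : ℕ) : ZMod 2) = d
    exact (by decide : ∀ c d : ZMod 2, 1 + (c + d) + c = c + 1 + (d + c)) c d

/-- the Fourier fiber-counting identity -/
lemma fiber {k : ℕ} (u : Fin k → V) (ε : Fin k → ZMod 2) :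
    (2^k : ℤ) * ((U.filter fun x => ∀ i, polar2 Q x (u i) = ε i).card : ℤ)
    = ∑ s ∈ (Finset.univ : Finset (Fin k)).powerset,
        χ (∑ i ∈ s, ε i) * uhat Q U (∑ i ∈ s, u i) := by
  classical
  have main : ∀ x : V, (∏ i : Fin k, (1 + χ (polar2 Q x (u i) + ε i)))
      = if (∀ i, polar2 Q x (u i) = ε i) then (2^k : ℤ) else 0 := by
    intro x
    by_cases hx : ∀ i, polar2 Q x (u i) = ε i
    · rw [if_pos hx]
      have e : ∀ i ∈ (Finset.univ : Finset (Fin k)), (1 + χ (polar2 Q x (u i) + ε i)) = 2 := by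
        intro i _
        rw [hx i, (by decide : ∀ a : ZMod 2, a + a = 0) (ε i)]
        simp [χ]
      rw [Finset.prod_congr rfl e, Finset.prod_const, Finset.card_univ, Fintype.card_fin]
    · rw [if_neg hx]
      push_neg at hx
      obtain ⟨i0, hi0⟩ := hx
      apply Finset.prod_eq_zero (Finset.mem_univ i0)
      have : χ (polar2 Q x (u i0) + ε i0) = -1 := by
        have hne : polar2 Q x (u i0) + ε i0 ≠ 0 := by
          intro hc
          apply hi0
          have := congrArg (fun a => a + ε i0) hc
          simpa [add_assoc, (by decide : ∀ a : ZMod 2, a + a = 0) (ε i0)] using this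
        rcases zmod2_cases_s15 (polar2 Q x (u i0) + ε i0) with h' | h'
        · exact absurd h' hne
        · rw [h']; simp [χ]
      rw [this]; ring
  have exp : ∀ x : V, (∏ i : Fin k, (1 + χ (polar2 Q x (u i) + ε i)))
      = ∑ s ∈ (Finset.univ : Finset (Fin k)).powerset,
          χ (∑ i ∈ s, ε i) * χ (polar2 Q x (∑ i ∈ s, u i)) := by
    intro x
    have e0 : ∀ i ∈ (Finset.univ : Finset (Fin k)),
        (1 + χ (polar2 Q x (u i) + ε i)) = χ (polar2 Q x (u i) + ε i) + 1 := by
      intro i _; ring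
    rw [Finset.prod_congr rfl e0]
    rw [Finset.prod_add (fun i => χ (polar2 Q x (u i) + ε i)) (fun _ => (1:ℤ)) Finset.univ]
    refine Finset.sum_congr rfl (fun s hs => ?_)
    rw [Finset.prod_const_one, mul_one]
    rw [← χ_sum s (fun i => polar2 Q x (u i) + ε i)]
    rw [Finset.sum_add_distrib]
    rw [χ_add, ← h.Bsum_right]
    ring
  have big : ∑ x ∈ U, (∏ i : Fin k, (1 + χ (polar2 Q x (u i) + ε i)))
      = (2^k : ℤ) * ((U.filter fun x => ∀ i, polar2 Q x (u i) = ε i).card : ℤ) := by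
    rw [Finset.sum_congr rfl (fun x _ => main x)]
    rw [Finset.sum_ite, Finset.sum_const, Finset.sum_const_zero, add_zero]
    rw [nsmul_eq_mul]; ring
  rw [← big, Finset.sum_congr rfl (fun x _ => exp x), Finset.sum_comm]
  refine Finset.sum_congr rfl (fun s hs => ?_)
  rw [← Finset.mul_sum]
  rfl


/-- expansion of Q on sums of pairwise orthogonal vectors -/
lemma Qsum0 {ι : Type*} [DecidableEq ι] (s : Finset ι) (v : ι → V)
    (hB : ∀ i ∈ s, ∀ j ∈ s, i ≠ j → polar2 Q (v i) (v j) = 0) :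
    Q (∑ i ∈ s, v i) = ∑ i ∈ s, Q (v i) := by
  classical
  induction s using Finset.cons_induction with
  | empty => simpa using h.hQ0
  | cons a t ha ih =>
    rw [Finset.sum_cons, Finset.sum_cons, h.Qadd, h.Bsum_right]
    have hBa : ∀ j ∈ t, polar2 Q (v a) (v j) = 0 := fun j hj =>
      hB a (Finset.mem_cons_self a t) j (Finset.mem_cons_of_mem hj)
        (fun hc => ha (hc ▸ hj))
    rw [Finset.sum_congr rfl hBa, Finset.sum_const_zero, add_zero]
    rw [ih (fun i hi j hj hij => hB i (Finset.mem_cons_of_mem hi) j (Finset.mem_cons_of_mem hj) hij)]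

lemma Qpair {x y : V} (hx : x ∈ U) (hy : y ∈ U) (bxy : polar2 Q x y = 0) :
    Q (x + y) = 0 := by
  rw [h.Qadd, h.hUQ x hx, h.hUQ y hy, bxy]
  decide

/-- three pairwise orthogonal elements of U : their sum is not in U (and nonzero). -/
lemma F6 {x y z : V} (hx : x ∈ U) (hy : y ∈ U) (hz : z ∈ U)
    (bxy : polar2 Q x y = 0) (bxz : polar2 Q x z = 0) (byz : polar2 Q y z = 0)
    (nxy : x + y ≠ 0) (nxz : x + z ≠ 0) (nyz : y + z ≠ 0) :
    (x + y + z ∉ U) ∧ (x + y + z ≠ 0) ∧ Q (x + y + z) = 1 := by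
  classical
  have hQ3 : Q (x + y + z) = 1 := by
    rw [h.Qadd (x+y) z, h.Qpair hx hy bxy, h.Badd_left, bxz, byz, h.hUQ z hz]
    decide
  set u : Fin 3 → V := ![x, y, z] with hu
  have huu : ∀ a : Fin 3, u a ∈ U := by
    intro a; fin_cases a <;> assumption
  have hBu : ∀ a b : Fin 3, a ≠ b → polar2 Q (u a) (u b) = 0 := by
    intro a b hab
    fin_cases a <;> fin_cases b <;>
      first
        | exact absurd rfl hab
        | assumption
        | (rw [h.Bsymm]; assumption)
  have hnu : ∀ a b : Fin 3, a ≠ b → u a + u b ≠ 0 := by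
    intro a b hab
    fin_cases a <;> fin_cases b <;>
      first
        | exact absurd rfl hab
        | assumption
        | (rw [add_comm]; assumption)
  have fib := h.fiber u (fun _ => (1 : ZMod 2))
  rw [← Finset.sum_erase_add _ _ (Finset.mem_powerset_self (Finset.univ : Finset (Fin 3)))] at fib
  have pw : ∀ s ∈ ((Finset.univ : Finset (Fin 3)).powerset).erase Finset.univ,
      χ (∑ _i ∈ s, (1:ZMod 2)) * uhat Q U (∑ i ∈ s, u i)
      = χ (∑ _i ∈ s, (1:ZMod 2)) *
          (if s.card = 0 then (66:ℤ) else if s.card = 1 then 26 else 2) := by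
    intro s hs
    have hsne : s ≠ Finset.univ := (Finset.mem_erase.1 hs).1
    have hsub : s ⊆ Finset.univ := Finset.mem_powerset.1 (Finset.mem_erase.1 hs).2
    have hcard : s.card < 3 := by
      have h1 : s.card ≤ 3 := by
        have := Finset.card_le_card hsub
        simpa using this
      rcases lt_or_eq_of_le h1 with h' | h'
      · exact h'
      · exact absurd (Finset.eq_univ_of_card s (by simpa using h')) hsne
    congr 1
    interval_cases hc : s.card
    · rw [Finset.card_eq_zero.1 hc]
      simpa using h.uhat0
    · obtain ⟨a, rfl⟩ := Finset.card_eq_one.1 hc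
      rw [Finset.sum_singleton]
      rw [h.uhatU (huu a)]
      norm_num
    · obtain ⟨a, b, hab, rfl⟩ := Finset.card_eq_two.1 hc
      rw [Finset.sum_pair hab]
      rw [h.uhatZ (h.Qpair (huu a) (huu b) (hBu a b hab)) (hnu a b hab)]
      norm_num
  rw [Finset.sum_congr rfl pw] at fib
  have concrete : ∑ s ∈ ((Finset.univ : Finset (Fin 3)).powerset).erase Finset.univ,
      χ (∑ _i ∈ s, (1:ZMod 2)) *
        (if s.card = 0 then (66:ℤ) else if s.card = 1 then 26 else 2) = -6 := by decide
  rw [concrete] at fib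
  have husum : (∑ i ∈ (Finset.univ : Finset (Fin 3)), u i) = x + y + z := by
    rw [hu, Fin.sum_univ_three]
    rfl
  have hchi : χ (∑ _i ∈ (Finset.univ : Finset (Fin 3)), (1:ZMod 2)) = -1 := by decide
  rw [husum, hchi] at fib
  rcases h.uhat_cases (x + y + z) with ⟨h0, hu'⟩ | ⟨hU', hu'⟩ | ⟨hq, hU', _⟩ | ⟨hq, h0, hu'⟩
  · rw [hu'] at fib; omega
  · rw [hu'] at fib; omega
  · exact ⟨hU', fun hc => by rw [hc, h.hQ0] at hq; exact (by decide : (0:ZMod 2) ≠ 1) hq, hQ3⟩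
  · rw [hQ3] at hq; exact absurd hq (by decide)

/-- five pairwise orthogonal elements of U : their sum is in U. -/
lemma F7 {v : Fin 5 → V} (hv : ∀ a, v a ∈ U)
    (hB : ∀ a b, a ≠ b → polar2 Q (v a) (v b) = 0)
    (hn : ∀ a b, a ≠ b → v a + v b ≠ 0) :
    (∑ i, v i) ∈ U := by
  classical
  have fib := h.fiber v ![1, 1, 1, 1, 0]
  rw [← Finset.sum_erase_add _ _ (Finset.mem_powerset_self (Finset.univ : Finset (Fin 5)))] at fib
  have pw : ∀ s ∈ ((Finset.univ : Finset (Fin 5)).powerset).erase Finset.univ,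
      χ (∑ i ∈ s, (![1, 1, 1, 1, 0] : Fin 5 → ZMod 2) i) * uhat Q U (∑ i ∈ s, v i)
      = χ (∑ i ∈ s, (![1, 1, 1, 1, 0] : Fin 5 → ZMod 2) i) *
          (if s.card = 0 then (66:ℤ) else if s.card = 1 then 26
            else if s.card = 2 then 2 else if s.card = 3 then -6 else 2) := by
    intro s hs
    have hsne : s ≠ Finset.univ := (Finset.mem_erase.1 hs).1
    have hsub : s ⊆ Finset.univ := Finset.mem_powerset.1 (Finset.mem_erase.1 hs).2
    have hcard : s.card < 5 := by
      have h1 : s.card ≤ 5 := by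
        have := Finset.card_le_card hsub
        simpa using this
      rcases lt_or_eq_of_le h1 with h' | h'
      · exact h'
      · exact absurd (Finset.eq_univ_of_card s (by simpa using h')) hsne
    congr 1
    interval_cases hc : s.card
    · rw [Finset.card_eq_zero.1 hc]
      simpa using h.uhat0
    · obtain ⟨a, rfl⟩ := Finset.card_eq_one.1 hc
      rw [Finset.sum_singleton]
      rw [h.uhatU (hv a)]
      norm_num
    · obtain ⟨a, b, hab, rfl⟩ := Finset.card_eq_two.1 hc
      rw [Finset.sum_pair hab]
      rw [h.uhatZ (h.Qpair (hv a) (hv b) (hB a b hab)) (hn a b hab)]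
      norm_num
    · obtain ⟨a, b, c, hab, hac, hbc, rfl⟩ := Finset.card_eq_three.1 hc
      have hsum : ∑ i ∈ ({a, b, c} : Finset (Fin 5)), v i = v a + v b + v c := by
        rw [show ({a, b, c} : Finset (Fin 5)) = insert a {b, c} from rfl]
        rw [Finset.sum_insert (by simp [hab, hac]), Finset.sum_pair hbc, add_assoc]
      rw [hsum]
      obtain ⟨hni, _, hq⟩ := h.F6 (hv a) (hv b) (hv c) (hB a b hab) (hB a c hac) (hB b c hbc)
        (hn a b hab) (hn a c hac) (hn b c hbc)
      rw [h.uhatA hq hni]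
      norm_num
    · obtain ⟨a, t, hat, rfl, ht3⟩ := Finset.card_eq_succ.1 hc
      obtain ⟨b, c, d, hbc, hbd, hcd, rfl⟩ := Finset.card_eq_three.1 ht3
      have hsum : ∑ i ∈ insert a ({b, c, d} : Finset (Fin 5)), v i
          = v a + (v b + (v c + v d)) := by
        rw [Finset.sum_insert hat]
        rw [show ({b, c, d} : Finset (Fin 5)) = insert b {c, d} from rfl]
        rw [Finset.sum_insert (by simp [hbc, hbd]), Finset.sum_pair hcd]
      rw [hsum]
      have hQ4 : Q (v a + (v b + (v c + v d))) = 0 := by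
        have e := h.Qsum0 (insert a ({b, c, d} : Finset (Fin 5))) v
          (fun i _ j _ hij => hB i j hij)
        rw [hsum] at e
        rw [e]
        have hq1 : ∀ i ∈ insert a ({b, c, d} : Finset (Fin 5)), Q (v i) = 1 :=
          fun i _ => h.hUQ (v i) (hv i)
        rw [Finset.sum_congr rfl hq1, Finset.sum_const, hc]
        decide
      have hn4 : v a + (v b + (v c + v d)) ≠ 0 := by
        intro hzero
        have hvd : v b + (v c + v d) = v a := by
          have e2 : v a + (v a + (v b + (v c + v d))) = v a + 0 := congrArg (v a + ·) hzero
          rwa [← add_assoc, addself, zero_add, add_zero] at e2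
        obtain ⟨hni, _, _⟩ := h.F6 (hv b) (hv c) (hv d) (hB b c hbc) (hB b d hbd)
          (hB c d hcd) (hn b c hbc) (hn b d hbd) (hn c d hcd)
        rw [add_assoc, hvd] at hni
        exact hni (hv a)
      rw [h.uhatZ hQ4 hn4]
      norm_num
  rw [Finset.sum_congr rfl pw] at fib
  have concrete : ∑ s ∈ ((Finset.univ : Finset (Fin 5)).powerset).erase Finset.univ,
      χ (∑ i ∈ s, (![1, 1, 1, 1, 0] : Fin 5 → ZMod 2) i) *
        (if s.card = 0 then (66:ℤ) else if s.card = 1 then 26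
          else if s.card = 2 then 2 else if s.card = 3 then -6 else 2) = -26 := by decide
  rw [concrete] at fib
  have hchi : χ (∑ i ∈ (Finset.univ : Finset (Fin 5)), (![1, 1, 1, 1, 0] : Fin 5 → ZMod 2) i)
      = 1 := by decide
  rw [hchi, one_mul] at fib
  rcases h.uhat_cases (∑ i ∈ (Finset.univ : Finset (Fin 5)), v i)
    with ⟨_, hu'⟩ | ⟨hU', _⟩ | ⟨_, _, hu'⟩ | ⟨_, _, hu'⟩
  · rw [hu'] at fib; omega
  · exact hU'
  · rw [hu'] at fib; omega
  · rw [hu'] at fib; omega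

end Hyp



/-- class value table -/
def fval : ℕ → ℤ := fun n =>
  if n = 0 then 66 else if n ≤ 2 then 26 else if n ≤ 4 then 2
  else if n ≤ 6 then -6 else if n ≤ 8 then 2 else 26

namespace Hyp
variable (h : Hyp Q U)
include h

/-- explicit-variable version of F7 -/
lemma F7' {v1 v2 v3 v4 v5 : V}
    (m1 : v1 ∈ U) (m2 : v2 ∈ U) (m3 : v3 ∈ U) (m4 : v4 ∈ U) (m5 : v5 ∈ U)
    (b12 : polar2 Q v1 v2 = 0) (b13 : polar2 Q v1 v3 = 0) (b14 : polar2 Q v1 v4 = 0)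
    (b15 : polar2 Q v1 v5 = 0) (b23 : polar2 Q v2 v3 = 0) (b24 : polar2 Q v2 v4 = 0)
    (b25 : polar2 Q v2 v5 = 0) (b34 : polar2 Q v3 v4 = 0) (b35 : polar2 Q v3 v5 = 0)
    (b45 : polar2 Q v4 v5 = 0)
    (n12 : v1 + v2 ≠ 0) (n13 : v1 + v3 ≠ 0) (n14 : v1 + v4 ≠ 0) (n15 : v1 + v5 ≠ 0)
    (n23 : v2 + v3 ≠ 0) (n24 : v2 + v4 ≠ 0) (n25 : v2 + v5 ≠ 0) (n34 : v3 + v4 ≠ 0)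
    (n35 : v3 + v5 ≠ 0) (n45 : v4 + v5 ≠ 0) :
    v1 + v2 + v3 + v4 + v5 ∈ U := by
  have key := h.F7 (v := ![v1, v2, v3, v4, v5]) ?_ ?_ ?_
  · rwa [Fin.sum_univ_five] at key
  · intro a; fin_cases a <;> assumption
  · intro a b hab
    fin_cases a <;> fin_cases b <;>
      first
        | exact absurd rfl hab
        | assumption
        | (rw [h.Bsymm]; assumption)
  · intro a b hab
    fin_cases a <;> fin_cases b <;>
      first
        | exact absurd rfl hab
        | assumption
        | (rw [add_comm]; assumption)

/-- the classification of subset sums of a "star" configuration -/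
lemma cls {k : ℕ} (hk : k ≤ 10) (u : Fin k → V) (huU : ∀ i, u i ∈ U)
    (hB1 : ∀ i j : Fin k, i ≠ j → polar2 Q (u i) (u j) = 1)
    (hind : LinearIndependent (ZMod 2) u) (s : Finset (Fin k)) :
    uhat Q U (∑ i ∈ s, u i) = fval s.card ∧
      ((∑ i ∈ s, u i) ∈ U ↔ (s.card = 1 ∨ s.card = 2 ∨ s.card = 9 ∨ s.card = 10)) := by
  classical
  have hnz : ∀ t : Finset (Fin k), t.Nonempty → (∑ i ∈ t, u i) ≠ 0 := by
    intro t ht hzero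
    have e : ∑ i : Fin k, (if i ∈ t then (1 : ZMod 2) else 0) • u i = ∑ i ∈ t, u i := by
      simp only [ite_smul, one_smul, zero_smul]
      rw [Finset.sum_ite_mem, Finset.univ_inter]
    have hall := Fintype.linearIndependent_iff.1 hind
      (fun i => if i ∈ t then (1 : ZMod 2) else 0) (by rw [e, hzero])
    obtain ⟨i0, hi0⟩ := ht
    have h1 : (if i0 ∈ t then (1 : ZMod 2) else 0) = 0 := hall i0
    rw [if_pos hi0] at h1
    exact (by decide : (1 : ZMod 2) ≠ 0) h1
  have hpU : ∀ i j : Fin k, i ≠ j → u i + u j ∈ U := fun i j hij =>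
    h.closureB (huU i) (huU j) (hB1 i j hij)
  have Bps : ∀ i j l : Fin k, i ≠ l → j ≠ l → polar2 Q (u i + u j) (u l) = 0 := by
    intro i j l hil hjl
    rw [h.Badd_left, hB1 i l hil, hB1 j l hjl]; decide
  have Bpp : ∀ i j l m : Fin k, i ≠ l → i ≠ m → j ≠ l → j ≠ m →
      polar2 Q (u i + u j) (u l + u m) = 0 := by
    intro i j l m hil him hjl hjm
    rw [h.Badd_right, Bps i j l hil hjl, Bps i j m him hjm]
    decide
  have Bsp : ∀ i j l : Fin k, i ≠ j → i ≠ l → polar2 Q (u i) (u j + u l) = 0 := by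
    intro i j l hij hil
    rw [h.Badd_right, hB1 i j hij, hB1 i l hil]; decide
  have hQ1 : ∀ i ∈ s, Q (u i) = 1 := fun i _ => h.hUQ (u i) (huU i)
  have hBs : ∀ i ∈ s, ∀ j ∈ s, i ≠ j → polar2 Q (u i) (u j) = 1 :=
    fun i _ j _ hij => hB1 i j hij
  have hQσ := h.Qsum s u hQ1 hBs
  have hcle : s.card ≤ 10 := le_trans (by
    have := Finset.card_le_univ s
    simpa using this) hk
  interval_cases hn : s.card
  · -- card 0
    obtain rfl := Finset.card_eq_zero.1 hn
    rw [Finset.sum_empty]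
    refine ⟨by rw [h.uhat0]; decide, ?_⟩
    constructor
    · intro hc; exact absurd hc h.zeroNotMem
    · intro hc; simp at hc
  · -- card 1
    obtain ⟨a, rfl⟩ := Finset.card_eq_one.1 hn
    rw [Finset.sum_singleton]
    refine ⟨by rw [h.uhatU (huU a)]; first | decide | (rw [hn]; decide), ?_⟩
    exact iff_of_true (huU a) (by omega)
  · -- card 2
    obtain ⟨a, b, hab, rfl⟩ := Finset.card_eq_two.1 hn
    rw [Finset.sum_pair hab]
    refine ⟨by rw [h.uhatU (hpU a b hab)]; first | decide | (rw [hn]; decide), ?_⟩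
    exact iff_of_true (hpU a b hab) (by omega)
  · -- card 3 : isotropic
    have hQ0' : Q (∑ i ∈ s, u i) = 0 := by
      rw [hQσ]
      first | decide | (rw [hn]; decide)
    have hns : (∑ i ∈ s, u i) ≠ 0 := hnz s (Finset.card_pos.1 (by omega))
    have hnU : (∑ i ∈ s, u i) ∉ U := fun hc => by
      rw [h.hUQ _ hc] at hQ0'
      exact (by decide : (1 : ZMod 2) ≠ 0) hQ0'
    refine ⟨by rw [h.uhatZ hQ0' hns]; first | decide | (rw [hn]; decide), ?_⟩
    exact iff_of_false hnU (by omega)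
  · -- card 4 : isotropic
    have hQ0' : Q (∑ i ∈ s, u i) = 0 := by
      rw [hQσ]
      first | decide | (rw [hn]; decide)
    have hns : (∑ i ∈ s, u i) ≠ 0 := hnz s (Finset.card_pos.1 (by omega))
    have hnU : (∑ i ∈ s, u i) ∉ U := fun hc => by
      rw [h.hUQ _ hc] at hQ0'
      exact (by decide : (1 : ZMod 2) ≠ 0) hQ0'
    refine ⟨by rw [h.uhatZ hQ0' hns]; first | decide | (rw [hn]; decide), ?_⟩
    exact iff_of_false hnU (by omega)
  · -- card 5
    obtain ⟨a, t0, hm0, rfl, hc0⟩ := Finset.card_eq_succ.1 (show s.card = 4 + 1 by omega)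
    have hn0 : t0.card = 4 := hc0
    obtain ⟨b, t1, hm1, rfl, hc1⟩ := Finset.card_eq_succ.1 (show t0.card = 3 + 1 by omega)
    have hn1 : t1.card = 3 := hc1
    obtain ⟨c, d, e, hcd, hce, hde, rfl⟩ := Finset.card_eq_three.1 hn1
    have hab : a ≠ b := fun hx => hm0 (by rw [hx]; simp)
    have hac : a ≠ c := fun hx => hm0 (by rw [hx]; simp)
    have had : a ≠ d := fun hx => hm0 (by rw [hx]; simp)
    have hae : a ≠ e := fun hx => hm0 (by rw [hx]; simp)
    have hbc : b ≠ c := fun hx => hm1 (by rw [hx]; simp)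
    have hbd : b ≠ d := fun hx => hm1 (by rw [hx]; simp)
    have hbe : b ≠ e := fun hx => hm1 (by rw [hx]; simp)
    rw [Finset.sum_insert hm0, Finset.sum_insert hm1, Finset.sum_insert (by simp [hcd, hce]), Finset.sum_pair hde] at hQσ ⊢
    have nz_ab_cd : u a + u b + (u c + u d) ≠ 0 := by
      have e : ∑ i ∈ ({a, b, c, d} : Finset (Fin k)), u i = u a + u b + (u c + u d) := by
        rw [show ({a,b,c,d} : Finset (Fin k)) = insert a (insert b {c, d}) from rfl]
        rw [Finset.sum_insert (by simp [hab, hac, had]), Finset.sum_insert (by simp [hbc, hbd]),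
          Finset.sum_pair hcd]
        abel
      rw [← e]; exact hnz _ (Finset.insert_nonempty _ _)
    have nz_ab_e : u a + u b + u e ≠ 0 := by
      have e' : ∑ i ∈ ({a, b, e} : Finset (Fin k)), u i = u a + u b + u e := by
        rw [show ({a,b,e} : Finset (Fin k)) = insert a {b, e} from rfl]
        rw [Finset.sum_insert (by simp [hab, hae]), Finset.sum_pair hbe]
        abel
      rw [← e']; exact hnz _ (Finset.insert_nonempty _ _)
    have nz_cd_e : u c + u d + u e ≠ 0 := by
      have e' : ∑ i ∈ ({c, d, e} : Finset (Fin k)), u i = u c + u d + u e := by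
        rw [show ({c,d,e} : Finset (Fin k)) = insert c {d, e} from rfl]
        rw [Finset.sum_insert (by simp [hcd, hce]), Finset.sum_pair hde]
        abel
      rw [← e']; exact hnz _ (Finset.insert_nonempty _ _)
    obtain ⟨hni, hnz3, hq3⟩ := h.F6 (hpU a b hab) (hpU c d hcd) (huU e)
      (Bpp a b c d hac had hbc hbd) (Bps a b e hae hbe) (Bps c d e hce hde)
      nz_ab_cd nz_ab_e nz_cd_e
    have heq : u a + (u b + (u c + (u d + u e))) = u a + u b + (u c + u d) + u e := by abel
    rw [heq]
    refine ⟨by rw [h.uhatA hq3 hni]; first | decide | (rw [hn]; decide), ?_⟩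
    exact iff_of_false hni (by omega)
  · -- card 6
    obtain ⟨a, t0, hm0, rfl, hc0⟩ := Finset.card_eq_succ.1 (show s.card = 5 + 1 by omega)
    have hn0 : t0.card = 5 := hc0
    obtain ⟨b, t1, hm1, rfl, hc1⟩ := Finset.card_eq_succ.1 (show t0.card = 4 + 1 by omega)
    have hn1 : t1.card = 4 := hc1
    obtain ⟨c, t2, hm2, rfl, hc2⟩ := Finset.card_eq_succ.1 (show t1.card = 3 + 1 by omega)
    have hn2 : t2.card = 3 := hc2
    obtain ⟨d, e, f, hde, hdf, hef, rfl⟩ := Finset.card_eq_three.1 hn2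
    have hab : a ≠ b := fun hx => hm0 (by rw [hx]; simp)
    have hac : a ≠ c := fun hx => hm0 (by rw [hx]; simp)
    have had : a ≠ d := fun hx => hm0 (by rw [hx]; simp)
    have hae : a ≠ e := fun hx => hm0 (by rw [hx]; simp)
    have haf : a ≠ f := fun hx => hm0 (by rw [hx]; simp)
    have hbc : b ≠ c := fun hx => hm1 (by rw [hx]; simp)
    have hbd : b ≠ d := fun hx => hm1 (by rw [hx]; simp)
    have hbe : b ≠ e := fun hx => hm1 (by rw [hx]; simp)
    have hbf : b ≠ f := fun hx => hm1 (by rw [hx]; simp)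
    have hcd : c ≠ d := fun hx => hm2 (by rw [hx]; simp)
    have hce : c ≠ e := fun hx => hm2 (by rw [hx]; simp)
    have hcf : c ≠ f := fun hx => hm2 (by rw [hx]; simp)
    rw [Finset.sum_insert hm0, Finset.sum_insert hm1, Finset.sum_insert hm2, Finset.sum_insert (by simp [hde, hdf]), Finset.sum_pair hef] at hQσ ⊢
    have nz4 : ∀ p q r t : Fin k, p ≠ q → p ≠ r → p ≠ t → q ≠ r → q ≠ t → r ≠ t →
        u p + u q + (u r + u t) ≠ 0 := by
      intro p q r t h1 h2 h3 h4 h5 h6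
      have e : ∑ i ∈ ({p, q, r, t} : Finset (Fin k)), u i = u p + u q + (u r + u t) := by
        rw [show ({p,q,r,t} : Finset (Fin k)) = insert p (insert q {r, t}) from rfl]
        rw [Finset.sum_insert (by simp [h1, h2, h3]), Finset.sum_insert (by simp [h4, h5]),
          Finset.sum_pair h6]
        abel
      rw [← e]; exact hnz _ (Finset.insert_nonempty _ _)
    obtain ⟨hni, hnz3, hq3⟩ := h.F6 (hpU a b hab) (hpU c d hcd) (hpU e f hef)
      (Bpp a b c d hac had hbc hbd) (Bpp a b e f hae haf hbe hbf) (Bpp c d e f hce hcf hde hdf)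
      (nz4 a b c d hab hac had hbc hbd hcd) (nz4 a b e f hab hae haf hbe hbf hef)
      (nz4 c d e f hcd hce hcf hde hdf hef)
    have heq : u a + (u b + (u c + (u d + (u e + u f))))
        = u a + u b + (u c + u d) + (u e + u f) := by abel
    rw [heq]
    refine ⟨by rw [h.uhatA hq3 hni]; first | decide | (rw [hn]; decide), ?_⟩
    exact iff_of_false hni (by omega)
  · -- card 7 : isotropic
    have hQ0' : Q (∑ i ∈ s, u i) = 0 := by
      rw [hQσ]
      first | decide | (rw [hn]; decide)
    have hns : (∑ i ∈ s, u i) ≠ 0 := hnz s (Finset.card_pos.1 (by omega))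
    have hnU : (∑ i ∈ s, u i) ∉ U := fun hc => by
      rw [h.hUQ _ hc] at hQ0'
      exact (by decide : (1 : ZMod 2) ≠ 0) hQ0'
    refine ⟨by rw [h.uhatZ hQ0' hns]; first | decide | (rw [hn]; decide), ?_⟩
    exact iff_of_false hnU (by omega)
  · -- card 8 : isotropic
    have hQ0' : Q (∑ i ∈ s, u i) = 0 := by
      rw [hQσ]
      first | decide | (rw [hn]; decide)
    have hns : (∑ i ∈ s, u i) ≠ 0 := hnz s (Finset.card_pos.1 (by omega))
    have hnU : (∑ i ∈ s, u i) ∉ U := fun hc => by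
      rw [h.hUQ _ hc] at hQ0'
      exact (by decide : (1 : ZMod 2) ≠ 0) hQ0'
    refine ⟨by rw [h.uhatZ hQ0' hns]; first | decide | (rw [hn]; decide), ?_⟩
    exact iff_of_false hnU (by omega)
  · -- card 9
    obtain ⟨a, t0, hm0, rfl, hc0⟩ := Finset.card_eq_succ.1 (show s.card = 8 + 1 by omega)
    have hn0 : t0.card = 8 := hc0
    obtain ⟨b, t1, hm1, rfl, hc1⟩ := Finset.card_eq_succ.1 (show t0.card = 7 + 1 by omega)
    have hn1 : t1.card = 7 := hc1
    obtain ⟨c, t2, hm2, rfl, hc2⟩ := Finset.card_eq_succ.1 (show t1.card = 6 + 1 by omega)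
    have hn2 : t2.card = 6 := hc2
    obtain ⟨d, t3, hm3, rfl, hc3⟩ := Finset.card_eq_succ.1 (show t2.card = 5 + 1 by omega)
    have hn3 : t3.card = 5 := hc3
    obtain ⟨e, t4, hm4, rfl, hc4⟩ := Finset.card_eq_succ.1 (show t3.card = 4 + 1 by omega)
    have hn4 : t4.card = 4 := hc4
    obtain ⟨f, t5, hm5, rfl, hc5⟩ := Finset.card_eq_succ.1 (show t4.card = 3 + 1 by omega)
    have hn5 : t5.card = 3 := hc5
    obtain ⟨g, i, j, hgi, hgj, hij, rfl⟩ := Finset.card_eq_three.1 hn5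
    have hab : a ≠ b := fun hx => hm0 (by rw [hx]; simp)
    have hac : a ≠ c := fun hx => hm0 (by rw [hx]; simp)
    have had : a ≠ d := fun hx => hm0 (by rw [hx]; simp)
    have hae : a ≠ e := fun hx => hm0 (by rw [hx]; simp)
    have haf : a ≠ f := fun hx => hm0 (by rw [hx]; simp)
    have hag : a ≠ g := fun hx => hm0 (by rw [hx]; simp)
    have hai : a ≠ i := fun hx => hm0 (by rw [hx]; simp)
    have haj : a ≠ j := fun hx => hm0 (by rw [hx]; simp)
    have hbc : b ≠ c := fun hx => hm1 (by rw [hx]; simp)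
    have hbd : b ≠ d := fun hx => hm1 (by rw [hx]; simp)
    have hbe : b ≠ e := fun hx => hm1 (by rw [hx]; simp)
    have hbf : b ≠ f := fun hx => hm1 (by rw [hx]; simp)
    have hbg : b ≠ g := fun hx => hm1 (by rw [hx]; simp)
    have hbi : b ≠ i := fun hx => hm1 (by rw [hx]; simp)
    have hbj : b ≠ j := fun hx => hm1 (by rw [hx]; simp)
    have hcd : c ≠ d := fun hx => hm2 (by rw [hx]; simp)
    have hce : c ≠ e := fun hx => hm2 (by rw [hx]; simp)
    have hcf : c ≠ f := fun hx => hm2 (by rw [hx]; simp)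
    have hcg : c ≠ g := fun hx => hm2 (by rw [hx]; simp)
    have hci : c ≠ i := fun hx => hm2 (by rw [hx]; simp)
    have hcj : c ≠ j := fun hx => hm2 (by rw [hx]; simp)
    have hde : d ≠ e := fun hx => hm3 (by rw [hx]; simp)
    have hdf : d ≠ f := fun hx => hm3 (by rw [hx]; simp)
    have hdg : d ≠ g := fun hx => hm3 (by rw [hx]; simp)
    have hdi : d ≠ i := fun hx => hm3 (by rw [hx]; simp)
    have hdj : d ≠ j := fun hx => hm3 (by rw [hx]; simp)
    have hef : e ≠ f := fun hx => hm4 (by rw [hx]; simp)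
    have heg : e ≠ g := fun hx => hm4 (by rw [hx]; simp)
    have hei : e ≠ i := fun hx => hm4 (by rw [hx]; simp)
    have hej : e ≠ j := fun hx => hm4 (by rw [hx]; simp)
    have hfg : f ≠ g := fun hx => hm5 (by rw [hx]; simp)
    have hfi : f ≠ i := fun hx => hm5 (by rw [hx]; simp)
    have hfj : f ≠ j := fun hx => hm5 (by rw [hx]; simp)
    rw [Finset.sum_insert hm0, Finset.sum_insert hm1, Finset.sum_insert hm2, Finset.sum_insert hm3, Finset.sum_insert hm4, Finset.sum_insert hm5, Finset.sum_insert (by simp [hgi, hgj]), Finset.sum_pair hij] at hQσ ⊢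
    have nz4 : ∀ p q r t : Fin k, p ≠ q → p ≠ r → p ≠ t → q ≠ r → q ≠ t → r ≠ t →
        u p + u q + (u r + u t) ≠ 0 := by
      intro p q r t h1 h2 h3 h4 h5 h6
      have e : ∑ i' ∈ ({p, q, r, t} : Finset (Fin k)), u i' = u p + u q + (u r + u t) := by
        rw [show ({p,q,r,t} : Finset (Fin k)) = insert p (insert q {r, t}) from rfl]
        rw [Finset.sum_insert (by simp [h1, h2, h3]), Finset.sum_insert (by simp [h4, h5]),
          Finset.sum_pair h6]
        abel
      rw [← e]; exact hnz _ (Finset.insert_nonempty _ _)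
    have nz3 : ∀ p q r : Fin k, p ≠ q → p ≠ r → q ≠ r → u p + u q + u r ≠ 0 := by
      intro p q r h1 h2 h3
      have e : ∑ i' ∈ ({p, q, r} : Finset (Fin k)), u i' = u p + u q + u r := by
        rw [show ({p,q,r} : Finset (Fin k)) = insert p {q, r} from rfl]
        rw [Finset.sum_insert (by simp [h1, h2]), Finset.sum_pair h3]
        abel
      rw [← e]; exact hnz _ (Finset.insert_nonempty _ _)
    have key := h.F7' (hpU a b hab) (hpU c d hcd) (hpU e f hef) (hpU g i hgi) (huU j)
      (Bpp a b c d hac had hbc hbd) (Bpp a b e f hae haf hbe hbf) (Bpp a b g i hag hai hbg hbi)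
      (Bps a b j haj hbj) (Bpp c d e f hce hcf hde hdf) (Bpp c d g i hcg hci hdg hdi)
      (Bps c d j hcj hdj) (Bpp e f g i heg hei hfg hfi) (Bps e f j hej hfj)
      (Bps g i j hgj hij)
      (nz4 a b c d hab hac had hbc hbd hcd) (nz4 a b e f hab hae haf hbe hbf hef)
      (nz4 a b g i hab hag hai hbg hbi hgi) (nz3 a b j hab haj hbj)
      (nz4 c d e f hcd hce hcf hde hdf hef) (nz4 c d g i hcd hcg hci hdg hdi hgi)
      (nz3 c d j hcd hcj hdj) (nz4 e f g i hef heg hei hfg hfi hgi)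
      (nz3 e f j hef hej hfj) (nz3 g i j hgi hgj hij)
    have heq : u a + (u b + (u c + (u d + (u e + (u f + (u g + (u i + u j)))))))
        = u a + u b + (u c + u d) + (u e + u f) + (u g + u i) + u j := by abel
    rw [heq]
    refine ⟨by rw [h.uhatU key]; first | decide | (rw [hn]; decide), ?_⟩
    exact iff_of_true key (by omega)
  · -- card 10
    obtain ⟨a, t0, hm0, rfl, hc0⟩ := Finset.card_eq_succ.1 (show s.card = 9 + 1 by omega)
    have hn0 : t0.card = 9 := hc0
    obtain ⟨b, t1, hm1, rfl, hc1⟩ := Finset.card_eq_succ.1 (show t0.card = 8 + 1 by omega)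
    have hn1 : t1.card = 8 := hc1
    obtain ⟨c, t2, hm2, rfl, hc2⟩ := Finset.card_eq_succ.1 (show t1.card = 7 + 1 by omega)
    have hn2 : t2.card = 7 := hc2
    obtain ⟨d, t3, hm3, rfl, hc3⟩ := Finset.card_eq_succ.1 (show t2.card = 6 + 1 by omega)
    have hn3 : t3.card = 6 := hc3
    obtain ⟨e, t4, hm4, rfl, hc4⟩ := Finset.card_eq_succ.1 (show t3.card = 5 + 1 by omega)
    have hn4 : t4.card = 5 := hc4
    obtain ⟨f, t5, hm5, rfl, hc5⟩ := Finset.card_eq_succ.1 (show t4.card = 4 + 1 by omega)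
    have hn5 : t5.card = 4 := hc5
    obtain ⟨g, t6, hm6, rfl, hc6⟩ := Finset.card_eq_succ.1 (show t5.card = 3 + 1 by omega)
    have hn6 : t6.card = 3 := hc6
    obtain ⟨i, j, l, hij, hil, hjl, rfl⟩ := Finset.card_eq_three.1 hn6
    have hab : a ≠ b := fun hx => hm0 (by rw [hx]; simp)
    have hac : a ≠ c := fun hx => hm0 (by rw [hx]; simp)
    have had : a ≠ d := fun hx => hm0 (by rw [hx]; simp)
    have hae : a ≠ e := fun hx => hm0 (by rw [hx]; simp)
    have haf : a ≠ f := fun hx => hm0 (by rw [hx]; simp)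
    have hag : a ≠ g := fun hx => hm0 (by rw [hx]; simp)
    have hai : a ≠ i := fun hx => hm0 (by rw [hx]; simp)
    have haj : a ≠ j := fun hx => hm0 (by rw [hx]; simp)
    have hal : a ≠ l := fun hx => hm0 (by rw [hx]; simp)
    have hbc : b ≠ c := fun hx => hm1 (by rw [hx]; simp)
    have hbd : b ≠ d := fun hx => hm1 (by rw [hx]; simp)
    have hbe : b ≠ e := fun hx => hm1 (by rw [hx]; simp)
    have hbf : b ≠ f := fun hx => hm1 (by rw [hx]; simp)
    have hbg : b ≠ g := fun hx => hm1 (by rw [hx]; simp)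
    have hbi : b ≠ i := fun hx => hm1 (by rw [hx]; simp)
    have hbj : b ≠ j := fun hx => hm1 (by rw [hx]; simp)
    have hbl : b ≠ l := fun hx => hm1 (by rw [hx]; simp)
    have hcd : c ≠ d := fun hx => hm2 (by rw [hx]; simp)
    have hce : c ≠ e := fun hx => hm2 (by rw [hx]; simp)
    have hcf : c ≠ f := fun hx => hm2 (by rw [hx]; simp)
    have hcg : c ≠ g := fun hx => hm2 (by rw [hx]; simp)
    have hci : c ≠ i := fun hx => hm2 (by rw [hx]; simp)
    have hcj : c ≠ j := fun hx => hm2 (by rw [hx]; simp)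
    have hcl : c ≠ l := fun hx => hm2 (by rw [hx]; simp)
    have hde : d ≠ e := fun hx => hm3 (by rw [hx]; simp)
    have hdf : d ≠ f := fun hx => hm3 (by rw [hx]; simp)
    have hdg : d ≠ g := fun hx => hm3 (by rw [hx]; simp)
    have hdi : d ≠ i := fun hx => hm3 (by rw [hx]; simp)
    have hdj : d ≠ j := fun hx => hm3 (by rw [hx]; simp)
    have hdl : d ≠ l := fun hx => hm3 (by rw [hx]; simp)
    have hef : e ≠ f := fun hx => hm4 (by rw [hx]; simp)
    have heg : e ≠ g := fun hx => hm4 (by rw [hx]; simp)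
    have hei : e ≠ i := fun hx => hm4 (by rw [hx]; simp)
    have hej : e ≠ j := fun hx => hm4 (by rw [hx]; simp)
    have hel : e ≠ l := fun hx => hm4 (by rw [hx]; simp)
    have hfg : f ≠ g := fun hx => hm5 (by rw [hx]; simp)
    have hfi : f ≠ i := fun hx => hm5 (by rw [hx]; simp)
    have hfj : f ≠ j := fun hx => hm5 (by rw [hx]; simp)
    have hfl : f ≠ l := fun hx => hm5 (by rw [hx]; simp)
    have hgi : g ≠ i := fun hx => hm6 (by rw [hx]; simp)
    have hgj : g ≠ j := fun hx => hm6 (by rw [hx]; simp)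
    have hgl : g ≠ l := fun hx => hm6 (by rw [hx]; simp)
    rw [Finset.sum_insert hm0, Finset.sum_insert hm1, Finset.sum_insert hm2, Finset.sum_insert hm3, Finset.sum_insert hm4, Finset.sum_insert hm5, Finset.sum_insert hm6, Finset.sum_insert (by simp [hij, hil]), Finset.sum_pair hjl] at hQσ ⊢
    have nz4 : ∀ p q r t : Fin k, p ≠ q → p ≠ r → p ≠ t → q ≠ r → q ≠ t → r ≠ t →
        u p + u q + (u r + u t) ≠ 0 := by
      intro p q r t h1 h2 h3 h4 h5 h6
      have e : ∑ i' ∈ ({p, q, r, t} : Finset (Fin k)), u i' = u p + u q + (u r + u t) := by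
        rw [show ({p,q,r,t} : Finset (Fin k)) = insert p (insert q {r, t}) from rfl]
        rw [Finset.sum_insert (by simp [h1, h2, h3]), Finset.sum_insert (by simp [h4, h5]),
          Finset.sum_pair h6]
        abel
      rw [← e]; exact hnz _ (Finset.insert_nonempty _ _)
    have key := h.F7' (hpU a b hab) (hpU c d hcd) (hpU e f hef) (hpU g i hgi) (hpU j l hjl)
      (Bpp a b c d hac had hbc hbd) (Bpp a b e f hae haf hbe hbf) (Bpp a b g i hag hai hbg hbi)
      (Bpp a b j l haj hal hbj hbl) (Bpp c d e f hce hcf hde hdf) (Bpp c d g i hcg hci hdg hdi)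
      (Bpp c d j l hcj hcl hdj hdl) (Bpp e f g i heg hei hfg hfi) (Bpp e f j l hej hel hfj hfl)
      (Bpp g i j l hgj hgl hij hil)
      (nz4 a b c d hab hac had hbc hbd hcd) (nz4 a b e f hab hae haf hbe hbf hef)
      (nz4 a b g i hab hag hai hbg hbi hgi) (nz4 a b j l hab haj hal hbj hbl hjl)
      (nz4 c d e f hcd hce hcf hde hdf hef) (nz4 c d g i hcd hcg hci hdg hdi hgi)
      (nz4 c d j l hcd hcj hcl hdj hdl hjl) (nz4 e f g i hef heg hei hfg hfi hgi)
      (nz4 e f j l hef hej hel hfj hfl hjl) (nz4 g i j l hgi hgj hgl hij hil hjl)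
    have heq : u a + (u b + (u c + (u d + (u e + (u f + (u g + (u i + (u j + u l))))))))
        = u a + u b + (u c + u d) + (u e + u f) + (u g + u i) + (u j + u l) := by abel
    rw [heq]
    refine ⟨by rw [h.uhatU key]; first | decide | (rw [hn]; decide), ?_⟩
    exact iff_of_true key (by omega)

set_option maxHeartbeats 1000000 in
/-- greedy extension step -/
lemma step {k : ℕ} (hk : k ≤ 9) (u : Fin k → V) (huU : ∀ i, u i ∈ U)
    (hB1 : ∀ i j : Fin k, i ≠ j → polar2 Q (u i) (u j) = 1)
    (hind : LinearIndependent (ZMod 2) u) :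
    ∃ x, x ∈ U ∧ (∀ i, polar2 Q x (u i) = 1) ∧
      x ∉ Submodule.span (ZMod 2) (Set.range u) := by
  classical
  have fib := h.fiber u (fun _ => 1)
  have pw : ∀ s ∈ (Finset.univ : Finset (Fin k)).powerset,
      χ (∑ _i ∈ s, (1:ZMod 2)) * uhat Q U (∑ i ∈ s, u i)
      = (fun n => χ ((n : ℕ) : ZMod 2) * fval n) s.card := by
    intro s _
    have e1 : ∑ _i ∈ s, (1:ZMod 2) = ((s.card : ℕ) : ZMod 2) := by
      rw [Finset.sum_const, nsmul_eq_mul, mul_one]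
    rw [e1, (h.cls (by omega) u huU hB1 hind s).1]
  rw [Finset.sum_congr rfl pw,
    Finset.sum_powerset_apply_card (f := fun n => χ ((n : ℕ) : ZMod 2) * fval n)
      (x := (Finset.univ : Finset (Fin k)))] at fib
  rw [Finset.card_univ, Fintype.card_fin] at fib
  have bound : ∀ k' < 10, 2 * 2^k' ≤ ∑ j ∈ Finset.range (k' + 1),
      (k'.choose j) • (χ ((j : ℕ) : ZMod 2) * fval j) := by decide
  have hge := bound k (by omega)
  rw [← fib] at hge
  have hpow : (0:ℤ) < 2^k := by positivity
  have h2 : 1 < (U.filter (fun x => ∀ i, polar2 Q x (u i) = 1)).card := by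
    have : (2:ℤ) ≤ ((U.filter (fun x => ∀ i, polar2 Q x (u i) = 1)).card : ℤ) := by
      have := (mul_le_mul_iff_right₀ hpow).1 (by linarith [hge] :
        (2:ℤ)^k * 2 ≤ 2^k * ((U.filter (fun x => ∀ i, polar2 Q x (u i) = 1)).card : ℤ))
      linarith
    omega
  obtain ⟨x, hxP, y, hyP, hxy⟩ := Finset.one_lt_card.1 h2
  have hxU := (Finset.mem_filter.1 hxP).1
  have hxB := (Finset.mem_filter.1 hxP).2
  have hyU := (Finset.mem_filter.1 hyP).1
  have hyB := (Finset.mem_filter.1 hyP).2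
  -- span uniqueness
  have huniq : ∀ z, z ∈ U → (∀ i, polar2 Q z (u i) = 1) →
      z ∈ Submodule.span (ZMod 2) (Set.range u) → z = ∑ i, u i := by
    intro z hzU hzB hzs
    obtain ⟨c, hc⟩ := (Submodule.mem_span_range_iff_exists_fun (ZMod 2)).1 hzs
    rcases Nat.eq_zero_or_pos k with hk0 | hk0
    · -- k = 0 : z = 0 ∈ U, contradiction
      exfalso
      subst hk0
      have : z = 0 := by rw [← hc, Finset.sum_of_isEmpty]
      exact h.zeroNotMem (this ▸ hzU)
    · -- compute B z (u i)
      have key : ∀ i, (∑ j, c j) + c i = 1 := by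
        intro i
        have hzBi := hzB i
        have e1 : polar2 Q z (u i) = ∑ j, c j * polar2 Q (u j) (u i) := by
          rw [← hc, h.Bsymm, h.Bsum_right]
          refine Finset.sum_congr rfl (fun j _ => ?_)
          rw [h.Bsmul, h.Bsymm]
        have e2 : ∀ j, c j * polar2 Q (u j) (u i)
            = c j + (if j = i then c j else 0) := by
          intro j
          by_cases hji : j = i
          · subst hji; rw [h.Bxx, if_pos rfl]
            exact (by decide : ∀ a : ZMod 2, a * 0 = a + a) (c j)
          · rw [hB1 j i hji, if_neg hji, mul_one, add_zero]
        rw [e1, Finset.sum_congr rfl (fun j _ => e2 j), Finset.sum_add_distrib] at hzBi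
        have e3 : (∑ j : Fin k, (if j = i then c j else 0)) = c i := by
          rw [Finset.sum_ite_eq' Finset.univ i c, if_pos (Finset.mem_univ i)]
        rw [e3] at hzBi
        exact hzBi
      -- c is constant
      have hconst : ∀ i j : Fin k, c i = c j := by
        intro i j
        have := key i
        have := key j
        have e : (∑ j', c j') + c i = (∑ j', c j') + c j := by rw [key i, key j]
        exact add_left_cancel e
      obtain ⟨i0⟩ := Fin.pos_iff_nonempty.1 hk0
      set κ := c i0 with hκ
      have hall : ∀ i, c i = κ := fun i => hconst i i0
      have hT : (∑ j, c j) = (k : ℕ) • κ := by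
        rw [Finset.sum_congr rfl (fun j _ => hall j), Finset.sum_const,
          Finset.card_univ, Fintype.card_fin]
      have hκ1 : κ = 1 := by
        have e := key i0
        rw [hT, hall i0] at e
        rcases Nat.even_or_odd k with he | ho
        · -- k even : k • κ = 0
          have : (k : ℕ) • κ = 0 := by
            obtain ⟨m, hm⟩ := he
            rw [hm]
            rw [show (m + m) • κ = m • κ + m • κ from add_nsmul κ m m]
            exact addself _
          rw [this, zero_add] at e
          exact e
        · -- k odd : k • κ = κ , so κ + κ = 1 : impossible unless... 2κ=0=1 false
          exfalso
          have : (k : ℕ) • κ = κ := by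
            obtain ⟨m, hm⟩ := ho
            rw [hm]
            rw [show (2 * m + 1) • κ = m • κ + m • κ + κ from by
              rw [two_mul, add_nsmul, add_nsmul, one_nsmul]]
            rw [addself (m • κ), zero_add]
          rw [this] at e
          rw [addself κ] at e
          exact (by decide : (0 : ZMod 2) ≠ 1) e
      rw [← hc]
      refine Finset.sum_congr rfl (fun j _ => ?_)
      rw [hall j, hκ1, one_smul]
  by_cases hxs : x ∈ Submodule.span (ZMod 2) (Set.range u)
  · by_cases hys : y ∈ Submodule.span (ZMod 2) (Set.range u)
    · exact absurd ((huniq x hxU hxB hxs).trans (huniq y hyU hyB hys).symm) hxy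
    · exact ⟨y, hyU, hyB, hys⟩
  · exact ⟨x, hxU, hxB, hxs⟩

/-- greedy construction of a 10-element star configuration -/
lemma build : ∃ u : Fin 10 → V, (∀ i, u i ∈ U) ∧
    (∀ i j : Fin 10, i ≠ j → polar2 Q (u i) (u j) = 1) ∧
    LinearIndependent (ZMod 2) u := by
  classical
  suffices hgen : ∀ k : ℕ, k ≤ 10 → ∃ u : Fin k → V, (∀ i, u i ∈ U) ∧
      (∀ i j : Fin k, i ≠ j → polar2 Q (u i) (u j) = 1) ∧
      LinearIndependent (ZMod 2) u from hgen 10 le_rfl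
  intro k
  induction k with
  | zero =>
    intro _
    exact ⟨Fin.elim0, fun i => i.elim0, fun i => i.elim0, linearIndependent_empty_type⟩
  | succ n ih =>
    intro hk
    obtain ⟨u, hu1, hu2, hu3⟩ := ih (by omega)
    obtain ⟨x, hx1, hx2, hx3⟩ := h.step (by omega) u hu1 hu2 hu3
    refine ⟨Fin.cons x u, ?_, ?_, ?_⟩
    · intro i
      refine Fin.cases ?_ ?_ i
      · rwa [Fin.cons_zero]
      · intro j; rw [Fin.cons_succ]; exact hu1 j
    · intro i j hij
      rcases Fin.eq_zero_or_eq_succ i with rfl | ⟨i', rfl⟩ <;>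
        rcases Fin.eq_zero_or_eq_succ j with rfl | ⟨j', rfl⟩
      · exact absurd rfl hij
      · rw [Fin.cons_zero, Fin.cons_succ]
        exact hx2 j'
      · rw [Fin.cons_succ, Fin.cons_zero, h.Bsymm]
        exact hx2 i'
      · rw [Fin.cons_succ, Fin.cons_succ]
        exact hu2 i' j' (fun hc => hij (by rw [hc]))
    · exact linearIndependent_fin_cons.2 ⟨hu3, hx3⟩

/-- bilinear expansion on a star family -/
lemma Bstar {k : ℕ} (u : Fin k → V)
    (hB1 : ∀ i j : Fin k, i ≠ j → polar2 Q (u i) (u j) = 1) (α β : Fin k → ZMod 2) :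
    polar2 Q (∑ i, α i • u i) (∑ j, β j • u j)
      = (∑ i, α i) * (∑ j, β j) + ∑ i, α i * β i := by
  classical
  rw [h.Bsum_left]
  have e1 : ∀ i, polar2 Q (α i • u i) (∑ j, β j • u j)
      = α i * ∑ j, β j * polar2 Q (u i) (u j) := by
    intro i
    rw [h.Bsymm, h.Bsmul, h.Bsymm, h.Bsum_right]
    congr 1
    refine Finset.sum_congr rfl (fun j _ => ?_)
    rw [h.Bsmul]
  rw [Finset.sum_congr rfl (fun i _ => e1 i)]
  have e2 : ∀ i, α i * (∑ j, β j * polar2 Q (u i) (u j))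
      = (∑ j, α i * β j) + α i * β i := by
    intro i
    have e3 : ∀ j, β j * polar2 Q (u i) (u j) = β j + (if j = i then β j else 0) := by
      intro j
      by_cases hji : j = i
      · subst hji
        rw [h.Bxx, if_pos rfl]
        exact (by decide : ∀ a : ZMod 2, a * 0 = a + a) (β j)
      · rw [hB1 i j (fun hc => hji hc.symm), if_neg hji, mul_one, add_zero]
    rw [Finset.sum_congr rfl (fun j _ => e3 j), Finset.sum_add_distrib]
    have e4 : (∑ j : Fin k, (if j = i then β j else 0)) = β i := by
      rw [Finset.sum_ite_eq' Finset.univ i β, if_pos (Finset.mem_univ i)]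
    rw [e4, mul_add, Finset.mul_sum]
  rw [Finset.sum_congr rfl (fun i _ => e2 i), Finset.sum_add_distrib]
  congr 1
  rw [Finset.sum_mul_sum]

/-- quadratic expansion on a star family, in coordinates -/
lemma Qstar {k : ℕ} (v : Fin k → V) (hv1 : ∀ i, Q (v i) = 1)
    (hv2 : ∀ i j : Fin k, i ≠ j → polar2 Q (v i) (v j) = 1) (α : Fin k → ZMod 2) :
    Q (∑ i, α i • v i)
      = (((Finset.univ.filter (fun i => α i = 1)).card : ℕ) : ZMod 2)
        + ((((Finset.univ.filter (fun i => α i = 1)).card.choose 2 : ℕ)) : ZMod 2) := by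
  classical
  have bridge : ∑ i, α i • v i = ∑ i ∈ Finset.univ.filter (fun i => α i = 1), v i := by
    rw [← Finset.sum_filter_add_sum_filter_not Finset.univ (fun i => α i = 1)
      (fun i => α i • v i)]
    have z1 : ∑ i ∈ Finset.univ.filter (fun i => ¬ α i = 1), α i • v i = 0 := by
      refine Finset.sum_eq_zero (fun i hi => ?_)
      have hi0 : α i = 0 := by
        rcases zmod2_cases_s15 (α i) with h' | h'
        · exact h'
        · exact absurd h' (Finset.mem_filter.1 hi).2
      rw [hi0, zero_smul]
    rw [z1, add_zero]
    refine Finset.sum_congr rfl (fun i hi => ?_)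
    rw [(Finset.mem_filter.1 hi).2, one_smul]
  rw [bridge]
  exact h.Qsum _ v (fun i _ => hv1 i) (fun i _ j _ hij => hv2 i j hij)

end Hyp

end Aux

open Matrix in
/-- the explicit isometry matrix (coming from an 𝔽₄-structure on the duad model) -/
def Amat : Matrix (Fin 10) (Fin 10) (ZMod 2) :=
  !![1,0,1,0,1,1,0,0,1,1;
     1,1,1,1,1,0,1,0,0,0;
     0,0,1,1,0,1,1,1,0,1;
     0,1,1,0,1,1,0,1,0,0;
     1,1,0,0,0,1,1,0,0,1;
     1,0,1,0,0,0,1,1,1,0;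
     0,1,1,1,0,0,0,0,1,1;
     1,1,0,1,0,1,0,1,1,0;
     1,0,0,1,1,0,0,1,0,1;
     0,1,0,0,1,0,1,1,1,1]

/-- weight of a coordinate vector -/
def wt {k : ℕ} (α : Fin k → ZMod 2) : ℕ := (Finset.univ.filter (fun i => α i = 1)).card

def goodwt (n : ℕ) : Prop := n = 1 ∨ n = 2 ∨ n = 9 ∨ n = 10

instance : DecidablePred goodwt := fun n => by unfold goodwt; infer_instance

def goodα (α : Fin 10 → ZMod 2) : Prop := goodwt (wt α) → ¬ goodwt (wt (Amat.mulVec α))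

instance : DecidablePred goodα := fun α => by unfold goodα; infer_instance

lemma append_decomp (f : Fin 10 → ZMod 2) :
    f = Fin.append (fun i : Fin 5 => f (Fin.castAdd 5 i)) (fun i : Fin 5 => f (Fin.natAdd 5 i)) := by
  funext i
  refine Fin.addCases (m := 5) (n := 5)
    (motive := fun i => f i = Fin.append (fun i : Fin 5 => f (Fin.castAdd 5 i))
      (fun i : Fin 5 => f (Fin.natAdd 5 i)) i) (fun j => ?_) (fun j => ?_) i
  · show f _ = Fin.append _ _ (Fin.castAdd 5 j)
    rw [Fin.append_left]
  · show f _ = Fin.append _ _ (Fin.natAdd 5 j)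
    rw [Fin.append_right]

set_option maxHeartbeats 4000000 in
set_option maxRecDepth 10000 in
lemma goodα_all : ∀ α : Fin 10 → ZMod 2, goodα α := by
  have key : ∀ a b : Fin 5 → ZMod 2, goodα (Fin.append a b) := by decide
  intro α
  rw [append_decomp α]
  exact key _ _

set_option maxRecDepth 4000 in
lemma Amat_inv1 : (Amat + 1) * Amat = 1 := by decide

set_option maxRecDepth 4000 in
lemma Amat_inv2 : Amat * (Amat + 1) = 1 := by decide

set_option maxRecDepth 4000 in
lemma Amat_col_Q : ∀ i : Fin 10,
    ((wt (fun j => Amat j i) : ℕ) : ZMod 2)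
      + (((wt (fun j => Amat j i)).choose 2 : ℕ) : ZMod 2) = 1 := by decide

set_option maxRecDepth 4000 in
lemma Amat_col_B : ∀ i j : Fin 10, i ≠ j →
    (∑ p, Amat p i) * (∑ p, Amat p j) + (∑ p, Amat p i * Amat p j) = 1 := by decide

theorem exists_isometry_disjoint_image
    (V : Type) [AddCommGroup V] [Module (ZMod 2) V] [Fintype V] [DecidableEq V]
    -- `V` is 10-dimensional over `𝔽₂`
    (hdim : Module.finrank (ZMod 2) V = 10)
    -- `Q` is a quadratic form with bilinear polarization `B = polar2 Q`
    (Q : V → ZMod 2) (hQ0 : Q 0 = 0)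
    (hbil : ∀ x y z : V, polar2 Q (x + y) z = polar2 Q x z + polar2 Q y z)
    -- `B` is nondegenerate
    (hnondeg : ∀ x : V, (∀ y : V, polar2 Q x y = 0) → x = 0)
    -- `Q` is of minus type
    (hminus : (Finset.univ.filter fun x : V => Q x = 0).card = 496)
    -- `U` is a subset of `{x : Q x = 1}` satisfying the four counting conditions
    (U : Finset V) (hUQ : ∀ x ∈ U, Q x = 1)
    (h66 : ∀ γ : V, γ = 0 → (U.filter fun x => polar2 Q x γ = 0).card = 66)
    (h34 : ∀ γ : V, Q γ = 0 → γ ≠ 0 → (U.filter fun x => polar2 Q x γ = 0).card = 34)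
    (h46 : ∀ γ : V, Q γ = 1 → γ ∈ U → (U.filter fun x => polar2 Q x γ = 0).card = 46)
    (h30 : ∀ γ : V, Q γ = 1 → γ ∉ U → (U.filter fun x => polar2 Q x γ = 0).card = 30) :
    -- there is an isometry of `(V, Q)` moving `U` off itself
    ∃ φ : V ≃ₗ[ZMod 2] V, (∀ x : V, Q (φ x) = Q x) ∧
      (⇑φ '' (U : Set V)) ∩ (U : Set V) = ∅ := by
  classical
  have h : Hyp Q U := ⟨hdim, hQ0, hbil, hnondeg, hminus, hUQ, h66, h34, h46, h30⟩
  obtain ⟨u, hu1, hu2, hu3⟩ := h.build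
  have hcard : Fintype.card (Fin 10) = Module.finrank (ZMod 2) V := by
    rw [Fintype.card_fin, hdim]
  let b : Module.Basis (Fin 10) (ZMod 2) V := basisOfLinearIndependentOfCardEqFinrank hu3 hcard
  have hb : ⇑b = u := coe_basisOfLinearIndependentOfCardEqFinrank hu3 hcard
  set E : V ≃ₗ[ZMod 2] (Fin 10 → ZMod 2) := b.equivFun with hE
  set M : (Fin 10 → ZMod 2) ≃ₗ[ZMod 2] (Fin 10 → ZMod 2) :=
    Matrix.toLin'OfInv Amat_inv1 Amat_inv2 with hM
  have hMapp : ∀ β : Fin 10 → ZMod 2, M β = Amat.mulVec β := by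
    intro β
    rw [hM]
    show Matrix.toLin' Amat β = _
    rw [Matrix.toLin'_apply]
  have hEsymm : ∀ β : Fin 10 → ZMod 2, E.symm β = ∑ i, β i • u i := by
    intro β
    rw [hE]
    rw [Module.Basis.equivFun_symm_apply, hb]
  have hQE : ∀ β : Fin 10 → ZMod 2, Q (E.symm β)
      = ((wt β : ℕ) : ZMod 2) + (((wt β).choose 2 : ℕ) : ZMod 2) := by
    intro β
    rw [hEsymm β]
    exact h.Qstar u (fun i => h.hUQ (u i) (hu1 i)) hu2 β
  set w : Fin 10 → V := fun i => ∑ j, Amat j i • u j with hw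
  have swap : ∀ β : Fin 10 → ZMod 2, ∑ j, (Amat.mulVec β) j • u j = ∑ i, β i • w i := by
    intro β
    have e1 : ∀ j, (Amat.mulVec β) j • u j = ∑ i, β i • (Amat j i • u j) := by
      intro j
      rw [Matrix.mulVec, dotProduct, Finset.sum_smul]
      refine Finset.sum_congr rfl (fun i _ => ?_)
      rw [mul_comm, mul_smul]
    rw [Finset.sum_congr rfl (fun j _ => e1 j), Finset.sum_comm]
    refine Finset.sum_congr rfl (fun i _ => ?_)
    rw [hw, Finset.smul_sum]
  have hw1 : ∀ i, Q (w i) = 1 := by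
    intro i
    rw [hw]
    have := h.Qstar u (fun i => h.hUQ (u i) (hu1 i)) hu2 (fun j => Amat j i)
    rw [this]
    exact Amat_col_Q i
  have hw2 : ∀ i j : Fin 10, i ≠ j → polar2 Q (w i) (w j) = 1 := by
    intro i j hij
    rw [hw]
    have := h.Bstar u hu2 (fun p => Amat p i) (fun p => Amat p j)
    rw [this]
    exact Amat_col_B i j hij
  have hQEA : ∀ β : Fin 10 → ZMod 2, Q (E.symm (Amat.mulVec β))
      = ((wt β : ℕ) : ZMod 2) + (((wt β).choose 2 : ℕ) : ZMod 2) := by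
    intro β
    rw [hEsymm, swap]
    exact h.Qstar w hw1 hw2 β
  have hmem : ∀ β : Fin 10 → ZMod 2, (E.symm β ∈ U ↔ goodwt (wt β)) := by
    intro β
    rw [hEsymm β]
    have bridge : ∑ i, β i • u i
        = ∑ i ∈ Finset.univ.filter (fun i => β i = 1), u i := by
      rw [← Finset.sum_filter_add_sum_filter_not Finset.univ (fun i => β i = 1)
        (fun i => β i • u i)]
      have z1 : ∑ i ∈ Finset.univ.filter (fun i => ¬ β i = 1), β i • u i = 0 := by
        refine Finset.sum_eq_zero (fun i hi => ?_)
        have hi0 : β i = 0 := by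
          rcases zmod2_cases_s15 (β i) with h' | h'
          · exact h'
          · exact absurd h' (Finset.mem_filter.1 hi).2
        rw [hi0, zero_smul]
      rw [z1, add_zero]
      refine Finset.sum_congr rfl (fun i hi => ?_)
      rw [(Finset.mem_filter.1 hi).2, one_smul]
    rw [bridge]
    exact (h.cls le_rfl u hu1 hu2 hu3 _).2
  refine ⟨(E.trans M).trans E.symm, ?_, ?_⟩
  · -- isometry
    intro x
    have hx : x = E.symm (E x) := (E.symm_apply_apply x).symm
    calc Q (((E.trans M).trans E.symm) x) = Q (E.symm (M (E x))) := rfl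
      _ = Q (E.symm (Amat.mulVec (E x))) := by rw [hMapp]
      _ = ((wt (E x) : ℕ) : ZMod 2) + (((wt (E x)).choose 2 : ℕ) : ZMod 2) := hQEA _
      _ = Q (E.symm (E x)) := (hQE _).symm
      _ = Q x := by rw [← hx]
  · -- disjointness
    rw [Set.eq_empty_iff_forall_notMem]
    rintro z ⟨⟨y, hyU, rfl⟩, hzU⟩
    set β := E y with hβ
    have hy' : E.symm β ∈ U := by
      rw [hβ, E.symm_apply_apply]
      exact hyU
    have h1 : goodwt (wt β) := (hmem β).1 hy'
    have h2 : goodwt (wt (Amat.mulVec β)) := by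
      apply (hmem (Amat.mulVec β)).1
      have e : ((E.trans M).trans E.symm) y = E.symm (Amat.mulVec β) := by
        show E.symm (M (E y)) = _
        rw [hMapp, hβ]
      rw [← e]
      exact hzU
    exact goodα_all β h1 h2

end RMV
end
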